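/- arXiv:math/0605387 — 7 statements merged into one kernel-verified Lean document; each statement's English description precedes it below -/
import Mathlib

section
/- Let (X,d) be a compact metric space, h : X → X a homeomorphism, and Λ ⊆ X an invariant subset. For ε > 0 let pW^s_ε(Λ) be the set of points z such that there exists an ε-pseudo-orbit (z_0,…,z_n) with z_0 = z and z_n ∈ Λ. Then h⁻¹(closure(pW^s_ε(Λ))) ⊆ interior(pW^s_ε(Λ)), i.e. pW^s_ε(Λ) is a trapping region for h⁻¹. -/
/-
Prepending a point to a pseudo-orbit shows that `pWsE h Λ ε` contains the preimage under `h`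
of its open `ε`-neighbourhood. Since this neighbourhood contains the closure and `h` is
continuous, `h⁻¹ (closure (pWsE h Λ ε))` lies in an open subset of `pWsE h Λ ε`.
-/

open Set

/-- `pWsE h Λ ε`: the set of starting points of `ε`-pseudo-orbits of `h` ending in `Λ`. -/
def pWsE {X : Type*} [MetricSpace X] (h : X → X) (Λ : Set X) (ε : ℝ) : Set X :=
  {z | ∃ n : ℕ, ∃ w : ℕ → X, w 0 = z ∧ w n ∈ Λ ∧ ∀ k < n, dist (h (w k)) (w (k + 1)) < ε}

section

variable {X : Type*} [MetricSpace X] {h : X → X} {Λ : Set X} {ε : ℝ}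

theorem mem_pWsE_of_dist_lt {x y : X} (hy : y ∈ pWsE h Λ ε) (hxy : dist (h x) y < ε) :
    x ∈ pWsE h Λ ε := by
  obtain ⟨n, w, rfl, hwn, hw⟩ := hy
  refine ⟨n + 1, fun | 0 => x | k + 1 => w k, rfl, hwn, ?_⟩
  rintro (_ | k) hk
  · exact hxy
  · exact hw k (Nat.lt_of_succ_lt_succ hk)

theorem preimage_thickening_pWsE_subset :
    h ⁻¹' Metric.thickening ε (pWsE h Λ ε) ⊆ pWsE h Λ ε := fun _ hx ↦ by
  obtain ⟨y, hy, hxy⟩ := Metric.mem_thickening_iff.mp hx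
  exact mem_pWsE_of_dist_lt hy hxy

end

theorem stmt2_general {X : Type*} [MetricSpace X] (h : X ≃ₜ X) (Λ : Set X)
    (ε : ℝ) (hε : 0 < ε) :
    ⇑h.symm '' closure (pWsE (⇑h) Λ ε) ⊆ interior (pWsE (⇑h) Λ ε) := by
  rw [h.image_symm]
  calc ⇑h ⁻¹' closure (pWsE (⇑h) Λ ε)
      ⊆ ⇑h ⁻¹' Metric.thickening ε (pWsE (⇑h) Λ ε) :=
        preimage_mono (Metric.closure_subset_thickening hε _)
    _ ⊆ interior (pWsE (⇑h) Λ ε) :=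
        interior_maximal preimage_thickening_pWsE_subset
          (Metric.isOpen_thickening.preimage h.continuous)

/-- For a homeomorphism `h` of a compact metric space and an invariant set `Λ`,
the set `pWsE h Λ ε` is a trapping region for `h⁻¹`:
`h⁻¹ (closure (pWsE h Λ ε)) ⊆ interior (pWsE h Λ ε)`. -/
theorem stmt2 {X : Type*} [MetricSpace X] [CompactSpace X] (h : X ≃ₜ X) (Λ : Set X)
    (hΛ : ⇑h '' Λ = Λ) (ε : ℝ) (hε : 0 < ε) :
    ⇑h.symm '' closure (pWsE (⇑h) Λ ε) ⊆ interior (pWsE (⇑h) Λ ε) :=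
  stmt2_general h Λ ε hε
end

section
/- Let K̂ be a compact metric space and f̂ : K̂ × [0,1] → K̂ × [0,∞) a continuous skew-product map, f̂(x,t) = (f̂₁(x), f̂₂(x,t)), with f̂(K̂ × {0}) = K̂ × {0}. Equip K̂ × [0,∞) with the distance d((x,s),(y,t)) = max(d_{K̂}(x,y), |t−s|). For ε > 0, the set pW^u_ε(K̂ × {0}) of endpoints of ε-pseudo-orbits of f̂ starting in K̂ × {0} is a strip: for each x ∈ K̂, its intersection with the fiber {x} × [0,∞) is an interval containing (x,0). -/
open Set NNReal

/-- An `ε`-pseudo-orbit `(z 0, …, z n)` of the partially defined map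
`f : K̂ × [0,1] → K̂ × [0,∞)`: all its points lie in `K̂ × [0,1]` and consecutive
jumps are smaller than `ε` (for the max metric on `K̂ × [0,∞)`). -/
def CMPseudoOrbit {K : Type*} [MetricSpace K] (f : K × ℝ≥0 → K × ℝ≥0) (ε : ℝ)
    (z : ℕ → K × ℝ≥0) (n : ℕ) : Prop :=
  (∀ k ≤ n, (z k).2 ≤ 1) ∧ ∀ k < n, dist (f (z k)) (z (k + 1)) < ε

/-- The set `pW^u_ε(K̂ × {0})` of endpoints of `ε`-pseudo-orbits of `f`
starting in the zero section `K̂ × {0}`. -/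
def cmPWu {K : Type*} [MetricSpace K] (f : K × ℝ≥0 → K × ℝ≥0) (ε : ℝ) :
    Set (K × ℝ≥0) :=
  {p | ∃ n z, CMPseudoOrbit f ε z n ∧ (z 0).2 = 0 ∧ z n = p}

lemma cm_key {K : Type*} [MetricSpace K]
    (f : K × ℝ≥0 → K × ℝ≥0) (f1 : K ≃ₜ K)
    (hcont : ContinuousOn f {p : K × ℝ≥0 | p.2 ≤ 1})
    (hskew : ∀ p : K × ℝ≥0, (f p).1 = f1 p.1)
    (hzero : ∀ x : K, f (x, 0) = (f1 x, 0))
    (ε : ℝ) (hε : 0 < ε) :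
    ∀ n : ℕ, ∀ z : ℕ → K × ℝ≥0, CMPseudoOrbit f ε z n → (z 0).2 = 0 →
      ∀ s : ℝ≥0, s ≤ (z n).2 →
        ∃ z' : ℕ → K × ℝ≥0, CMPseudoOrbit f ε z' n ∧ (z' 0).2 = 0 ∧
          z' n = ((z n).1, s) := by
  intro n
  induction n with
  | zero =>
    intro z hz h0 s hs
    refine ⟨z, hz, h0, ?_⟩
    have hs0 : s = 0 := le_antisymm (h0 ▸ hs) zero_le
    have : s = (z 0).2 := by rw [hs0, h0]
    rw [this]
  | succ n ih =>
    intro z hz h0 s hs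
    set w := z n with hw
    set x := (z (n + 1)).1 with hx
    set t := (z (n + 1)).2 with ht
    have hw2 : w.2 ≤ 1 := hz.1 n (by omega)
    have ht1 : t ≤ 1 := hz.1 (n + 1) le_rfl
    have hjump : dist (f w) (z (n + 1)) < ε := hz.2 n (by omega)
    have hzn : CMPseudoOrbit f ε z n :=
      ⟨fun k hk => hz.1 k (by omega), fun k hk => hz.2 k (by omega)⟩
    have hd1 : dist (f w).1 x ≤ dist (f w) (z (n + 1)) := by
      rw [Prod.dist_eq]; exact le_max_left _ _
    have hd2 : dist (f w).2 t ≤ dist (f w) (z (n + 1)) := by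
      rw [Prod.dist_eq]; exact le_max_right _ _
    by_cases hcase : s ≤ (f w).2
    · -- use IVT to lower the height of the n-th point
      have hg : ContinuousOn (fun u : ℝ≥0 => (f (w.1, u)).2) (Icc 0 w.2) := by
        apply continuous_snd.comp_continuousOn
        apply hcont.comp ((Continuous.prodMk_right w.1).continuousOn)
        intro u hu
        exact le_trans hu.2 hw2
      have h0g : (fun u : ℝ≥0 => (f (w.1, u)).2) 0 = 0 := by
        simp [hzero w.1]
      have hwg : (fun u : ℝ≥0 => (f (w.1, u)).2) w.2 = (f w).2 := by
        simp
      have hmem : s ∈ Icc ((fun u : ℝ≥0 => (f (w.1, u)).2) 0)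
          ((fun u : ℝ≥0 => (f (w.1, u)).2) w.2) := by
        rw [h0g, hwg]; exact ⟨zero_le, hcase⟩
      obtain ⟨u, hu, hus⟩ := intermediate_value_Icc (zero_le : (0:ℝ≥0) ≤ w.2) hg hmem
      obtain ⟨z'', hz'', h0'', hend''⟩ := ih z hzn h0 u hu.2
      refine ⟨fun k => if k ≤ n then z'' k else (x, s), ⟨?_, ?_⟩, ?_, ?_⟩
      · intro k hk
        by_cases h : k ≤ n
        · simpa [h] using hz''.1 k h
        · simpa [h] using hs.trans ht1
      · intro k hk
        by_cases h : k < n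
        · have h1 : k ≤ n := by omega
          have h2 : k + 1 ≤ n := by omega
          simpa [h1, h2] using hz''.2 k h
        · have hkn : k = n := by omega
          have h2 : ¬ (k + 1 ≤ n) := by omega
          have h1 : k ≤ n := by omega
          simp only [h1, if_pos, h2, if_neg]
          rw [hkn, hend'']
          have hfeq : f (w.1, u) = (f1 w.1, s) := by
            have := hskew (w.1, u)
            exact Prod.ext (by simpa using this) (by simpa using hus)
          rw [hfeq, Prod.dist_eq]
          have hlt : dist (f1 w.1) x < ε := by
            have he := hskew w
            calc dist (f1 w.1) x = dist (f w).1 x := by rw [he]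
              _ ≤ dist (f w) (z (n + 1)) := hd1
              _ < ε := hjump
          exact max_lt hlt (by simpa using hε)
      · have h : (0 : ℕ) ≤ n := by omega
        simpa [h] using h0''
      · have h : ¬ (n + 1 ≤ n) := by omega
        simp [h]
    · -- just replace the endpoint
      push_neg at hcase
      have hst : (f w).2 ≤ t := le_of_lt (lt_of_lt_of_le hcase hs)
      refine ⟨fun k => if k = n + 1 then (x, s) else z k, ⟨?_, ?_⟩, ?_, ?_⟩
      · intro k hk
        by_cases h : k = n + 1
        · simpa [h] using hs.trans ht1
        · simpa [h] using hz.1 k hk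
      · intro k hk
        by_cases h : k = n
        · subst h
          have h1 : ¬ (k = k + 1) := by omega
          simp only [h1, if_neg, if_pos]
          rw [Prod.dist_eq]
          apply max_lt
          · exact lt_of_le_of_lt hd1 hjump
          · have hds : dist (f w).2 s ≤ dist (f w).2 t := by
              rw [NNReal.dist_eq, NNReal.dist_eq]
              have h1 : ((f w).2 : ℝ) ≤ s := by exact_mod_cast hcase.le
              have h2 : (s : ℝ) ≤ t := by exact_mod_cast hs
              rw [abs_sub_comm, abs_of_nonneg (by linarith),
                abs_sub_comm, abs_of_nonneg (by linarith)]
              linarith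
            exact lt_of_le_of_lt hds (lt_of_le_of_lt hd2 hjump)
        · have h1 : ¬ (k = n + 1) := by omega
          have h2 : ¬ (k + 1 = n + 1) := by omega
          simpa [h1, h2, h] using hz.2 k hk
      · have h : ¬ ((0 : ℕ) = n + 1) := by omega
        simpa [h] using h0
      · simp

/-- For a central model `(K̂, f̂)` (a continuous skew product over a homeomorphism
`f1` of the compact base `K̂`, preserving the zero section), the set
`pW^u_ε(K̂ × {0})` is a strip: its intersection with each fiber `{x} × [0,∞)` is
an interval containing `(x, 0)`. -/
theorem stmt3 {K : Type*} [MetricSpace K] [CompactSpace K]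
    (f : K × ℝ≥0 → K × ℝ≥0) (f1 : K ≃ₜ K)
    (hcont : ContinuousOn f {p : K × ℝ≥0 | p.2 ≤ 1})
    (hskew : ∀ p : K × ℝ≥0, (f p).1 = f1 p.1)
    (hzero : ∀ x : K, f (x, 0) = (f1 x, 0))
    (ε : ℝ) (hε : 0 < ε) :
    ∀ x : K, ((x, 0) : K × ℝ≥0) ∈ cmPWu f ε ∧
      ∀ t s : ℝ≥0, ((x, t) : K × ℝ≥0) ∈ cmPWu f ε → s ≤ t →
        ((x, s) : K × ℝ≥0) ∈ cmPWu f ε := by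
  intro x
  constructor
  · exact ⟨0, fun _ => (x, 0), ⟨fun k _ => zero_le_one, fun k hk => by omega⟩, rfl, rfl⟩
  · intro t s hmem hst
    obtain ⟨n, z, hz, h0, hend⟩ := hmem
    have h1 : (z n).1 = x := by rw [hend]
    have h2 : (z n).2 = t := by rw [hend]
    obtain ⟨z', hz', h0', hend'⟩ :=
      cm_key f f1 hcont hskew hzero ε hε n z hz h0 s (h2 ▸ hst)
    exact ⟨n, z', hz', h0', by rw [hend', h1]⟩
end

section
/- Let K̂ be a compact metric space with a chain-transitive homeomorphism f̂₁ and let (K̂, f̂) be a central model over f̂₁. Assume (K̂, f̂) has no chain-recurrent central segment. Then the chain-unstable set pW^u(K̂ × {0}) = ⋂_{ε>0} pW^u_ε(K̂ × {0}) satisfies exactly one of: (i) pW^u(K̂ × {0}) = K̂ × {0}; (ii) there exists δ > 0 with K̂ × [0,δ] ⊆ pW^u(K̂ × {0}). -/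
open Set NNReal

/-- `x ⊣ y`: for every `ε > 0` there exists an `ε`-pseudo-orbit from `x` to `y`
of length `≥ 1`. -/
def ChainRel {X : Type*} [MetricSpace X] (h : X → X) (x y : X) : Prop :=
  ∀ ε : ℝ, 0 < ε → ∃ n : ℕ, 1 ≤ n ∧ ∃ z : ℕ → X, z 0 = x ∧ z n = y ∧
    ∀ k < n, dist (h (z k)) (z (k + 1)) < ε

/-- The chain-unstable set `pW^u(K̂ × {0}) = ⋂_{ε>0} pW^u_ε(K̂ × {0})`. -/
def cmPWuInf {K : Type*} [MetricSpace K] (f : K × ℝ≥0 → K × ℝ≥0) :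
    Set (K × ℝ≥0) :=
  {p | ∀ ε : ℝ, 0 < ε → p ∈ cmPWu f ε}

/-- `Λ ⊆ K̂ × [0,1]` is a compact invariant set on which `f` is chain-transitive
(pseudo-orbits taken inside `Λ`). -/
def CMChainTransOn {K : Type*} [MetricSpace K] (f : K × ℝ≥0 → K × ℝ≥0)
    (Λ : Set (K × ℝ≥0)) : Prop :=
  ∀ p ∈ Λ, ∀ q ∈ Λ, ∀ ε : ℝ, 0 < ε → ∃ n : ℕ, 1 ≤ n ∧ ∃ z : ℕ → K × ℝ≥0,
    z 0 = p ∧ z n = q ∧ (∀ k ≤ n, z k ∈ Λ) ∧ ∀ k < n, dist (f (z k)) (z (k + 1)) < ε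

/-- The central model has a chain-recurrent central segment: a nontrivial fiber
segment `{x} × [0,a]`, `a > 0`, contained in a chain-transitive compact
invariant subset of `K̂ × [0,1]`. -/
def HasCRCS {K : Type*} [MetricSpace K] (f : K × ℝ≥0 → K × ℝ≥0) : Prop :=
  ∃ (x : K) (a : ℝ≥0) (Λ : Set (K × ℝ≥0)), 0 < a ∧ IsCompact Λ ∧
    Λ ⊆ {p : K × ℝ≥0 | p.2 ≤ 1} ∧ f '' Λ = Λ ∧ CMChainTransOn f Λ ∧
    ({x} ×ˢ Icc 0 a : Set (K × ℝ≥0)) ⊆ Λ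

/-! ### Auxiliary development -/

namespace Stmt4Aux

variable {K : Type*} [MetricSpace K]

/-- Chains of length at least one. -/
def Rel1 (f : K × ℝ≥0 → K × ℝ≥0) (ε : ℝ) (p q : K × ℝ≥0) : Prop :=
  ∃ n z, 1 ≤ n ∧ CMPseudoOrbit f ε z n ∧ z 0 = p ∧ z n = q

/-- Chains from `p` ending on the zero section. -/
def ToZ (f : K × ℝ≥0 → K × ℝ≥0) (ε : ℝ) (p : K × ℝ≥0) : Prop :=
  ∃ n z, CMPseudoOrbit f ε z n ∧ z 0 = p ∧ (z n).2 = 0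

variable {f : K × ℝ≥0 → K × ℝ≥0} {f1 : K ≃ₜ K} {ε ε' δ γ : ℝ} {p q r : K × ℝ≥0}

lemma cmps_mono {z : ℕ → K × ℝ≥0} {n m : ℕ} (h : CMPseudoOrbit f ε z n) (hm : m ≤ n) :
    CMPseudoOrbit f ε z m :=
  ⟨fun k hk => h.1 k (hk.trans hm), fun k hk => h.2 k (lt_of_lt_of_le hk hm)⟩

lemma cmps_le {z : ℕ → K × ℝ≥0} {n : ℕ} (h : CMPseudoOrbit f ε z n) (he : ε ≤ ε') :
    CMPseudoOrbit f ε' z n :=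
  ⟨h.1, fun k hk => lt_of_lt_of_le (h.2 k hk) he⟩

lemma cmps_shift {z : ℕ → K × ℝ≥0} {n k : ℕ} (h : CMPseudoOrbit f ε z n) (hk : k ≤ n) :
    CMPseudoOrbit f ε (fun i => z (k + i)) (n - k) := by
  constructor
  · intro i hi; exact h.1 (k + i) (by omega)
  · intro i hi
    show dist (f (z (k + i))) (z (k + (i + 1))) < ε
    have e : k + (i + 1) = (k + i) + 1 := by ring
    rw [e]
    exact h.2 (k + i) (by omega)

lemma cmps_concat {z w : ℕ → K × ℝ≥0} {n m : ℕ}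
    (hz : CMPseudoOrbit f ε z n) (hw : CMPseudoOrbit f ε w m) (hzw : z n = w 0) :
    ∃ Z, CMPseudoOrbit f ε Z (n + m) ∧ Z 0 = z 0 ∧ Z (n + m) = w m := by
  refine ⟨fun k => if k < n then z k else w (k - n), ⟨?_, ?_⟩, ?_, ?_⟩
  · intro k hk
    by_cases h : k < n
    · simpa [h] using hz.1 k h.le
    · simpa [h] using hw.1 (k - n) (by omega)
  · intro k hk
    by_cases h : k < n
    · by_cases h' : k + 1 < n
      · simpa [h, h'] using hz.2 k h
      · have hk1 : k + 1 = n := by omega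
        have : w (k + 1 - n) = z (k + 1) := by rw [hk1]; simp [hzw.symm]
        simp only [h, if_pos, if_neg h', this]
        exact hz.2 k h
    · have h' : ¬ k + 1 < n := by omega
      have e1 : k + 1 - n = (k - n) + 1 := by omega
      simp only [h, h', if_neg, e1]
      exact hw.2 (k - n) (by omega)
  · by_cases h : 0 < n
    · simp [h]
    · have : n = 0 := by omega
      simp [this, ← hzw]
  · have h : ¬ n + m < n := by omega
    simp [h]

lemma rel1_single (h1 : dist (f p) q < ε) (hp : p.2 ≤ 1) (hq : q.2 ≤ 1) :
    Rel1 f ε p q := by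
  refine ⟨1, fun k => if k = 0 then p else q, le_refl 1, ⟨?_, ?_⟩, by simp, by simp⟩
  · intro k hk
    by_cases h : k = 0 <;> simp [h, hp, hq]
  · intro k hk
    have : k = 0 := by omega
    simpa [this] using h1

lemma rel1_trans (h1 : Rel1 f ε p q) (h2 : Rel1 f ε q r) : Rel1 f ε p r := by
  obtain ⟨n, z, hn, hz, hz0, hzn⟩ := h1
  obtain ⟨m, w, hm, hw, hw0, hwm⟩ := h2
  obtain ⟨Z, hZ, hZ0, hZnm⟩ := cmps_concat hz hw (by rw [hzn, hw0])
  exact ⟨n + m, Z, by omega, hZ, by rw [hZ0, hz0], by rw [hZnm, hwm]⟩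

lemma rel1_le (he : ε ≤ ε') (h : Rel1 f ε p q) : Rel1 f ε' p q := by
  obtain ⟨n, z, hn, hz, h0, h1⟩ := h
  exact ⟨n, z, hn, cmps_le hz he, h0, h1⟩

lemma rel1_to_cm (hw : p.2 = 0) (h : Rel1 f ε p q) : q ∈ cmPWu f ε := by
  obtain ⟨n, z, _, hz, h0, h1⟩ := h
  exact ⟨n, z, hz, by rw [h0, hw], h1⟩

lemma cm_of_rel1 (hp : p ∈ cmPWu f ε) (h : Rel1 f ε p q) : q ∈ cmPWu f ε := by
  obtain ⟨n, z, hz, hz0, hzn⟩ := hp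
  obtain ⟨m, w, _, hw, hw0, hwm⟩ := h
  obtain ⟨Z, hZ, hZ0, hZnm⟩ := cmps_concat hz hw (by rw [hzn, hw0])
  exact ⟨n + m, Z, hZ, by rw [hZ0, hz0], by rw [hZnm, hwm]⟩

lemma toZ_of_rel1 (h : Rel1 f ε p q) (hq : ToZ f ε q) : ToZ f ε p := by
  obtain ⟨n, z, _, hz, hz0, hzn⟩ := h
  obtain ⟨m, w, hw, hw0, hwm⟩ := hq
  obtain ⟨Z, hZ, hZ0, hZnm⟩ := cmps_concat hz hw (by rw [hzn, hw0])
  exact ⟨n + m, Z, hZ, by rw [hZ0, hz0], by rw [hZnm]; exact hwm⟩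

lemma rel1_to_toZ (h : Rel1 f ε p q) (hq : q.2 = 0) : ToZ f ε p := by
  obtain ⟨n, z, _, hz, hz0, hzn⟩ := h
  exact ⟨n, z, hz, hz0, by rw [hzn]; exact hq⟩

lemma mem_cm_snd_le_one (h : p ∈ cmPWu f ε) : p.2 ≤ 1 := by
  obtain ⟨n, z, hz, _, hzn⟩ := h
  rw [← hzn]; exact hz.1 n le_rfl

lemma cm_le (he : ε ≤ ε') (h : p ∈ cmPWu f ε) : p ∈ cmPWu f ε' := by
  obtain ⟨n, z, hz, h0, h1⟩ := h
  exact ⟨n, z, cmps_le hz he, h0, h1⟩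

lemma toZ_le (he : ε ≤ ε') (h : ToZ f ε p) : ToZ f ε' p := by
  obtain ⟨n, z, hz, h0, h1⟩ := h
  exact ⟨n, z, cmps_le hz he, h0, h1⟩

lemma zero_mem_cm (hε : 0 < ε) (x : K) : ((x, 0) : K × ℝ≥0) ∈ cmPWu f ε :=
  ⟨0, fun _ => (x, 0), ⟨fun k _ => zero_le, fun k hk => absurd hk (Nat.not_lt_zero k)⟩,
    rfl, rfl⟩

lemma toZ_self (hp : p.2 = 0) (hp1 : p.2 ≤ 1) : ToZ f ε p :=
  ⟨0, fun _ => p, ⟨fun k _ => hp1, fun k hk => absurd hk (Nat.not_lt_zero k)⟩, rfl, hp⟩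

/-- Appending one `ε`-step to a pseudo-orbit from the zero section. -/
lemma cm_step (hp : p ∈ cmPWu f ε) (hd : dist (f p) r < ε) (hr : r.2 ≤ 1) :
    r ∈ cmPWu f ε :=
  cm_of_rel1 hp (rel1_single hd (mem_cm_snd_le_one hp) hr)

/-! ### distance utilities -/

lemma prod_dist_lt {a b : K × ℝ≥0} (h1 : dist a.1 b.1 < ε) (h2 : dist a.2 b.2 < ε) :
    dist a b < ε := by
  rw [Prod.dist_eq]; exact max_lt h1 h2

lemma dist_fst_le' (a b : K × ℝ≥0) : dist a.1 b.1 ≤ dist a b := by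
  rw [Prod.dist_eq]; exact le_max_left _ _

lemma dist_snd_le' (a b : K × ℝ≥0) : dist a.2 b.2 ≤ dist a b := by
  rw [Prod.dist_eq]; exact le_max_right _ _

lemma nnreal_dist_zero (a : ℝ≥0) : dist a (0 : ℝ≥0) = (a : ℝ) := by
  rw [NNReal.dist_eq]; simp

lemma dist_pair_same_fst (x : K) (a b : ℝ≥0) :
    dist ((x, a) : K × ℝ≥0) (x, b) = dist a b := by
  rw [Prod.dist_eq]; simp [dist_nonneg]

lemma dist_pair_same_snd (x y : K) (a : ℝ≥0) :
    dist ((x, a) : K × ℝ≥0) (y, a) = dist x y := by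
  rw [Prod.dist_eq]; simp [dist_nonneg]

/-! ### normalization -/

section Normal

variable (hzero : ∀ x : K, f (x, 0) = (f1 x, 0))

include hzero

lemma cm_norm (hε : 0 < ε) (h : p ∈ cmPWu f ε) :
    ∃ w : K × ℝ≥0, w.2 = 0 ∧ Rel1 f ε w p := by
  obtain ⟨n, z, hz, hz0, hzn⟩ := h
  rcases Nat.eq_zero_or_pos n with hn | hn
  · subst hn
    have hp0 : p.2 = 0 := by rw [← hzn]; exact hz0
    have hp : p = (p.1, 0) := by rw [← hp0]
    refine ⟨(f1.symm p.1, 0), rfl, rel1_single ?_ (zero_le) (mem_cm_snd_le_one ⟨0, z, hz, hz0, hzn⟩)⟩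
    rw [hzero (f1.symm p.1)]
    simp only [Homeomorph.apply_symm_apply]
    rw [← hp] at *
    rw [hp, dist_self]
    exact hε
  · exact ⟨z 0, hz0, ⟨n, z, hn, hz, rfl, hzn⟩⟩

lemma toZ_norm (hε : 0 < ε) (h : ToZ f ε p) :
    ∃ w : K × ℝ≥0, w.2 = 0 ∧ Rel1 f ε p w := by
  obtain ⟨n, z, hz, hz0, hzn⟩ := h
  rcases Nat.eq_zero_or_pos n with hn | hn
  · subst hn
    have hp0 : p.2 = 0 := by rw [← hz0]; exact hzn
    have hp : p = (p.1, 0) := by rw [← hp0]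
    have hp1 : p.2 ≤ 1 := by rw [← hz0]; exact hz.1 0 le_rfl
    refine ⟨(f1 p.1, 0), rfl, rel1_single ?_ hp1 (zero_le)⟩
    rw [hp, hzero p.1, dist_self]
    exact hε
  · exact ⟨z n, hzn, ⟨n, z, hn, hz, hz0, rfl⟩⟩

end Normal

/-! ### perturbations -/

lemma rel1_endpoint_perturb (h : Rel1 f ε p q) (hd : dist q r ≤ δ) (hr : r.2 ≤ 1) :
    Rel1 f (ε + δ) p r := by
  obtain ⟨n, z, hn, hz, hz0, hzn⟩ := h
  have hδ : 0 ≤ δ := le_trans dist_nonneg hd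
  refine ⟨n, fun k => if k = n then r else z k, hn, ⟨?_, ?_⟩, ?_, by simp⟩
  · intro k hk
    by_cases h : k = n
    · simpa [h] using hr
    · simpa [h] using hz.1 k hk
  · intro k hk
    have hkn : ¬ (k = n) := by omega
    by_cases h : k + 1 = n
    · simp only [hkn, if_neg, h, if_pos]
      have hj := hz.2 k hk
      have hq : z (k + 1) = q := by rw [← hzn, h]
      rw [hq] at hj
      calc dist (f (z k)) r ≤ dist (f (z k)) q + dist q r := dist_triangle _ _ _
        _ < ε + δ := add_lt_add_of_lt_of_le hj hd
    · simp only [hkn, if_neg, h, if_neg]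
      exact lt_of_lt_of_le (hz.2 k hk) (by linarith)
  · have h0 : ¬ (0 = n) := by omega
    simpa [h0] using hz0

lemma rel1_start_perturb (h : Rel1 f ε p q) (hd : dist (f r) (f p) ≤ γ) (hr : r.2 ≤ 1) :
    Rel1 f (ε + γ) r q := by
  obtain ⟨n, z, hn, hz, hz0, hzn⟩ := h
  have hγ : 0 ≤ γ := le_trans dist_nonneg hd
  refine ⟨n, fun k => if k = 0 then r else z k, hn, ⟨?_, ?_⟩, by simp, ?_⟩
  · intro k hk
    by_cases h : k = 0
    · simpa [h] using hr
    · simpa [h] using hz.1 k hk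
  · intro k hk
    by_cases h : k = 0
    · subst h
      have h1 : ¬ (0 + 1 = 0) := by omega
      simp only [if_pos, h1, if_neg]
      calc dist (f r) (z (0 + 1)) ≤ dist (f r) (f p) + dist (f p) (z (0 + 1)) :=
            dist_triangle _ _ _
        _ < γ + ε := by
            have := hz.2 0 hk
            rw [hz0] at this
            exact add_lt_add_of_le_of_lt hd this
        _ = ε + γ := by ring
    · have h1 : ¬ (k + 1 = 0) := by omega
      simp only [h, if_neg, h1]
      exact lt_of_lt_of_le (hz.2 k hk) (by linarith)
  · have hn0 : ¬ (n = 0) := by omega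
    simpa [hn0] using hzn

/-! ### compactness and uniform continuity -/

def DD (K : Type*) [MetricSpace K] : Set (K × ℝ≥0) := {p | p.2 ≤ 1}

lemma isCompact_DD [CompactSpace K] : IsCompact (DD K) := by
  have h : DD K = (univ : Set K) ×ˢ Icc (0 : ℝ≥0) 1 := by
    ext p
    simp only [DD, mem_setOf_eq, Set.mem_prod, mem_univ, true_and, mem_Icc]
    exact ⟨fun h => ⟨zero_le, h⟩, fun h => h.2⟩
  rw [h]
  exact isCompact_univ.prod isCompact_Icc

section Unif

variable [CompactSpace K] (hcont : ContinuousOn f {p : K × ℝ≥0 | p.2 ≤ 1})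

include hcont

lemma unif_cont (hε : 0 < ε) :
    ∃ κ : ℝ, 0 < κ ∧ ∀ a b : K × ℝ≥0, a.2 ≤ 1 → b.2 ≤ 1 → dist a b < κ →
      dist (f a) (f b) < ε := by
  have h : UniformContinuousOn f (DD K) :=
    isCompact_DD.uniformContinuousOn_of_continuous hcont
  obtain ⟨κ, hκ, h⟩ := Metric.uniformContinuousOn_iff.mp h ε hε
  exact ⟨κ, hκ, fun a b ha hb hd => h a ha b hb hd⟩

lemma absorb_bound (hzero : ∀ x : K, f (x, 0) = (f1 x, 0)) (hε : 0 < ε) :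
    ∃ η : ℝ≥0, 0 < η ∧ ∀ p : K × ℝ≥0, p.2 ≤ 1 → p.2 < η → ((f p).2 : ℝ) < ε := by
  obtain ⟨κ, hκ, h⟩ := unif_cont hcont hε
  refine ⟨Real.toNNReal κ, Real.toNNReal_pos.mpr hκ, fun p hp1 hp => ?_⟩
  have hd : dist p (p.1, 0) < κ := by
    have : dist p (p.1, (0 : ℝ≥0)) = (p.2 : ℝ) := by
      have : p = (p.1, p.2) := rfl
      rw [this, dist_pair_same_fst, nnreal_dist_zero]
    rw [this]
    calc (p.2 : ℝ) < (Real.toNNReal κ : ℝ) := by exact_mod_cast hp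
      _ ≤ κ := by
          rw [Real.coe_toNNReal κ hκ.le]
  have := h p (p.1, 0) hp1 (zero_le) hd
  calc ((f p).2 : ℝ) = dist (f p).2 (f (p.1, 0)).2 := by
        rw [hzero p.1]
        exact (nnreal_dist_zero _).symm
    _ ≤ dist (f p) (f (p.1, 0)) := dist_snd_le' _ _
    _ < ε := this

end Unif

lemma absorb_toZ (h2 : ((f p).2 : ℝ) < ε) (hp1 : p.2 ≤ 1) : ToZ f ε p := by
  have h : Rel1 f ε p ((f p).1, 0) := by
    refine rel1_single ?_ hp1 (zero_le)
    have : f p = ((f p).1, (f p).2) := rfl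
    rw [this, dist_pair_same_fst, nnreal_dist_zero]
    exact h2
  exact rel1_to_toZ h rfl

lemma zero_transit (hbase : ∀ x y : K, ChainRel (⇑f1) x y)
    (hzero : ∀ x : K, f (x, 0) = (f1 x, 0)) (hε : 0 < ε) (x y : K) :
    Rel1 f ε ((x, 0) : K × ℝ≥0) ((y, 0) : K × ℝ≥0) := by
  obtain ⟨n, hn, z, hz0, hzn, hjump⟩ := hbase x y ε hε
  refine ⟨n, fun k => (z k, 0), hn, ⟨fun k _ => zero_le, ?_⟩, by simp only []; rw [hz0], by simp only []; rw [hzn]⟩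
  intro k hk
  rw [hzero (z k)]
  rw [dist_pair_same_snd]
  exact hjump k hk

/-! ### IVT and downward closure -/

section IVT

variable (hcont : ContinuousOn f {p : K × ℝ≥0 | p.2 ≤ 1})
  (hskew : ∀ p : K × ℝ≥0, (f p).1 = f1 p.1)
  (hzero : ∀ x : K, f (x, 0) = (f1 x, 0))

include hcont hzero in
lemma ivt_exists {x : K} {t s : ℝ≥0} (ht : t ≤ 1) (hs : s ≤ (f (x, t)).2) :
    ∃ v : ℝ≥0, v ≤ t ∧ (f (x, v)).2 = s := by
  have hφ : ContinuousOn (fun v : ℝ≥0 => (f (x, v)).2) (Icc 0 t) := by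
    apply continuous_snd.comp_continuousOn
    apply hcont.comp (Continuous.continuousOn (by continuity))
    intro v hv
    simp only [mem_setOf_eq]
    exact le_trans (mem_Icc.mp hv).2 ht
  have h0 : (f (x, (0 : ℝ≥0))).2 = 0 := by rw [hzero x]
  have hmem : s ∈ Icc ((fun v : ℝ≥0 => (f (x, v)).2) 0) ((fun v : ℝ≥0 => (f (x, v)).2) t) := by
    simp only [h0, mem_Icc]
    exact ⟨zero_le, hs⟩
  obtain ⟨v, hv, hfv⟩ := intermediate_value_Icc (zero_le : (0:ℝ≥0) ≤ t) hφ hmem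
  exact ⟨v, (mem_Icc.mp hv).2, hfv⟩

include hcont hskew hzero in
lemma reach_down_aux (hε : 0 < ε) :
    ∀ n (z : ℕ → K × ℝ≥0), CMPseudoOrbit f ε z n → (z 0).2 = 0 →
      ∀ s, s ≤ (z n).2 → (((z n).1, s) : K × ℝ≥0) ∈ cmPWu f ε := by
  intro n
  induction n with
  | zero =>
    intro z hz hz0 s hs
    rw [hz0] at hs
    have : s = 0 := le_antisymm hs (zero_le)
    rw [this]
    exact zero_mem_cm hε _
  | succ m ih =>
    intro z hz hz0 s hs
    have hzm : CMPseudoOrbit f ε z m := cmps_mono hz (Nat.le_succ m)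
    have hqmem : z m ∈ cmPWu f ε := ⟨m, z, hzm, hz0, rfl⟩
    have hq1 : (z m).2 ≤ 1 := hz.1 m (Nat.le_succ m)
    have hd := hz.2 m (Nat.lt_succ_self m)
    have hdb : dist (f (z m)).1 (z (m + 1)).1 < ε := lt_of_le_of_lt (dist_fst_le' _ _) hd
    have hdh : dist (f (z m)).2 (z (m + 1)).2 < ε := lt_of_le_of_lt (dist_snd_le' _ _) hd
    have hs1 : s ≤ 1 := le_trans hs (hz.1 (m + 1) le_rfl)
    by_cases hc : (f (z m)).2 ≤ s
    · refine cm_step hqmem (prod_dist_lt hdb ?_) hs1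
      -- dist (f (z m)).2 s < ε
      rw [NNReal.dist_eq] at hdh ⊢
      have h1 : ((f (z m)).2 : ℝ) ≤ (s : ℝ) := by exact_mod_cast hc
      have h2 : (s : ℝ) ≤ ((z (m + 1)).2 : ℝ) := by exact_mod_cast hs
      rw [abs_sub_comm]
      rw [abs_of_nonneg (by linarith)]
      have h3 := neg_lt_of_abs_lt hdh
      linarith
    · push_neg at hc
      have hfq : f (z m) = f ((z m).1, (z m).2) := rfl
      have hsle : s ≤ (f ((z m).1, (z m).2)).2 := by rw [← hfq]; exact hc.le
      obtain ⟨v, hv, hfv⟩ := ivt_exists hcont hzero hq1 hsle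
      have hvmem : (((z m).1, v) : K × ℝ≥0) ∈ cmPWu f ε := ih z hzm hz0 v hv
      refine cm_step hvmem (prod_dist_lt ?_ ?_) hs1
      · have e1 : (f ((z m).1, v)).1 = f1 (z m).1 := hskew _
        have e2 : (f (z m)).1 = f1 (z m).1 := hskew _
        rw [e1, ← e2]
        exact hdb
      · rw [hfv, dist_self]
        exact hε

include hcont hskew hzero in
lemma reach_down (hε : 0 < ε) {x : K} {t s : ℝ≥0}
    (h : ((x, t) : K × ℝ≥0) ∈ cmPWu f ε) (hs : s ≤ t) :
    ((x, s) : K × ℝ≥0) ∈ cmPWu f ε := by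
  obtain ⟨n, z, hz, hz0, hzn⟩ := h
  have := reach_down_aux hcont hskew hzero hε n z hz hz0 s (by rw [hzn]; exact hs)
  rwa [hzn] at this

include hcont hskew hzero in
lemma reach_push (hε : 0 < ε) {x y : K} {t u : ℝ≥0}
    (h : ((x, t) : K × ℝ≥0) ∈ cmPWu f ε) (ht : t ≤ 1)
    (hy : dist (f1 x) y < ε) (hu1 : u ≤ 1) (hu : u ≤ (f (x, t)).2) :
    ((y, u) : K × ℝ≥0) ∈ cmPWu f ε := by
  obtain ⟨v, hv, hfv⟩ := ivt_exists hcont hzero ht hu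
  have hvm := reach_down hcont hskew hzero hε h hv
  refine cm_step hvm (prod_dist_lt ?_ ?_) hu1
  · rw [hskew ((x, v) : K × ℝ≥0)]
    exact hy
  · rw [hfv, dist_self]
    exact hε

end IVT

/-! ### the chain class of the zero section -/

/-- Points chained from and to the zero section at every scale. -/
def CC (f : K × ℝ≥0 → K × ℝ≥0) : Set (K × ℝ≥0) :=
  {p | p.2 ≤ 1 ∧ ∀ ε : ℝ, 0 < ε → p ∈ cmPWu f ε ∧ ToZ f ε p}

lemma CC_subset_DD : CC f ⊆ {p : K × ℝ≥0 | p.2 ≤ 1} := fun _ hp => hp.1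

lemma zero_mem_CC (x : K) : ((x, 0) : K × ℝ≥0) ∈ CC f :=
  ⟨zero_le, fun ε hε => ⟨zero_mem_cm hε x, toZ_self rfl (zero_le)⟩⟩

section CCProps

variable [CompactSpace K]
variable (hcont : ContinuousOn f {p : K × ℝ≥0 | p.2 ≤ 1})
  (hskew : ∀ p : K × ℝ≥0, (f p).1 = f1 p.1)
  (hzero : ∀ x : K, f (x, 0) = (f1 x, 0))
  (hbase : ∀ x y : K, ChainRel (⇑f1) x y)

lemma isClosed_DD : IsClosed (DD K) :=
  IsClosed.preimage continuous_snd isClosed_Iic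

include hcont hzero in
lemma lim_mem_CC {w : ℕ → K × ℝ≥0} {e : ℕ → ℝ} (he : ∀ n, 0 < e n)
    (helim : Filter.Tendsto e Filter.atTop (nhds 0))
    (h1 : ∀ n, (w n).2 ≤ 1) (h2 : ∀ n, w n ∈ cmPWu f (e n))
    (h3 : ∀ n, ToZ f (e n) (w n)) {p : K × ℝ≥0}
    (hlim : Filter.Tendsto w Filter.atTop (nhds p)) : p ∈ CC (f := f) := by
  have hp1 : p.2 ≤ 1 := by
    have : p ∈ DD K :=
      isClosed_DD.mem_of_tendsto hlim (Filter.Eventually.of_forall (fun n => h1 n))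
    exact this
  refine ⟨hp1, fun ε hε => ⟨?_, ?_⟩⟩
  · -- reach
    obtain ⟨N1, hN1⟩ := Metric.tendsto_atTop.mp hlim (ε / 2) (by linarith)
    have hev := (helim.eventually_lt_const (show (0:ℝ) < ε / 2 by linarith)).exists_forall_of_atTop
    obtain ⟨N2, hN2⟩ := hev
    set n := max N1 N2 with hn
    obtain ⟨w0, hw0, hrel⟩ := cm_norm (f1 := f1) hzero (he n) (h2 n)
    have hrel2 : Rel1 f (e n + ε / 2) w0 p :=
      rel1_endpoint_perturb hrel (le_of_lt (hN1 n (le_max_left _ _))) hp1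
    exact rel1_to_cm hw0 (rel1_le (by have := hN2 n (le_max_right _ _); linarith) hrel2)
  · -- to Z
    obtain ⟨κ, hκ, hκ2⟩ := unif_cont hcont (show (0:ℝ) < ε / 2 by linarith)
    obtain ⟨N1, hN1⟩ := Metric.tendsto_atTop.mp hlim κ hκ
    obtain ⟨N2, hN2⟩ :=
      (helim.eventually_lt_const (show (0:ℝ) < ε / 2 by linarith)).exists_forall_of_atTop
    set n := max N1 N2 with hn
    obtain ⟨wz, hwz, hrel⟩ := toZ_norm (f1 := f1) hzero (he n) (h3 n)
    have hfd : dist (f p) (f (w n)) ≤ ε / 2 := by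
      refine le_of_lt (hκ2 p (w n) hp1 (h1 n) ?_)
      rw [dist_comm]
      exact hN1 n (le_max_left _ _)
    have hrel2 : Rel1 f (e n + ε / 2) p wz := rel1_start_perturb hrel hfd hp1
    exact rel1_to_toZ (rel1_le (by have := hN2 n (le_max_right _ _); linarith) hrel2) hwz

include hcont hzero in
lemma approx_CC (κ : ℝ) (hκ : 0 < κ) :
    ∃ ε' : ℝ, 0 < ε' ∧ ε' ≤ κ ∧ ∀ w : K × ℝ≥0, w.2 ≤ 1 → w ∈ cmPWu f ε' →
      ToZ f ε' w → ∃ c ∈ CC (f := f), dist w c < κ := by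
  by_contra hcon
  push_neg at hcon
  have hsel : ∀ m : ℕ, ∃ w : K × ℝ≥0, w.2 ≤ 1 ∧ w ∈ cmPWu f (min κ (1 / (m + 1))) ∧
      ToZ f (min κ (1 / (m + 1))) w ∧ ∀ c ∈ CC (f := f), κ ≤ dist w c := by
    intro m
    have hpos : 0 < min κ (1 / (m + 1 : ℝ)) := lt_min hκ (by positivity)
    obtain ⟨w, hw1, hw2, hw3, hw4⟩ := hcon (min κ (1 / (m + 1))) hpos (min_le_left _ _)
    exact ⟨w, hw1, hw2, hw3, hw4⟩
  choose w hw1 hw2 hw3 hw4 using hsel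
  obtain ⟨a, haDD, φ, hφ, hconv⟩ := isCompact_DD.tendsto_subseq (x := w) (fun m => hw1 m)
  have helim : Filter.Tendsto (fun m => min κ (1 / (φ m + 1 : ℝ))) Filter.atTop (nhds 0) := by
    refine squeeze_zero (g := fun m : ℕ => 1 / (m + 1 : ℝ))
      (fun m => le_of_lt (lt_min hκ (by positivity))) ?_
      tendsto_one_div_add_atTop_nhds_zero_nat
    intro m
    refine le_trans (min_le_right _ _) ?_
    apply one_div_le_one_div_of_le (by positivity)
    have : m ≤ φ m := hφ.le_apply
    exact_mod_cast Nat.succ_le_succ this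
  have haCC : a ∈ CC (f := f) := by
    refine lim_mem_CC (f1 := f1) hcont hzero
      (fun m => lt_min hκ (by positivity)) helim (fun m => hw1 (φ m))
      (fun m => hw2 (φ m)) (fun m => hw3 (φ m)) hconv
  obtain ⟨N, hN⟩ := Metric.tendsto_atTop.mp hconv κ hκ
  have := hw4 (φ N) a haCC
  have := hN N le_rfl
  simp only [Function.comp] at this
  linarith

include hcont hzero in
lemma isCompact_CC : IsCompact (CC (f := f)) := by
  refine isCompact_DD.of_isClosed_subset ?_ (fun p hp => hp.1)
  apply IsSeqClosed.isClosed
  intro w p hw hlim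
  exact lim_mem_CC (f1 := f1) hcont hzero (e := fun n => 1 / (n + 1 : ℝ))
    (fun n => by positivity) tendsto_one_div_add_atTop_nhds_zero_nat
    (fun n => (hw n).1) (fun n => ((hw n).2 _ (by positivity)).1)
    (fun n => ((hw n).2 _ (by positivity)).2) hlim

include hcont hskew hzero in
lemma CC_fwd {p : K × ℝ≥0} (hp : p ∈ CC (f := f)) : f p ∈ CC (f := f) := by
  have hp1 : p.2 ≤ 1 := hp.1
  -- (f p).2 ≤ 1
  have hfp1 : (f p).2 ≤ 1 := by
    have key : ∀ ε : ℝ, 0 < ε → ((f p).2 : ℝ) ≤ 1 + ε := by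
      intro ε hε
      obtain ⟨w, hw0, n, z, hn, hz, hz0, hzn⟩ := toZ_norm (f1 := f1) hzero hε (hp.2 ε hε).2
      have hstep : dist (f p) (z 1) < ε := by
        have := hz.2 0 (by omega)
        rwa [hz0] at this
      have hz11 : ((z 1).2 : ℝ) ≤ 1 := by exact_mod_cast hz.1 1 hn
      calc ((f p).2 : ℝ) = dist (f p).2 (0 : ℝ≥0) := (nnreal_dist_zero _).symm
        _ ≤ dist (f p).2 (z 1).2 + dist (z 1).2 (0 : ℝ≥0) := dist_triangle _ _ _
        _ ≤ dist (f p) (z 1) + ((z 1).2 : ℝ) := by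
            rw [nnreal_dist_zero]
            exact add_le_add (dist_snd_le' _ _) le_rfl
        _ ≤ 1 + ε := by linarith
    have : ((f p).2 : ℝ) ≤ 1 := le_of_forall_pos_le_add key
    exact_mod_cast this
  refine ⟨hfp1, fun ε hε => ⟨?_, ?_⟩⟩
  · exact cm_step (hp.2 ε hε).1 (by rw [dist_self]; exact hε) hfp1
  · -- ToZ ε (f p)
    obtain ⟨κ, hκ, hκ2⟩ := unif_cont hcont (show (0:ℝ) < ε / 2 by linarith)
    obtain ⟨η, hη, hη2⟩ := absorb_bound (f1 := f1) hcont hzero hε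
    set ε'' := min (min κ (ε / 2)) (η : ℝ) with hε''def
    have hε'' : 0 < ε'' := by
      apply lt_min (lt_min hκ (by linarith))
      exact_mod_cast hη
    obtain ⟨w, hw0, n, z, hn, hz, hz0, hzn⟩ := toZ_norm (f1 := f1) hzero hε'' (hp.2 ε'' hε'').2
    have hstep : dist (f p) (z 1) < ε'' := by
      have := hz.2 0 (by omega)
      rwa [hz0] at this
    by_cases hn1 : n = 1
    · -- the next chain point is already on the zero section: absorb
      have hz10 : (z 1).2 = 0 := by
        rw [hn1] at hzn
        rw [hzn]; exact hw0
      have hfp2 : ((f p).2 : ℝ) < ε'' := by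
        have h1 : dist (f p).2 (z 1).2 < ε'' := lt_of_le_of_lt (dist_snd_le' _ _) hstep
        rw [hz10, nnreal_dist_zero] at h1
        exact h1
      have hfpη : (f p).2 < η := by
        have : ((f p).2 : ℝ) < (η : ℝ) := lt_of_lt_of_le hfp2 (min_le_right _ _)
        exact_mod_cast this
      exact absorb_toZ (hη2 (f p) hfp1 hfpη) hfp1
    · -- pass through the rest of the chain
      have hn2 : 2 ≤ n := by omega
      have hsuffix : Rel1 f ε'' (z 1) w := by
        refine ⟨n - 1, fun i => z (1 + i), by omega, cmps_shift hz (by omega), by simp, ?_⟩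
        show z (1 + (n - 1)) = w
        have e : 1 + (n - 1) = n := by omega
        rw [e, hzn]
      have hfd : dist (f (f p)) (f (z 1)) ≤ ε / 2 := by
        refine le_of_lt (hκ2 (f p) (z 1) hfp1 (hz.1 1 (by omega)) ?_)
        exact lt_of_lt_of_le hstep (le_trans (min_le_left _ _) (min_le_left _ _))
      have := rel1_start_perturb hsuffix hfd hfp1
      refine rel1_to_toZ (rel1_le ?_ this) hw0
      have : ε'' ≤ ε / 2 := le_trans (min_le_left _ _) (min_le_right _ _)
      linarith

include hcont hskew hzero in
lemma CC_bwd {p : K × ℝ≥0} (hp : p ∈ CC (f := f)) :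
    ∃ q ∈ CC (f := f), f q = p := by
  by_cases hp0 : p.2 = 0
  · refine ⟨(f1.symm p.1, 0), zero_mem_CC _, ?_⟩
    rw [hzero (f1.symm p.1)]
    simp only [Homeomorph.apply_symm_apply]
    have : p = (p.1, p.2) := rfl
    rw [this, hp0]
  · have hsel : ∀ m : ℕ, ∃ q : K × ℝ≥0, q.2 ≤ 1 ∧ dist (f q) p < 1 / (m + 1 : ℝ) ∧
        q ∈ cmPWu f (1 / (m + 1 : ℝ)) ∧ Rel1 f (1 / (m + 1 : ℝ)) q p := by
      intro m
      obtain ⟨n, z, hz, hz0, hzn⟩ := (hp.2 (1 / (m + 1 : ℝ)) (by positivity)).1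
      have hn : 1 ≤ n := by
        rcases Nat.eq_zero_or_pos n with h | h
        · exfalso; apply hp0; rw [← hzn, h]; exact hz0
        · exact h
      refine ⟨z (n - 1), hz.1 (n - 1) (by omega), ?_, ⟨n - 1, z, cmps_mono hz (by omega), hz0, rfl⟩, ?_⟩
      · have := hz.2 (n - 1) (by omega)
        have e : n - 1 + 1 = n := by omega
        rw [e, hzn] at this
        exact this
      · refine rel1_single ?_ (hz.1 (n - 1) (by omega)) hp.1
        have := hz.2 (n - 1) (by omega)
        have e : n - 1 + 1 = n := by omega
        rw [e, hzn] at this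
        exact this
    choose q hq1 hq2 hq3 hq4 using hsel
    obtain ⟨a, haDD, φ, hφ, hconv⟩ := isCompact_DD.tendsto_subseq (x := q) (fun m => hq1 m)
    have hbound : ∀ m : ℕ, 1 / (φ m + 1 : ℝ) ≤ 1 / (m + 1 : ℝ) := by
      intro m
      apply one_div_le_one_div_of_le (by positivity)
      have : m ≤ φ m := hφ.le_apply
      exact_mod_cast Nat.succ_le_succ this
    have he0 : Filter.Tendsto (fun m => 1 / (φ m + 1 : ℝ)) Filter.atTop (nhds 0) :=
      squeeze_zero (fun m => by positivity) hbound tendsto_one_div_add_atTop_nhds_zero_nat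
    have hfa : f a = p := by
      have h5 : Filter.Tendsto (fun m => f (q (φ m))) Filter.atTop (nhds (f a)) := by
        have hca : Filter.Tendsto (q ∘ φ) Filter.atTop (nhdsWithin a (DD K)) :=
          tendsto_nhdsWithin_iff.mpr
            ⟨hconv, Filter.Eventually.of_forall (fun m => hq1 (φ m))⟩
        exact (hcont a haDD).tendsto.comp hca
      have h6 : Filter.Tendsto (fun m => f (q (φ m))) Filter.atTop (nhds p) := by
        rw [tendsto_iff_dist_tendsto_zero]
        exact squeeze_zero (fun m => dist_nonneg)
          (fun m => le_trans (le_of_lt (hq2 (φ m))) (hbound m)) tendsto_one_div_add_atTop_nhds_zero_nat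
      exact tendsto_nhds_unique h5 h6
    refine ⟨a, ?_, hfa⟩
    refine lim_mem_CC (f1 := f1) hcont hzero (e := fun m => 1 / (φ m + 1 : ℝ))
      (fun m => by positivity) he0 (fun m => hq1 (φ m)) (fun m => hq3 (φ m)) ?_ hconv
    intro m
    exact toZ_of_rel1 (hq4 (φ m)) ((hp.2 _ (by positivity)).2)

include hcont hskew hzero in
lemma CC_image : f '' CC (f := f) = CC (f := f) := by
  apply Set.eq_of_subset_of_subset
  · rintro y ⟨q, hq, rfl⟩
    exact CC_fwd hcont hskew hzero hq
  · intro p hp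
    obtain ⟨q, hq, hfq⟩ := CC_bwd hcont hskew hzero hp
    exact ⟨q, hq, hfq⟩

include hcont hskew hzero hbase in
lemma CC_chainTrans : CMChainTransOn f (CC (f := f)) := by
  intro p hp q hq ε hε
  obtain ⟨κ₀, hκ₀, hκ₀2⟩ := unif_cont hcont (show (0:ℝ) < ε / 4 by linarith)
  set κ := min κ₀ (ε / 4) with hκdef
  have hκ : 0 < κ := lt_min hκ₀ (by linarith)
  obtain ⟨ε'', hε''pos, hε''le, happ⟩ := approx_CC (f1 := f1) hcont hzero κ hκ
  obtain ⟨w1, hw10, hrel1⟩ := toZ_norm (f1 := f1) hzero hε''pos (hp.2 ε'' hε''pos).2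
  obtain ⟨w2, hw20, hrel2⟩ := cm_norm (f1 := f1) hzero hε''pos (hq.2 ε'' hε''pos).1
  have htransit : Rel1 f ε'' w1 w2 := by
    have h1 : w1 = (w1.1, 0) := by
      have : w1 = (w1.1, w1.2) := rfl
      rw [this, hw10]
    have h2 : w2 = (w2.1, 0) := by
      have : w2 = (w2.1, w2.2) := rfl
      rw [this, hw20]
    rw [h1, h2]
    exact zero_transit hbase hzero hε''pos w1.1 w2.1
  have hpq : Rel1 f ε'' p q := rel1_trans hrel1 (rel1_trans htransit hrel2)
  obtain ⟨n, z, hn, hz, hz0, hzn⟩ := hpq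
  have hreach : ∀ k, k ≤ n → z k ∈ cmPWu f ε'' := by
    intro k hk
    rcases Nat.eq_zero_or_pos k with h | h
    · rw [h, hz0]; exact (hp.2 ε'' hε''pos).1
    · exact cm_of_rel1 ((hz0 ▸ (hp.2 ε'' hε''pos).1))
        ⟨k, z, h, cmps_mono hz hk, hz0, rfl⟩
  have htoZ : ∀ k, k ≤ n → ToZ f ε'' (z k) := by
    intro k hk
    rcases eq_or_lt_of_le hk with h | h
    · rw [h, hzn]; exact (hq.2 ε'' hε''pos).2
    · refine toZ_of_rel1 ?_ ((hq.2 ε'' hε''pos).2)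
      refine ⟨n - k, fun i => z (k + i), by omega, cmps_shift hz hk, by simp, ?_⟩
      show z (k + (n - k)) = q
      have e : k + (n - k) = n := by omega
      rw [e, hzn]
  have hsel : ∀ k : ℕ, ∃ c : K × ℝ≥0, (k ≤ n → c ∈ CC (f := f) ∧ dist (z k) c < κ) ∧
      (k = 0 → c = p) ∧ (k = n → c = q) := by
    intro k
    by_cases hk0 : k = 0
    · refine ⟨p, fun _ => ⟨hp, ?_⟩, fun _ => rfl, fun hkn => absurd (hk0 ▸ hkn) (by omega)⟩
      rw [hk0, hz0, dist_self]; exact hκ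
    · by_cases hkn : k = n
      · refine ⟨q, fun _ => ⟨hq, ?_⟩, fun h => absurd h hk0, fun _ => rfl⟩
        rw [hkn, hzn, dist_self]; exact hκ
      · by_cases hk : k ≤ n
        · obtain ⟨c, hc, hd⟩ := happ (z k) (hz.1 k hk) (hreach k hk) (htoZ k hk)
          exact ⟨c, fun _ => ⟨hc, hd⟩, fun h => absurd h hk0, fun h => absurd h hkn⟩
        · exact ⟨q, fun h => absurd h hk, fun h => absurd h hk0, fun h => absurd h hkn⟩
  choose c hc1 hc2 hc3 using hsel
  refine ⟨n, hn, c, hc2 0 rfl, hc3 n rfl, fun k hk => (hc1 k hk).1, ?_⟩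
  intro k hk
  have hck := hc1 k hk.le
  have hck1 := hc1 (k + 1) hk
  have hd1 : dist (f (c k)) (f (z k)) < ε / 4 := by
    apply hκ₀2 (c k) (z k) (hck.1.1) (hz.1 k hk.le)
    rw [dist_comm]
    exact lt_of_lt_of_le hck.2 (min_le_left _ _)
  have hd2 : dist (f (z k)) (z (k + 1)) < ε / 4 := by
    refine lt_of_lt_of_le (hz.2 k hk) ?_
    exact le_trans hε''le (min_le_right _ _)
  have hd3 : dist (z (k + 1)) (c (k + 1)) < ε / 4 :=
    lt_of_lt_of_le hck1.2 (min_le_right _ _)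
  calc dist (f (c k)) (c (k + 1))
      ≤ dist (f (c k)) (f (z k)) + dist (f (z k)) (z (k + 1)) + dist (z (k + 1)) (c (k + 1)) :=
        dist_triangle4 _ _ _ _
    _ < ε / 4 + ε / 4 + ε / 4 := by linarith
    _ < ε := by linarith

include hcont hskew hzero hbase in
lemma seg_CRCS {xh : K} {a : ℝ≥0} (ha : 0 < a)
    (hx : ∀ t : ℝ≥0, t ≤ a → ((xh, t) : K × ℝ≥0) ∈ CC (f := f)) : HasCRCS f := by
  refine ⟨xh, a, CC (f := f), ha, isCompact_CC (f1 := f1) hcont hzero, CC_subset_DD,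
    CC_image hcont hskew hzero, CC_chainTrans hcont hskew hzero hbase, ?_⟩
  intro p hp
  rw [Set.mem_prod] at hp
  have h1 : p.1 = xh := hp.1
  have h2 : p.2 ≤ a := (mem_Icc.mp hp.2).2
  have : p = (p.1, p.2) := rfl
  rw [this, h1]
  exact hx p.2 h2

end CCProps

/-! ### the journey construction -/

section Scan

variable [CompactSpace K]
variable (hcont : ContinuousOn f {p : K × ℝ≥0 | p.2 ≤ 1})
  (hskew : ∀ p : K × ℝ≥0, (f p).1 = f1 p.1)
  (hzero : ∀ x : K, f (x, 0) = (f1 x, 0))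

include hcont hskew hzero in
lemma scan_lemma {ε' ε : ℝ} (hε' : 0 < ε') (hε'ε : ε' ≤ ε)
    {T' tb : ℝ≥0} (hT1 : T' ≤ 1) (htb : tb ≤ T')
    {b : ℕ → K} {M : ℕ}
    (hbstep : ∀ k < M, dist (f1 (b k)) (b (k + 1)) < ε')
    (hblock : ∀ t : ℝ≥0, tb ≤ t → ((b M, t) : K × ℝ≥0) ∉ cmPWu f ε')
    (habs : ∀ p : K × ℝ≥0, p.2 ≤ 1 → p.2 < tb → ((f p).2 : ℝ) < ε) :
    ∀ j k, k + j = M → (∀ u : ℝ≥0, u ≤ T' → ((b k, u) : K × ℝ≥0) ∈ cmPWu f ε') →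
      ∃ y : K, ∀ u : ℝ≥0, u ≤ T' →
        ((y, u) : K × ℝ≥0) ∈ cmPWu f ε ∧ ToZ f ε ((y, u) : K × ℝ≥0) := by
  intro j
  induction j using Nat.strong_induction_on with
  | _ j IH =>
    intro k hkM hfull
    rcases Nat.eq_zero_or_pos j with hj0 | hjpos
    · exfalso
      have hkM' : k = M := by omega
      have := hfull tb htb
      rw [hkM'] at this
      exact hblock tb le_rfl this
    · -- journey heights
      have hε : 0 < ε := lt_of_lt_of_le hε' hε'ε
      let J : ℝ≥0 → ℕ → ℝ≥0 := fun u i => Nat.rec u (fun i' h => (f (b (k + i'), h)).2) i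
      have hJ0 : ∀ u, J u 0 = u := fun _ => rfl
      have hJs : ∀ u i, J u (i + 1) = (f (b (k + i), J u i)).2 := fun _ _ => rfl
      by_cases hstuck : ∃ u : ℝ≥0, u ≤ T' ∧ ∃ i, i < j ∧ T' < (f (b (k + i), J u i)).2
      · obtain ⟨u, hu, hex⟩ := hstuck
        have hdec : DecidablePred (fun i => T' < (f (b (k + i), J u i)).2) :=
          fun _ => Classical.dec _
        have hexP : ∃ i, T' < (f (b (k + i), J u i)).2 := ⟨hex.choose, hex.choose_spec.2⟩
        set i₀ := @Nat.find _ hdec hexP with hi₀def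
        have hP : T' < (f (b (k + i₀), J u i₀)).2 := @Nat.find_spec _ hdec hexP
        have hi₀lt : i₀ < j :=
          lt_of_le_of_lt (@Nat.find_min' _ hdec hexP _ hex.choose_spec.2) hex.choose_spec.1
        have hmin : ∀ i, i < i₀ → (f (b (k + i), J u i)).2 ≤ T' := by
          intro i hi
          have := @Nat.find_min _ hdec hexP i hi
          exact not_lt.mp this
        have hJle : ∀ i, i ≤ i₀ → J u i ≤ T' := by
          intro i
          induction i with
          | zero => intro _; rw [hJ0]; exact hu
          | succ i ih =>
            intro hi
            rw [hJs]
            exact hmin i (by omega)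
        -- the journey prefix is a pseudo-orbit, so its endpoint is reachable
        have hreach : ((b (k + i₀), J u i₀) : K × ℝ≥0) ∈ cmPWu f ε' := by
          rcases Nat.eq_zero_or_pos i₀ with h0 | hpos
          · rw [h0]
            have : k + 0 = k := by omega
            rw [this, hJ0]
            exact hfull u hu
          · refine cm_of_rel1 (hfull u hu)
              ⟨i₀, fun i => (b (k + i), J u i), hpos, ⟨?_, ?_⟩, rfl, rfl⟩
            · intro i hi
              exact le_trans (hJle i hi) hT1
            · intro i hi
              show dist (f (b (k + i), J u i)) ((b (k + (i + 1)), J u (i + 1)) : K × ℝ≥0) < ε'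
              rw [Prod.dist_eq]
              refine max_lt ?_ ?_
              · rw [hskew]
                have e : k + (i + 1) = (k + i) + 1 := by omega
                rw [e]
                exact hbstep (k + i) (by omega)
              · rw [hJs, dist_self]
                exact hε'
        -- the fiber after the stuck index is full up to T'
        have hfullnext : ∀ v : ℝ≥0, v ≤ T' →
            ((b (k + i₀ + 1), v) : K × ℝ≥0) ∈ cmPWu f ε' := by
          intro v hv
          refine reach_push hcont hskew hzero hε' hreach (le_trans (hJle i₀ le_rfl) hT1)
            ?_ (le_trans hv hT1) (le_trans hv (le_of_lt hP))
          exact hbstep (k + i₀) (by omega)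
        have := IH (j - i₀ - 1) (by omega) (k + i₀ + 1) (by omega) hfullnext
        exact this
      · -- no journey gets stuck: all journeys reach the blocked fiber and are absorbed
        push_neg at hstuck
        refine ⟨b k, fun u hu => ?_⟩
        have hJle : ∀ i, i ≤ j → J u i ≤ T' := by
          intro i
          induction i with
          | zero => intro _; rw [hJ0]; exact hu
          | succ i ih =>
            intro hi
            rw [hJs]
            exact hstuck u hu i (by omega)
        have hchain : CMPseudoOrbit f ε' (fun i => ((b (k + i), J u i) : K × ℝ≥0)) j := by
          constructor
          · intro i hi
            exact le_trans (hJle i hi) hT1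
          · intro i hi
            show dist (f (b (k + i), J u i)) ((b (k + (i + 1)), J u (i + 1)) : K × ℝ≥0) < ε'
            rw [Prod.dist_eq]
            refine max_lt ?_ ?_
            · rw [hskew]
              have e : k + (i + 1) = (k + i) + 1 := by omega
              rw [e]
              exact hbstep (k + i) (by omega)
            · rw [hJs, dist_self]
              exact hε'
        have hrel : Rel1 f ε' ((b k, u) : K × ℝ≥0) ((b M, J u j) : K × ℝ≥0) := by
          refine ⟨j, fun i => (b (k + i), J u i), hjpos, hchain, rfl, ?_⟩
          show ((b (k + j), J u j) : K × ℝ≥0) = (b M, J u j)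
          rw [hkM]
        have hreachM : ((b M, J u j) : K × ℝ≥0) ∈ cmPWu f ε' :=
          cm_of_rel1 (hfull u hu) hrel
        have hJlt : J u j < tb := by
          by_contra hcon
          push_neg at hcon
          exact hblock (J u j) hcon hreachM
        have htoZ : ToZ f ε ((b M, J u j) : K × ℝ≥0) := by
          refine absorb_toZ (habs _ (le_trans (hJle j le_rfl) hT1) hJlt)
            (le_trans (hJle j le_rfl) hT1)
        exact ⟨cm_le hε'ε (hfull u hu), toZ_of_rel1 (rel1_le hε'ε hrel) htoZ⟩

include hcont hskew hzero in
lemma per_scale (hbase : ∀ x y : K, ChainRel (⇑f1) x y)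
    (hnr : ∀ δ : ℝ≥0, 0 < δ → ∃ x t, t ≤ δ ∧ ∃ εb : ℝ, 0 < εb ∧
      ((x, t) : K × ℝ≥0) ∉ cmPWu f εb)
    {x₀ : K} {T' : ℝ≥0} (hT'pos : 0 < T') (hT'1 : T' ≤ 1)
    (hW0 : ∀ ε : ℝ, 0 < ε → ((x₀, T') : K × ℝ≥0) ∈ cmPWu f ε)
    {ε : ℝ} (hε : 0 < ε) :
    ∃ y : K, ∀ u : ℝ≥0, u ≤ T' →
      ((y, u) : K × ℝ≥0) ∈ cmPWu f ε ∧ ToZ f ε ((y, u) : K × ℝ≥0) := by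
  obtain ⟨η, hη, hη2⟩ := absorb_bound (f1 := f1) hcont hzero hε
  set δ : ℝ≥0 := min (η / 2) (T' / 2) with hδdef
  have hδpos : 0 < δ := lt_min (half_pos hη) (half_pos hT'pos)
  obtain ⟨xb, tb, htbδ, εb, hεb, hblock0⟩ := hnr δ hδpos
  set ε' := min εb ε with hε'def
  have hε'pos : 0 < ε' := lt_min hεb hε
  have hε'ε : ε' ≤ ε := min_le_right _ _
  have hblock : ∀ t : ℝ≥0, tb ≤ t → ((xb, t) : K × ℝ≥0) ∉ cmPWu f ε' := by
    intro t ht hmem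
    exact hblock0 (cm_le (min_le_left _ _)
      (reach_down hcont hskew hzero hε'pos hmem ht))
  have htbT' : tb ≤ T' :=
    le_trans htbδ (le_trans (min_le_right _ _) (half_le_self (zero_le)))
  have htbη : tb < η :=
    lt_of_le_of_lt (le_trans htbδ (min_le_left _ _)) (NNReal.half_lt_self hη.ne')
  have habs : ∀ p : K × ℝ≥0, p.2 ≤ 1 → p.2 < tb → ((f p).2 : ℝ) < ε :=
    fun p h1 h2 => hη2 p h1 (lt_trans h2 htbη)
  obtain ⟨M, hM, b, hb0, hbM, hbstep⟩ := hbase x₀ xb ε' hε'pos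
  have hfull0 : ∀ u : ℝ≥0, u ≤ T' → ((b 0, u) : K × ℝ≥0) ∈ cmPWu f ε' := by
    intro u hu
    rw [hb0]
    exact reach_down hcont hskew hzero hε'pos (hW0 ε' hε'pos) hu
  have hblockM : ∀ t : ℝ≥0, tb ≤ t → ((b M, t) : K × ℝ≥0) ∉ cmPWu f ε' := by
    intro t ht
    rw [hbM]
    exact hblock t ht
  exact scan_lemma hcont hskew hzero hε'pos hε'ε hT'1 htbT' hbstep hblockM habs
    M 0 (by omega) hfull0

include hcont hskew hzero in
lemma key_lemma (hbase : ∀ x y : K, ChainRel (⇑f1) x y)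
    {p : K × ℝ≥0} (hp : ∀ ε : ℝ, 0 < ε → p ∈ cmPWu f ε) (hp2 : p.2 ≠ 0)
    (hnr : ∀ δ : ℝ≥0, 0 < δ → ∃ x t, t ≤ δ ∧
      ((x, t) : K × ℝ≥0) ∉ cmPWuInf f) : HasCRCS f := by
  have hnr' : ∀ δ : ℝ≥0, 0 < δ → ∃ x t, t ≤ δ ∧ ∃ εb : ℝ, 0 < εb ∧
      ((x, t) : K × ℝ≥0) ∉ cmPWu f εb := by
    intro δ hδ
    obtain ⟨x, t, ht, hmem⟩ := hnr δ hδ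
    refine ⟨x, t, ht, ?_⟩
    by_contra hcon
    push_neg at hcon
    exact hmem (fun ε hε => hcon ε hε)
  have hppos : 0 < p.2 := pos_iff_ne_zero.mpr hp2
  set T' : ℝ≥0 := p.2 / 2 with hT'def
  have hT'pos : 0 < T' := half_pos hppos
  have hp21 : p.2 ≤ 1 := mem_cm_snd_le_one (hp 1 one_pos)
  have hT'1 : T' ≤ 1 := le_trans (half_le_self (zero_le)) hp21
  have hW0 : ∀ ε : ℝ, 0 < ε → ((p.1, T') : K × ℝ≥0) ∈ cmPWu f ε := by
    intro ε hε
    have hpmem : ((p.1, p.2) : K × ℝ≥0) ∈ cmPWu f ε := hp ε hε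
    exact reach_down hcont hskew hzero hε hpmem (half_le_self (zero_le))
  have hper : ∀ m : ℕ, ∃ y : K, ∀ u : ℝ≥0, u ≤ T' →
      ((y, u) : K × ℝ≥0) ∈ cmPWu f (1 / (m + 1 : ℝ)) ∧
        ToZ f (1 / (m + 1 : ℝ)) ((y, u) : K × ℝ≥0) :=
    fun m => per_scale hcont hskew hzero hbase hnr' hT'pos hT'1 hW0 (by positivity)
  choose y hy using hper
  obtain ⟨a, -, φ, hφ, hconv⟩ := isCompact_univ.tendsto_subseq (x := y) (fun m => mem_univ _)
  have hbound : ∀ m : ℕ, 1 / (φ m + 1 : ℝ) ≤ 1 / (m + 1 : ℝ) := by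
    intro m
    apply one_div_le_one_div_of_le (by positivity)
    have : m ≤ φ m := hφ.le_apply
    exact_mod_cast Nat.succ_le_succ this
  have he0 : Filter.Tendsto (fun m => 1 / (φ m + 1 : ℝ)) Filter.atTop (nhds 0) :=
    squeeze_zero (fun m => by positivity) hbound tendsto_one_div_add_atTop_nhds_zero_nat
  have hseg : ∀ t : ℝ≥0, t ≤ T' → ((a, t) : K × ℝ≥0) ∈ CC (f := f) := by
    intro t ht
    refine lim_mem_CC (f1 := f1) hcont hzero (w := fun m => ((y (φ m), t) : K × ℝ≥0))
      (e := fun m => 1 / (φ m + 1 : ℝ)) (fun m => by positivity) he0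
      (fun m => le_trans ht hT'1) (fun m => (hy (φ m) t ht).1)
      (fun m => (hy (φ m) t ht).2) ?_
    exact hconv.prodMk_nhds tendsto_const_nhds
  exact seg_CRCS hcont hskew hzero hbase hT'pos hseg

end Scan

end Stmt4Aux

/-- For a central model with a chain-transitive base and no chain-recurrent
central segment, exactly one of the following holds: the chain-unstable set of
the zero section is the zero section itself, or it contains a uniform strip
`K̂ × [0,δ]` for some `δ > 0`. -/
theorem stmt4 {K : Type*} [MetricSpace K] [CompactSpace K] [Nonempty K]
    (f : K × ℝ≥0 → K × ℝ≥0) (f1 : K ≃ₜ K)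
    (hcont : ContinuousOn f {p : K × ℝ≥0 | p.2 ≤ 1})
    (hskew : ∀ p : K × ℝ≥0, (f p).1 = f1 p.1)
    (hzero : ∀ x : K, f (x, 0) = (f1 x, 0))
    (hbase : ∀ x y : K, ChainRel (⇑f1) x y)
    (hnocrcs : ¬ HasCRCS f) :
    Xor' (cmPWuInf f = {p : K × ℝ≥0 | p.2 = 0})
      (∃ δ : ℝ≥0, 0 < δ ∧ ∀ (x : K) (t : ℝ≥0), t ≤ δ →
        ((x, t) : K × ℝ≥0) ∈ cmPWuInf f) := by
  classical
  by_cases hR : ∃ δ : ℝ≥0, 0 < δ ∧ ∀ (x : K) (t : ℝ≥0), t ≤ δ →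
      ((x, t) : K × ℝ≥0) ∈ cmPWuInf f
  · refine Or.inr ⟨hR, ?_⟩
    intro hL
    obtain ⟨δ, hδ, hmem⟩ := hR
    have hx := hmem (Classical.arbitrary K) δ le_rfl
    rw [hL] at hx
    simp only [mem_setOf_eq] at hx
    exact absurd hx hδ.ne'
  · refine Or.inl ⟨?_, hR⟩
    push_neg at hR
    apply Set.eq_of_subset_of_subset
    · intro p hp
      simp only [mem_setOf_eq]
      by_contra hp2
      apply hnocrcs
      exact Stmt4Aux.key_lemma hcont hskew hzero hbase (fun ε hε => hp ε hε) hp2 hR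
    · intro p hp
      simp only [mem_setOf_eq] at hp
      intro ε hε
      have hpe : p = (p.1, 0) := by
        have : p = (p.1, p.2) := rfl
        rw [this, hp]
      rw [hpe]
      exact Stmt4Aux.zero_mem_cm hε p.1
end

section
/- Let (K̂, f̂) be a central model whose base is a chain-transitive homeomorphism. Then the following are equivalent: (1) (K̂, f̂) has no chain-recurrent central segment; (2) there exist strips S in K̂ × [0,1] that are arbitrarily small neighborhoods of K̂ × {0} and that satisfy either f̂(closure(S)) ⊆ interior(S) or f̂⁻¹(closure(S)) ⊆ interior(S). -/
open Set NNReal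

/-- A strip: a subset of `K̂ × [0,∞)` meeting each fiber in an interval. -/
def IsStrip {K : Type*} (S : Set (K × ℝ≥0)) : Prop :=
  ∀ x : K, Set.OrdConnected {t : ℝ≥0 | (x, t) ∈ S}

open Metric
set_option maxHeartbeats 1000000
set_option linter.unusedSectionVars false
set_option linter.unusedVariables false

namespace CM5

variable {K : Type*} [MetricSpace K]

lemma distf (p q : K × ℝ≥0) : dist p.1 q.1 ≤ dist p q := by
  rw [Prod.dist_eq]; exact le_max_left _ _
lemma dists (p q : K × ℝ≥0) : dist p.2 q.2 ≤ dist p q := by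
  rw [Prod.dist_eq]; exact le_max_right _ _
lemma dist_pair_lt {x y : K} {s t : ℝ≥0} {ε : ℝ} (h1 : dist x y < ε)
    (h2 : dist s t < ε) : dist ((x,s) : K × ℝ≥0) ((y,t)) < ε := by
  rw [Prod.dist_eq]; exact max_lt h1 h2
lemma nnds {s t : ℝ≥0} : dist s t = |(s:ℝ) - t| := NNReal.dist_eq s t
lemma nn_lt_add {s t : ℝ≥0} {ε : ℝ} (h : dist s t < ε) : (s:ℝ) < t + ε := by
  rw [nnds] at h; have := abs_lt.1 h; linarith [this.1, this.2]
lemma nn_dist_lt_of_le_of_lt {s t u : ℝ≥0} {ε : ℝ} (h1 : s ≤ t) (h2 : (t:ℝ) < u + ε)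
    (h3 : u ≤ t) : dist u t < ε := by
  rw [nnds, abs_lt]; constructor
  · have : (u:ℝ) ≤ t := h3
    nlinarith [h2]
  · have : (u:ℝ) ≤ t := h3
    linarith
lemma nn_dist_zero {s : ℝ≥0} : dist s s = 0 := dist_self s

/-- chains with all heights `≤ b` -/
def Chain (f : K × ℝ≥0 → K × ℝ≥0) (b : ℝ≥0) (ε : ℝ) (p q : K × ℝ≥0) : Prop :=
  ∃ n : ℕ, 1 ≤ n ∧ ∃ z : ℕ → K × ℝ≥0, z 0 = p ∧ z n = q ∧
    (∀ k, k ≤ n → (z k).2 ≤ b) ∧ ∀ k, k < n → dist (f (z k)) (z (k + 1)) < ε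

namespace Chain
variable {f : K × ℝ≥0 → K × ℝ≥0} {b : ℝ≥0} {ε ε' : ℝ} {p q r : K × ℝ≥0}

lemma start_le (h : Chain f b ε p q) : p.2 ≤ b := by
  obtain ⟨n, hn, z, h0, hn', hb, _⟩ := h
  have := hb 0 (Nat.zero_le n); rwa [h0] at this
lemma end_le (h : Chain f b ε p q) : q.2 ≤ b := by
  obtain ⟨n, hn, z, h0, hn', hb, _⟩ := h
  have := hb n le_rfl; rwa [hn'] at this

lemma single (h : dist (f p) q < ε) (hp : p.2 ≤ b) (hq : q.2 ≤ b) :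
    Chain f b ε p q := by
  refine ⟨1, le_rfl, fun k => if k = 0 then p else q, by simp, by simp, ?_, ?_⟩
  · intro k hk
    by_cases hk0 : k = 0 <;> simp [hk0, hp, hq]
  · intro k hk
    interval_cases k
    simpa using h

lemma snoc (h : Chain f b ε p q) (hd : dist (f q) r < ε) (hr : r.2 ≤ b) :
    Chain f b ε p r := by
  obtain ⟨n, hn, z, h0, hn', hb, hj⟩ := h
  refine ⟨n + 1, by omega, fun k => if k ≤ n then z k else r, by simp [h0],
    by simp, ?_, ?_⟩
  · intro k hk
    by_cases hkn : k ≤ n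
    · simpa [hkn] using hb k hkn
    · simpa [hkn] using hr
  · intro k hk
    by_cases hkn : k < n
    · have h1 : k ≤ n := hkn.le
      have h2 : k + 1 ≤ n := hkn
      simp only [h1, h2, if_pos]
      exact hj k hkn
    · have hk' : k = n := by omega
      subst hk'
      simp only [le_rfl, if_pos, if_neg (by omega : ¬ k + 1 ≤ k)]
      rwa [hn']

lemma cons (hd : dist (f p) q < ε) (hp : p.2 ≤ b) (h : Chain f b ε q r) :
    Chain f b ε p r := by
  obtain ⟨n, hn, z, h0, hn', hb, hj⟩ := h
  refine ⟨n + 1, by omega, fun k => if k = 0 then p else z (k - 1), by simp,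
    by simp [Nat.succ_ne_zero, hn'], ?_, ?_⟩
  · intro k hk
    by_cases hk0 : k = 0
    · simp [hk0, hp]
    · simp only [hk0, if_neg, ite_false]
      exact hb (k - 1) (by omega)
  · intro k hk
    by_cases hk0 : k = 0
    · subst hk0
      simpa [h0] using hd
    · simp only [hk0, ite_false, if_neg (Nat.succ_ne_zero k)]
      have : k - 1 < n := by omega
      have heq : k - 1 + 1 = k + 1 - 1 := by omega
      rw [show (k+1) - 1 = k - 1 + 1 by omega]
      exact hj (k - 1) this

lemma aux_extend (h1 : Chain f b ε p q) : ∀ (m : ℕ) (z : ℕ → K × ℝ≥0),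
    z 0 = q → (∀ k, k ≤ m → (z k).2 ≤ b) → (∀ k, k < m → dist (f (z k)) (z (k + 1)) < ε) →
    Chain f b ε p (z m) := by
  intro m
  induction m with
  | zero => intro z h0 _ _; rw [h0]; exact h1
  | succ m ih =>
    intro z h0 hb hj
    have hchain : Chain f b ε p (z m) :=
      ih z h0 (fun k hk => hb k (by omega)) (fun k hk => hj k (by omega))
    exact hchain.snoc (hj m (by omega)) (hb (m+1) le_rfl)

lemma trans (h1 : Chain f b ε p q) (h2 : Chain f b ε q r) : Chain f b ε p r := by
  obtain ⟨n, hn, z, h0, hn', hb, hj⟩ := h2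
  rw [← hn']
  exact h1.aux_extend n z h0 hb hj

lemma mono (h : Chain f b ε p q) (hε : ε ≤ ε') : Chain f b ε' p q := by
  obtain ⟨n, hn, z, h0, hn', hb, hj⟩ := h
  exact ⟨n, hn, z, h0, hn', hb, fun k hk => lt_of_lt_of_le (hj k hk) hε⟩

/-- replace the endpoint -/
lemma replace_end (h : Chain f b ε' p q) {q' : K × ℝ≥0} {θ : ℝ}
    (hd : dist q' q ≤ θ) (hq' : q'.2 ≤ b) (hεθ : ε' + θ ≤ ε) : Chain f b ε p q' := by
  obtain ⟨n, hn, z, h0, hn', hb, hj⟩ := h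
  refine ⟨n, hn, fun k => if k = n then q' else z k, ?_, by simp, ?_, ?_⟩
  · simp only [if_neg (by omega : ¬ (0:ℕ) = n)]; exact h0
  · intro k hk
    by_cases hkn : k = n <;> simp [hkn, hq']
    exact hb k hk
  · intro k hk
    have hkn : ¬ k = n := by omega
    simp only [hkn, ite_false]
    by_cases hk1 : k + 1 = n
    · simp only [hk1, if_pos]
      calc dist (f (z k)) q' ≤ dist (f (z k)) q + dist q q' := dist_triangle _ _ _
        _ < ε' + θ := by
            rw [dist_comm q q']
            have : dist (f (z k)) q < ε' := by
              have := hj k hk; rwa [hk1, hn'] at this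
            exact add_lt_add_of_lt_of_le this hd
        _ ≤ ε := hεθ
    · simp only [hk1, ite_false]
      have hθ : (0:ℝ) ≤ θ := le_trans dist_nonneg hd
      exact lt_of_lt_of_le (hj k hk) (by linarith)

/-- replace the start (needs a bound on `dist (f p') (f p)`) -/
lemma replace_start (h : Chain f b ε' p q) {p' : K × ℝ≥0} {γ : ℝ}
    (hd : dist (f p') (f p) < γ) (hp' : p'.2 ≤ b) (hεθ : ε' + γ ≤ ε) :
    Chain f b ε p' q := by
  obtain ⟨n, hn, z, h0, hn', hb, hj⟩ := h
  refine ⟨n, hn, fun k => if k = 0 then p' else z k, by simp, ?_, ?_, ?_⟩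
  · simp only [if_neg (by omega : ¬ n = 0)]; exact hn'
  · intro k hk
    by_cases hk0 : k = 0 <;> simp [hk0, hp']
    exact hb k hk
  · intro k hk
    by_cases hk0 : k = 0
    · subst hk0
      simp only [if_pos, if_neg (Nat.one_ne_zero)]
      calc dist (f p') (z 1) ≤ dist (f p') (f p) + dist (f p) (z 1) := dist_triangle _ _ _
        _ < γ + ε' := by
            have : dist (f (z 0)) (z 1) < ε' := hj 0 hk
            rw [h0] at this
            exact add_lt_add hd this
        _ ≤ ε := by linarith
    · simp only [hk0, ite_false, if_neg (Nat.succ_ne_zero k)]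
      have hγ : (0:ℝ) ≤ γ := le_trans dist_nonneg hd.le
      exact lt_of_lt_of_le (hj k hk) (by linarith)

end Chain

variable {K : Type*} [MetricSpace K]

section B
variable [CompactSpace K]
variable (f g : K × ℝ≥0 → K × ℝ≥0) (f1 : K ≃ₜ K)

/-- the domain `K × [0,1]` -/
def D1 : Set (K × ℝ≥0) := {p : K × ℝ≥0 | p.2 ≤ 1}

lemma D1_compact : IsCompact (D1 (K := K)) := by
  have : (D1 (K := K)) = (univ : Set K) ×ˢ Icc 0 1 := by
    ext p; simp [D1, Set.mem_prod]
  rw [this]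
  exact isCompact_univ.prod isCompact_Icc

lemma D1_closed : IsClosed (D1 (K := K)) := by
  have : (D1 (K := K)) = Prod.snd ⁻¹' Iic 1 := rfl
  rw [this]
  exact IsClosed.preimage continuous_snd isClosed_Iic

/-- uniform continuity on `D1` -/
lemma uc_of_contOn {h : K × ℝ≥0 → K × ℝ≥0} (hc : ContinuousOn h (D1 (K := K))) :
    ∀ γ : ℝ, 0 < γ → ∃ δ : ℝ, 0 < δ ∧ ∀ p q : K × ℝ≥0, p.2 ≤ 1 → q.2 ≤ 1 →
      dist p q < δ → dist (h p) (h q) < γ := by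
  intro γ hγ
  have huc : UniformContinuousOn h (D1 (K := K)) :=
    IsCompact.uniformContinuousOn_of_continuous D1_compact hc
  rw [Metric.uniformContinuousOn_iff] at huc
  obtain ⟨δ, hδ, hd⟩ := huc γ hγ
  exact ⟨δ, hδ, fun p q hp hq hpq => hd p hp q hq hpq⟩

/-- smallness of images near the zero section -/
lemma img_small {h : K × ℝ≥0 → K × ℝ≥0} (hc : ContinuousOn h (D1 (K := K)))
    (hz : ∀ x : K, (h (x, 0)).2 = 0) :
    ∀ α : ℝ≥0, 0 < α → ∃ β : ℝ≥0, 0 < β ∧ β ≤ 1 ∧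
      ∀ p : K × ℝ≥0, p.2 ≤ β → (h p).2 < α := by
  intro α hα
  by_contra hcon
  push_neg at hcon
  have hseq : ∀ n : ℕ, ∃ p : K × ℝ≥0, p.2 ≤ (1 : ℝ≥0) / (n + 1) ∧ α ≤ (h p).2 := by
    intro n
    obtain ⟨p, hp1, hp2⟩ := hcon ((1 : ℝ≥0) / (n + 1)) (by positivity)
      (by rw [div_le_one (by positivity)]; exact le_add_of_nonneg_left (zero_le))
    exact ⟨p, hp1, hp2⟩
  choose p hp1 hp2 using hseq
  have hpD : ∀ n, p n ∈ D1 (K := K) := by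
    intro n
    exact le_trans (hp1 n) (by
      rw [div_le_one (by positivity)]
      exact le_add_of_nonneg_left (zero_le))
  obtain ⟨q, hq, φ, hφ, hlim⟩ := D1_compact.tendsto_subseq hpD
  have hq2 : q.2 = 0 := by
    have h2 : Filter.Tendsto (fun n => (p (φ n)).2) Filter.atTop (nhds q.2) :=
      (continuous_snd.tendsto q).comp hlim
    have h0 : Filter.Tendsto (fun n => (p (φ n)).2) Filter.atTop (nhds 0) := by
      have hub0 : Filter.Tendsto (fun n : ℕ => ((1:ℝ≥0) / (n + 1))) Filter.atTop (nhds 0) := by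
        have h1 := (tendsto_const_div_atTop_nhds_zero_nat (1:ℝ≥0)).comp
          (Filter.tendsto_add_atTop_nat 1)
        have heq : ((fun n : ℕ => (1:ℝ≥0) / n) ∘ (fun n => n + 1)) =
            (fun n : ℕ => ((1:ℝ≥0) / (n + 1))) := by
          funext n; simp [Function.comp]
        rwa [heq] at h1
      have hub : Filter.Tendsto (fun n : ℕ => ((1:ℝ≥0) / (φ n + 1))) Filter.atTop (nhds 0) := by
        have h1 := hub0.comp hφ.tendsto_atTop
        have heq : ((fun n : ℕ => (1:ℝ≥0) / (n + 1)) ∘ φ) =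
            (fun n : ℕ => ((1:ℝ≥0) / (φ n + 1))) := by
          funext n; simp [Function.comp]
        rwa [heq] at h1
      exact tendsto_of_tendsto_of_tendsto_of_le_of_le
        (g := fun _ : ℕ => (0:ℝ≥0)) (f := fun n => (p (φ n)).2)
        (h := fun n : ℕ => ((1:ℝ≥0) / (φ n + 1)))
        tendsto_const_nhds hub (fun n => zero_le) (fun n => hp1 (φ n))
    exact tendsto_nhds_unique h2 h0
  have hcq : ContinuousWithinAt h (D1 (K := K)) q := hc q hq
  have himl : Filter.Tendsto (fun n => h (p (φ n))) Filter.atTop (nhds (h q)) := by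
    apply hcq.tendsto.comp
    rw [tendsto_nhdsWithin_iff]
    exact ⟨hlim, Filter.Eventually.of_forall (fun n => hpD (φ n))⟩
  have h2 : Filter.Tendsto (fun n => (h (p (φ n))).2) Filter.atTop (nhds ((h q).2)) :=
    (continuous_snd.tendsto _).comp himl
  have hge : α ≤ (h q).2 := le_of_tendsto_of_tendsto tendsto_const_nhds h2
    (Filter.Eventually.of_forall (fun n => hp2 (φ n)))
  have hq0 : (h q).2 = 0 := by
    have hqq : q = (q.1, (0:ℝ≥0)) := by
      rw [← hq2]
    rw [hqq]; exact hz q.1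
  rw [hq0] at hge
  exact absurd (le_antisymm hge (zero_le)) (ne_of_gt hα)

end B

section C
variable [CompactSpace K]
variable {f g : K × ℝ≥0 → K × ℝ≥0} {f1 : K ≃ₜ K} {b : ℝ≥0}

/-- helper: product distance from components -/
lemma dist_lt_of {p q : K × ℝ≥0} {ε : ℝ} (h1 : dist p.1 q.1 < ε) (h2 : dist p.2 q.2 < ε) :
    dist p q < ε := by
  rw [Prod.dist_eq]; exact max_lt h1 h2

lemma nn_squeeze {t v A : ℝ≥0} {ε : ℝ} (h1 : t ≤ v) (h2 : v ≤ A) (h3 : dist A t < ε) :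
    dist v t < ε := by
  rw [nnds] at h3 ⊢
  have c1 : (t:ℝ) ≤ v := h1
  have c2 : (v:ℝ) ≤ A := h2
  rw [abs_lt] at h3 ⊢
  constructor <;> linarith [h3.1, h3.2]

lemma nn_squeeze' {a s q : ℝ≥0} {ε : ℝ} (h1 : a ≤ s) (h2 : s ≤ q) (h3 : dist a q < ε) :
    dist a s < ε := by
  rw [nnds] at h3 ⊢
  have c1 : (a:ℝ) ≤ s := h1
  have c2 : (s:ℝ) ≤ q := h2
  rw [abs_lt] at h3 ⊢
  constructor <;> linarith [h3.1, h3.2]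

/-- fiber continuity -/
lemma phi_contOn (hcont : ContinuousOn f (D1 (K := K))) (x : K) {t : ℝ≥0} (ht : t ≤ 1) :
    ContinuousOn (fun u : ℝ≥0 => (f (x, u)).2) (Icc 0 t) := by
  apply continuous_snd.comp_continuousOn
  apply hcont.comp (Continuous.continuousOn (by fun_prop))
  intro u hu
  exact le_trans hu.2 ht

/-- generic fiber monotonicity -/
lemma fiber_mono_of {h : K × ℝ≥0 → K × ℝ≥0}
    (hhc : ContinuousOn h (D1 (K := K)))
    (hz : ∀ x : K, (h (x, 0)).2 = 0)
    (hinj : ∀ (x : K) (s t : ℝ≥0), s ≤ b → t ≤ b → h (x, s) = h (x, t) → s = t)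
    (hsk : ∀ (x : K) (s t : ℝ≥0), s ≤ b → t ≤ b → (h (x, s)).1 = (h (x, t)).1)
    (hb1 : b ≤ 1) :
    ∀ (x : K) (s t : ℝ≥0), s ≤ t → t ≤ b → (h (x, s)).2 ≤ (h (x, t)).2 := by
  intro x s t hst htb
  by_contra hlt
  push_neg at hlt
  have hsb : s ≤ b := le_trans hst htb
  have hivt := intermediate_value_Icc (show (0:ℝ≥0) ≤ s from zero_le) (phi_contOn hhc x (le_trans hsb hb1))
  have hmem : (h (x, t)).2 ∈ Icc ((fun u : ℝ≥0 => (h (x,u)).2) 0) ((fun u : ℝ≥0 => (h (x,u)).2) s) := by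
    constructor
    · simp only [hz x]; exact zero_le
    · exact hlt.le
  obtain ⟨u, hu, hu2⟩ := hivt hmem
  have hueq : h (x, u) = h (x, t) := by
    have h1 : (h (x,u)).1 = (h (x,t)).1 := hsk x u t (le_trans hu.2 hsb) htb
    exact Prod.ext h1 hu2
  have hut := hinj x u t (le_trans hu.2 hsb) htb hueq
  have h3 : t ≤ s := hut ▸ hu.2
  have hst2 : s = t := le_antisymm hst h3
  rw [hst2] at hlt
  exact lt_irrefl _ hlt

/-- monotonicity for `f` -/
lemma fiber_mono_f (hcont : ContinuousOn f (D1 (K := K)))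
    (hskew : ∀ p : K × ℝ≥0, (f p).1 = f1 p.1)
    (hzero : ∀ x : K, f (x, 0) = (f1 x, 0))
    (hgf : ∀ p : K × ℝ≥0, p.2 ≤ 1 → (f p).2 ≤ 1 → g (f p) = p)
    (hb1 : b ≤ 1)
    (hfb : ∀ p : K × ℝ≥0, p.2 ≤ b → (f p).2 < 1) :
    ∀ (x : K) (s t : ℝ≥0), s ≤ t → t ≤ b → (f (x, s)).2 ≤ (f (x, t)).2 := by
  apply fiber_mono_of hcont (fun x => by rw [hzero x])
  · intro x s t hs ht heq
    have h1 := hgf (x, s) (le_trans hs hb1) (le_of_lt (hfb (x,s) hs))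
    have h2 := hgf (x, t) (le_trans ht hb1) (le_of_lt (hfb (x,t) ht))
    rw [heq] at h1
    rw [h1] at h2
    exact congrArg Prod.snd h2
  · intro x s t _ _
    rw [hskew (x,s), hskew (x,t)]
  · exact hb1

/-- points reachable by `ε`-chains from the zero section -/
def PE (f : K × ℝ≥0 → K × ℝ≥0) (b : ℝ≥0) (ε : ℝ) : Set (K × ℝ≥0) :=
  {p | ∃ y : K, Chain f b ε (y, 0) p}

/-- points joined to the zero section by `ε`-chains -/
def QE (f : K × ℝ≥0 → K × ℝ≥0) (b : ℝ≥0) (ε : ℝ) : Set (K × ℝ≥0) :=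
  {p | ∃ y : K, Chain f b ε p (y, 0)}

def Pstar (f : K × ℝ≥0 → K × ℝ≥0) (b : ℝ≥0) : Set (K × ℝ≥0) :=
  {p | ∀ ε : ℝ, 0 < ε → p ∈ PE f b ε}

def Qstar (f : K × ℝ≥0 → K × ℝ≥0) (b : ℝ≥0) : Set (K × ℝ≥0) :=
  {p | ∀ ε : ℝ, 0 < ε → p ∈ QE f b ε}

def Cstar (f : K × ℝ≥0 → K × ℝ≥0) (b : ℝ≥0) : Set (K × ℝ≥0) :=
  Pstar f b ∩ Qstar f b

lemma PE_height {ε : ℝ} {p : K × ℝ≥0} (h : p ∈ PE f b ε) : p.2 ≤ b := by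
  obtain ⟨y, hc⟩ := h; exact hc.end_le

lemma QE_height {ε : ℝ} {p : K × ℝ≥0} (h : p ∈ QE f b ε) : p.2 ≤ b := by
  obtain ⟨y, hc⟩ := h; exact hc.start_le

lemma PE_mono {ε ε' : ℝ} (hε : ε ≤ ε') {p : K × ℝ≥0} (h : p ∈ PE f b ε) : p ∈ PE f b ε' := by
  obtain ⟨y, hc⟩ := h; exact ⟨y, hc.mono hε⟩

lemma QE_mono {ε ε' : ℝ} (hε : ε ≤ ε') {p : K × ℝ≥0} (h : p ∈ QE f b ε) : p ∈ QE f b ε' := by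
  obtain ⟨y, hc⟩ := h; exact ⟨y, hc.mono hε⟩

lemma O_mem_PE (hzero : ∀ x : K, f (x, 0) = (f1 x, 0)) {ε : ℝ} (hε : 0 < ε) (x : K) :
    ((x, 0) : K × ℝ≥0) ∈ PE f b ε := by
  refine ⟨f1.symm x, Chain.single ?_ (zero_le) (zero_le)⟩
  rw [hzero (f1.symm x), f1.apply_symm_apply]
  simpa using hε

lemma O_mem_QE (hzero : ∀ x : K, f (x, 0) = (f1 x, 0)) {ε : ℝ} (hε : 0 < ε) (x : K) :
    ((x, 0) : K × ℝ≥0) ∈ QE f b ε := by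
  refine ⟨f1 x, Chain.single ?_ (zero_le) (zero_le)⟩
  rw [hzero x]
  simpa using hε

lemma PE_snoc {ε : ℝ} {p q : K × ℝ≥0} (h : p ∈ PE f b ε) (hd : dist (f p) q < ε)
    (hq : q.2 ≤ b) : q ∈ PE f b ε := by
  obtain ⟨y, hc⟩ := h; exact ⟨y, hc.snoc hd hq⟩

lemma QE_cons {ε : ℝ} {p q : K × ℝ≥0} (h : q ∈ QE f b ε) (hd : dist (f p) q < ε)
    (hp : p.2 ≤ b) : p ∈ QE f b ε := by
  obtain ⟨y, hc⟩ := h; exact ⟨y, Chain.cons hd hp hc⟩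

/-- lift of a base chain to the zero section -/
lemma chain_base (hzero : ∀ x : K, f (x, 0) = (f1 x, 0))
    (hbase : ∀ x y : K, ChainRel (⇑f1) x y) {ε : ℝ} (hε : 0 < ε) (x y : K) :
    Chain f b ε ((x, 0) : K × ℝ≥0) ((y, 0) : K × ℝ≥0) := by
  obtain ⟨n, hn, z, h0, hn', hj⟩ := hbase x y ε hε
  refine ⟨n, hn, fun k => (z k, 0), by simp only []; rw [h0], by simp only []; rw [hn'], fun k _ => zero_le, ?_⟩
  intro k hk
  rw [hzero (z k)]
  exact dist_lt_of (by simpa using hj k hk) (by simpa using hε)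

section lower
variable (hcont : ContinuousOn f (D1 (K := K)))
    (hskew : ∀ p : K × ℝ≥0, (f p).1 = f1 p.1)
    (hzero : ∀ x : K, f (x, 0) = (f1 x, 0))
    (hgf : ∀ p : K × ℝ≥0, p.2 ≤ 1 → (f p).2 ≤ 1 → g (f p) = p)
    (hb1 : b ≤ 1)
    (hfb : ∀ p : K × ℝ≥0, p.2 ≤ b → (f p).2 < 1)

include hcont hb1 hzero

/-- IVT on fibers -/
lemma ivt_fiber (x : K) {t : ℝ≥0} (ht : t ≤ b) {c : ℝ≥0} (hc : c ≤ (f (x, t)).2) :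
    ∃ u : ℝ≥0, u ≤ t ∧ (f (x, u)).2 = c := by
  have hivt := intermediate_value_Icc (show (0:ℝ≥0) ≤ t from zero_le) (phi_contOn hcont x (le_trans ht hb1))
  have hmem : c ∈ Icc ((fun u : ℝ≥0 => (f (x,u)).2) 0) ((fun u : ℝ≥0 => (f (x,u)).2) t) := by
    constructor
    · show (f (x, 0)).2 ≤ c
      rw [hzero x]
      exact zero_le
    · exact hc
  obtain ⟨u, hu, hu2⟩ := hivt hmem
  exact ⟨u, hu.2, hu2⟩

include hskew

/-- `PE` is downward closed -/
lemma PE_down {ε : ℝ} (hε : 0 < ε) {p : K × ℝ≥0} (hp : p ∈ PE f b ε)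
    {s : ℝ≥0} (hs : s ≤ p.2) : (p.1, s) ∈ PE f b ε := by
  obtain ⟨y, n, hn, z, h0, hn', hb', hj⟩ := hp
  clear hn
  have key : ∀ m : ℕ, ∀ w : ℕ → K × ℝ≥0, (w 0).2 = 0 → (∀ k, k ≤ m → (w k).2 ≤ b) →
      (∀ k, k < m → dist (f (w k)) (w (k + 1)) < ε) →
      ∀ s' : ℝ≥0, s' ≤ (w m).2 → ((w m).1, s') ∈ PE f b ε := by
    intro m
    induction m with
    | zero =>
      intro w hw0 hwb hwj s' hs'
      rw [hw0] at hs'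
      have : s' = 0 := le_antisymm hs' (zero_le)
      subst this
      exact O_mem_PE hzero hε (w 0).1
    | succ m ih =>
      intro w hw0 hwb hwj s' hs'
      set q := w (m + 1) with hq
      set v := w m with hv
      have hjump : dist (f v) q < ε := hwj m (by omega)
      have hvb : v.2 ≤ b := hwb m (by omega)
      by_cases hc : s' ≤ (f v).2
      · obtain ⟨u, hu, hu2⟩ := ivt_fiber hcont hzero hb1 v.1 hvb hc
        have hmem : (v.1, u) ∈ PE f b ε :=
          ih w hw0 (fun k hk => hwb k (by omega)) (fun k hk => hwj k (by omega)) u hu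
        apply PE_snoc hmem _ (le_trans hs' (hwb (m+1) le_rfl))
        apply dist_lt_of
        · have hb1' : (f (v.1, u)).1 = (f v).1 := by
            rw [hskew (v.1, u), hskew v]
          rw [hb1']
          exact lt_of_le_of_lt (distf (f v) q) hjump
        · rw [hu2]
          simpa using hε
      · push_neg at hc
        have hmem : (v.1, v.2) ∈ PE f b ε :=
          ih w hw0 (fun k hk => hwb k (by omega)) (fun k hk => hwj k (by omega)) v.2 le_rfl
        have hveta : ((v.1, v.2) : K × ℝ≥0) = v := rfl
        rw [hveta] at hmem
        apply PE_snoc hmem _ (le_trans hs' (hwb (m+1) le_rfl))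
        apply dist_lt_of
        · exact lt_of_le_of_lt (distf (f v) q) hjump
        · exact nn_squeeze' hc.le hs' (lt_of_le_of_lt (dists (f v) q) hjump)
  have hzstart : (z 0).2 = 0 := by rw [h0]
  have := key n z hzstart hb' hj s (by rw [hn']; exact hs)
  rw [hn'] at this
  exact this

/-- `QE` is downward closed (uses fiber monotonicity) -/
lemma QE_down (hgf' : ∀ p : K × ℝ≥0, p.2 ≤ 1 → (f p).2 ≤ 1 → g (f p) = p)
    (hfb : ∀ p : K × ℝ≥0, p.2 ≤ b → (f p).2 < 1)
    {ε : ℝ} (hε : 0 < ε) {p : K × ℝ≥0} (hp : p ∈ QE f b ε)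
    {s : ℝ≥0} (hs : s ≤ p.2) : (p.1, s) ∈ QE f b ε := by
  have hmono := fiber_mono_f (g := g) hcont hskew hzero hgf' hb1 hfb
  obtain ⟨y, n, hn, z, h0, hn', hb', hj⟩ := hp
  clear hn
  have key : ∀ m : ℕ, ∀ w : ℕ → K × ℝ≥0, (w m).2 = 0 → (∀ k, k ≤ m → (w k).2 ≤ b) →
      (∀ k, k < m → dist (f (w k)) (w (k + 1)) < ε) →
      ∀ s' : ℝ≥0, s' ≤ (w 0).2 → ((w 0).1, s') ∈ QE f b ε := by
    intro m
    induction m with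
    | zero =>
      intro w hw0 hwb hwj s' hs'
      rw [hw0] at hs'
      have : s' = 0 := le_antisymm hs' (zero_le)
      subst this
      exact O_mem_QE hzero hε (w 0).1
    | succ m ih =>
      intro w hwm hwb hwj s' hs'
      set w' : ℕ → K × ℝ≥0 := fun k => w (k + 1) with hw'
      have hw'm : (w' m).2 = 0 := hwm
      have hw'b : ∀ k, k ≤ m → (w' k).2 ≤ b := fun k hk => hwb (k+1) (by omega)
      have hw'j : ∀ k, k < m → dist (f (w' k)) (w' (k + 1)) < ε :=
        fun k hk => hwj (k+1) (by omega)
      have h0b : (w 0).2 ≤ b := hwb 0 (by omega)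
      have hjump : dist (f (w 0)) (w 1) < ε := hwj 0 (by omega)
      have hvle : (f ((w 0).1, s')).2 ≤ (f (w 0)).2 := hmono (w 0).1 s' (w 0).2 hs' h0b
      by_cases hc : (f ((w 0).1, s')).2 ≤ (w 1).2
      · have hmem : ((w 1).1, (f ((w 0).1, s')).2) ∈ QE f b ε := ih w' hw'm hw'b hw'j _ hc
        apply QE_cons hmem _ (le_trans hs' h0b)
        apply dist_lt_of
        · have hb1' : (f ((w 0).1, s')).1 = (f (w 0)).1 := by
            rw [hskew ((w 0).1, s'), hskew (w 0)]
          rw [hb1']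
          exact lt_of_le_of_lt (distf (f (w 0)) (w 1)) hjump
        · simpa using hε
      · push_neg at hc
        have hmem : ((w 1).1, (w 1).2) ∈ QE f b ε := ih w' hw'm hw'b hw'j _ le_rfl
        have hveta : (((w 1).1, (w 1).2) : K × ℝ≥0) = w 1 := rfl
        rw [hveta] at hmem
        apply QE_cons hmem _ (le_trans hs' h0b)
        apply dist_lt_of
        · have hb1' : (f ((w 0).1, s')).1 = (f (w 0)).1 := by
            rw [hskew ((w 0).1, s'), hskew (w 0)]
          rw [hb1']
          exact lt_of_le_of_lt (distf (f (w 0)) (w 1)) hjump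
        · exact nn_squeeze hc.le hvle (lt_of_le_of_lt (dists (f (w 0)) (w 1)) hjump)
  have hzend : (z n).2 = 0 := by rw [hn']
  have := key n z hzend hb' hj s (by rw [h0]; exact hs)
  rw [h0] at this
  exact this

end lower

end C
section E
variable [CompactSpace K]
variable {f g : K × ℝ≥0 → K × ℝ≥0} {f1 : K ≃ₜ K} {b : ℝ≥0}

lemma inv_succ_le {ε : ℝ} (hε : 0 < ε) : ∃ N : ℕ, ∀ j ≥ N, (1 : ℝ) / (j + 1) ≤ ε := by
  obtain ⟨N, hN⟩ := exists_nat_gt (1 / ε)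
  refine ⟨N, fun j hj => ?_⟩
  rw [div_le_iff₀ (by positivity)]
  rw [div_lt_iff₀ hε] at hN
  nlinarith [hN, (by exact_mod_cast hj : (N:ℝ) ≤ j)]

lemma lim_PE {q : K × ℝ≥0} {pseq : ℕ → K × ℝ≥0}
    (hmem : ∀ j : ℕ, pseq j ∈ PE f b ((1:ℝ) / (j + 1)))
    (hlim : Filter.Tendsto pseq Filter.atTop (nhds q)) (hqb : q.2 ≤ b) :
    q ∈ Pstar f b := by
  intro ε hε
  obtain ⟨N1, hN1⟩ := inv_succ_le (by positivity : (0:ℝ) < ε / 2)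
  rw [Metric.tendsto_atTop] at hlim
  obtain ⟨N2, hN2⟩ := hlim (ε / 2) (by positivity)
  set j := max N1 N2
  obtain ⟨y, hc⟩ := hmem j
  refine ⟨y, hc.replace_end (θ := ε / 2) ?_ hqb ?_⟩
  · rw [dist_comm]
    exact (hN2 j (le_max_right _ _)).le
  · have := hN1 j (le_max_left _ _)
    linarith

lemma lim_QE (hcont : ContinuousOn f (D1 (K := K))) (hb1 : b ≤ 1)
    {q : K × ℝ≥0} {pseq : ℕ → K × ℝ≥0}
    (hmem : ∀ j : ℕ, pseq j ∈ QE f b ((1:ℝ) / (j + 1)))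
    (hlim : Filter.Tendsto pseq Filter.atTop (nhds q)) (hqb : q.2 ≤ b) :
    q ∈ Qstar f b := by
  intro ε hε
  obtain ⟨δ, hδ, huc⟩ := uc_of_contOn hcont (ε / 2) (by positivity)
  obtain ⟨N1, hN1⟩ := inv_succ_le (by positivity : (0:ℝ) < ε / 2)
  rw [Metric.tendsto_atTop] at hlim
  obtain ⟨N2, hN2⟩ := hlim δ hδ
  set j := max N1 N2
  obtain ⟨y, hc⟩ := hmem j
  refine ⟨y, hc.replace_start (γ := ε / 2) ?_ hqb ?_⟩
  · apply huc q (pseq j) (le_trans hqb hb1) (le_trans (QE_height (hmem j)) hb1)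
    rw [dist_comm]
    exact hN2 j (le_max_right _ _)
  · have := hN1 j (le_max_left _ _)
    linarith

lemma lim_Cstar (hcont : ContinuousOn f (D1 (K := K))) (hb1 : b ≤ 1)
    {q : K × ℝ≥0} {pseq : ℕ → K × ℝ≥0}
    (hmem : ∀ j : ℕ, pseq j ∈ PE f b ((1:ℝ) / (j + 1)) ∩ QE f b ((1:ℝ) / (j + 1)))
    (hlim : Filter.Tendsto pseq Filter.atTop (nhds q)) (hqb : q.2 ≤ b) :
    q ∈ Cstar f b :=
  ⟨lim_PE (fun j => (hmem j).1) hlim hqb, lim_QE hcont hb1 (fun j => (hmem j).2) hlim hqb⟩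

lemma Pstar_height {p : K × ℝ≥0} (h : p ∈ Pstar f b) : p.2 ≤ b :=
  PE_height (h 1 one_pos)

lemma Qstar_height {p : K × ℝ≥0} (h : p ∈ Qstar f b) : p.2 ≤ b :=
  QE_height (h 1 one_pos)

lemma Cstar_height {p : K × ℝ≥0} (h : p ∈ Cstar f b) : p.2 ≤ b := Pstar_height h.1

lemma Cstar_closed (hcont : ContinuousOn f (D1 (K := K))) (hb1 : b ≤ 1) :
    IsClosed (Cstar f b) := by
  apply IsSeqClosed.isClosed
  intro pseq q hpseq hlim
  apply lim_Cstar hcont hb1 (pseq := pseq) ?_ hlim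
  · have : Filter.Tendsto (fun j => (pseq j).2) Filter.atTop (nhds q.2) :=
      (continuous_snd.tendsto q).comp hlim
    exact le_of_tendsto this (Filter.Eventually.of_forall (fun j => Cstar_height (hpseq j)))
  · intro j
    exact ⟨(hpseq j).1 _ (by positivity), (hpseq j).2 _ (by positivity)⟩

lemma Cstar_compact (hcont : ContinuousOn f (D1 (K := K))) (hb1 : b ≤ 1) :
    IsCompact (Cstar f b) := by
  apply IsCompact.of_isClosed_subset D1_compact (Cstar_closed hcont hb1)
  intro p hp
  exact le_trans (Cstar_height hp) hb1

lemma O_mem_Cstar (hzero : ∀ x : K, f (x, 0) = (f1 x, 0)) (x : K) :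
    ((x, 0) : K × ℝ≥0) ∈ Cstar f b :=
  ⟨fun ε hε => O_mem_PE hzero hε x, fun ε hε => O_mem_QE hzero hε x⟩

/-- the strip lemma: `Cstar` is downward closed -/
lemma Cstar_down (hcont : ContinuousOn f (D1 (K := K)))
    (hskew : ∀ p : K × ℝ≥0, (f p).1 = f1 p.1)
    (hzero : ∀ x : K, f (x, 0) = (f1 x, 0))
    (hgf : ∀ p : K × ℝ≥0, p.2 ≤ 1 → (f p).2 ≤ 1 → g (f p) = p)
    (hb1 : b ≤ 1)
    (hfb : ∀ p : K × ℝ≥0, p.2 ≤ b → (f p).2 < 1)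
    {p : K × ℝ≥0} (hp : p ∈ Cstar f b) {s : ℝ≥0} (hs : s ≤ p.2) :
    (p.1, s) ∈ Cstar f b := by
  constructor
  · intro ε hε
    exact PE_down hcont hskew hzero hb1 hε (hp.1 ε hε) hs
  · intro ε hε
    exact QE_down (g := g) hcont hskew hzero hb1 hgf hfb hε (hp.2 ε hε) hs

/-- prefix of a chain -/
lemma Chain.prefix {ε : ℝ} {p : K × ℝ≥0} {n : ℕ} {z : ℕ → K × ℝ≥0}
    (h0 : z 0 = p) (hb' : ∀ k, k ≤ n → (z k).2 ≤ b)
    (hj : ∀ k, k < n → dist (f (z k)) (z (k + 1)) < ε)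
    {k : ℕ} (hk1 : 1 ≤ k) (hkn : k ≤ n) : Chain f b ε p (z k) :=
  ⟨k, hk1, z, h0, rfl, fun i hi => hb' i (le_trans hi hkn), fun i hi => hj i (lt_of_lt_of_le hi hkn)⟩

/-- suffix of a chain -/
lemma Chain.suffix {ε : ℝ} {q : K × ℝ≥0} {n : ℕ} {z : ℕ → K × ℝ≥0}
    (hn' : z n = q) (hb' : ∀ k, k ≤ n → (z k).2 ≤ b)
    (hj : ∀ k, k < n → dist (f (z k)) (z (k + 1)) < ε)
    {k : ℕ} (hkn : k < n) : Chain f b ε (z k) q := by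
  refine ⟨n - k, by omega, fun i => z (k + i), by simp, by simp only []; rw [show k + (n - k) = n by omega, hn'], ?_, ?_⟩
  · intro i hi
    exact hb' (k + i) (by omega)
  · intro i hi
    have := hj (k + i) (by omega)
    rwa [show k + i + 1 = k + (i + 1) by omega] at this

/-- any two points of `Cstar` are joined by chains -/
lemma Cstar_connect (hzero : ∀ x : K, f (x, 0) = (f1 x, 0))
    (hbase : ∀ x y : K, ChainRel (⇑f1) x y)
    {p q : K × ℝ≥0} (hp : p ∈ Cstar f b) (hq : q ∈ Cstar f b)
    {ε : ℝ} (hε : 0 < ε) : Chain f b ε p q := by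
  obtain ⟨y1, hc1⟩ := hp.2 ε hε
  obtain ⟨y2, hc2⟩ := hq.1 ε hε
  exact (hc1.trans (chain_base hzero hbase hε y1 y2)).trans hc2

end E

section F
variable [CompactSpace K]
variable {f g : K × ℝ≥0 → K × ℝ≥0} {f1 : K ≃ₜ K} {b : ℝ≥0}

lemma Db_compact : IsCompact {p : K × ℝ≥0 | p.2 ≤ b} := by
  have : {p : K × ℝ≥0 | p.2 ≤ b} = (univ : Set K) ×ˢ Icc 0 b := by
    ext p; simp [Set.mem_prod]
  rw [this]
  exact isCompact_univ.prod isCompact_Icc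

/-- the image of a `Qstar`-like point stays below `b` -/
lemma QE_img_height {p : K × ℝ≥0} (hq : ∀ ε : ℝ, 0 < ε → p ∈ QE f b ε) : (f p).2 ≤ b := by
  have hkey : ∀ ε : ℝ, 0 < ε → ((f p).2 : ℝ) ≤ (b : ℝ) + ε := by
    intro ε hε
    obtain ⟨y, n, hn, z, h0, hn', hb', hj⟩ := hq ε hε
    have hjump : dist (f p) (z 1) < ε := by
      have := hj 0 hn
      rwa [h0] at this
    have h2 : ((f p).2 : ℝ) < (z 1).2 + ε :=
      nn_lt_add (lt_of_le_of_lt (dists (f p) (z 1)) hjump)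
    have h3 : ((z 1).2 : ℝ) ≤ b := hb' 1 hn
    linarith
  have : ((f p).2 : ℝ) ≤ (b : ℝ) := le_of_forall_pos_le_add (fun ε hε => hkey ε hε)
  exact_mod_cast this

/-- forward invariance of `Cstar` -/
lemma Cstar_fwd (hcont : ContinuousOn f (D1 (K := K)))
    (hzero : ∀ x : K, f (x, 0) = (f1 x, 0)) (hb1 : b ≤ 1)
    {p : K × ℝ≥0} (hp : p ∈ Cstar f b) : f p ∈ Cstar f b := by
  have hfpb : (f p).2 ≤ b := QE_img_height hp.2
  constructor
  · intro ε hε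
    exact PE_snoc (hp.1 ε hε) (by simpa [dist_self] using hε) hfpb
  · intro ε hε
    obtain ⟨δ, hδ, huc⟩ := uc_of_contOn hcont (ε / 2) (by positivity)
    set δ' := min δ (ε / 2) with hδ'def
    have hδ'pos : 0 < δ' := lt_min hδ (by positivity)
    obtain ⟨y, n, hn, z, h0, hn', hb', hj⟩ := hp.2 δ' hδ'pos
    have hjump0 : dist (f p) (z 1) < δ' := by
      have := hj 0 hn
      rwa [h0] at this
    have hffp : dist (f (f p)) (f (z 1)) < ε / 2 :=
      huc (f p) (z 1) (le_trans hfpb hb1) (le_trans (hb' 1 hn) hb1)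
        (lt_of_lt_of_le hjump0 (min_le_left _ _))
    by_cases hn1 : n = 1
    · subst hn1
      refine ⟨f1 y, Chain.single ?_ hfpb (zero_le)⟩
      have : f (z 1) = (f1 y, 0) := by rw [hn', hzero y]
      rw [← this]
      linarith [hffp]
    · have hn2 : 2 ≤ n := by omega
      refine ⟨y, n - 1, by omega, fun k => if k = 0 then f p else z (k + 1), by simp, ?_, ?_, ?_⟩
      · simp only [if_neg (by omega : ¬ n - 1 = 0)]
        rw [show n - 1 + 1 = n by omega, hn']
      · intro k hk
        by_cases hk0 : k = 0
        · simpa [hk0] using hfpb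
        · simp only [hk0, ite_false]
          exact hb' (k + 1) (by omega)
      · intro k hk
        by_cases hk0 : k = 0
        · subst hk0
          simp only [if_pos, if_neg (Nat.one_ne_zero)]
          calc dist (f (f p)) (z 2) ≤ dist (f (f p)) (f (z 1)) + dist (f (z 1)) (z 2) :=
                dist_triangle _ _ _
            _ < ε / 2 + δ' := add_lt_add hffp (hj 1 (by omega))
            _ ≤ ε := by
                have : δ' ≤ ε / 2 := min_le_right _ _
                linarith
        · simp only [hk0, ite_false, if_neg (Nat.succ_ne_zero k)]
          refine lt_of_lt_of_le (hj (k + 1) (by omega)) ?_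
          have h1 : δ' ≤ ε / 2 := min_le_right _ _
          linarith

/-- backward invariance: every point of `Cstar` has a preimage in `Cstar` -/
lemma Cstar_bwd (hcont : ContinuousOn f (D1 (K := K)))
    (hzero : ∀ x : K, f (x, 0) = (f1 x, 0)) (hb1 : b ≤ 1)
    {p : K × ℝ≥0} (hp : p ∈ Cstar f b) : ∃ w ∈ Cstar f b, f w = p := by
  have hsel : ∀ j : ℕ, ∃ w : K × ℝ≥0, w.2 ≤ b ∧ dist (f w) p < 1 / (j + 1) ∧
      w ∈ PE f b ((1:ℝ) / (j + 1)) := by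
    intro j
    have hδ : (0:ℝ) < 1 / (j + 1) := by positivity
    obtain ⟨y, n, hn, z, h0, hn', hb', hj⟩ := hp.1 _ hδ
    refine ⟨z (n - 1), hb' (n-1) (by omega), ?_, ?_⟩
    · have := hj (n - 1) (by omega)
      rwa [show n - 1 + 1 = n by omega, hn'] at this
    · by_cases hn1 : n = 1
      · have : z (n - 1) = (y, 0) := by rw [show n - 1 = 0 by omega, h0]
        rw [this]
        exact O_mem_PE hzero hδ y
      · exact ⟨y, Chain.prefix h0 hb' hj (by omega) (by omega)⟩
  choose w hwb hwd hwP using hsel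
  obtain ⟨wbar, hwbar, φ, hφ, hlim⟩ := Db_compact.tendsto_subseq (x := w) hwb
  have hwbar1 : wbar.2 ≤ b := hwbar
  have hfw : f wbar = p := by
    have hc : ContinuousWithinAt f (D1 (K := K)) wbar := hcont wbar (le_trans hwbar1 hb1)
    have hlim2 : Filter.Tendsto (fun k => f (w (φ k))) Filter.atTop (nhds (f wbar)) := by
      apply hc.tendsto.comp
      rw [tendsto_nhdsWithin_iff]
      exact ⟨hlim, Filter.Eventually.of_forall (fun k => le_trans (hwb (φ k)) hb1)⟩
    have hlim3 : Filter.Tendsto (fun k => f (w (φ k))) Filter.atTop (nhds p) := by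
      rw [tendsto_iff_dist_tendsto_zero]
      apply squeeze_zero (fun k => dist_nonneg) (fun k => (hwd (φ k)).le)
      have hub0 : Filter.Tendsto (fun j : ℕ => ((1:ℝ) / (j + 1))) Filter.atTop (nhds 0) :=
        tendsto_one_div_add_atTop_nhds_zero_nat
      exact hub0.comp hφ.tendsto_atTop
    exact tendsto_nhds_unique hlim2 hlim3
  refine ⟨wbar, ⟨?_, ?_⟩, hfw⟩
  · apply lim_PE (pseq := fun k => w (φ k)) ?_ hlim hwbar1
    intro k
    apply PE_mono ?_ (hwP (φ k))
    apply div_le_div_of_nonneg_left one_pos.le (by positivity)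
    have hk : k ≤ φ k := hφ.le_apply
    exact_mod_cast (by omega : k + 1 ≤ φ k + 1)
  · intro ε hε
    apply QE_cons (hp.2 ε hε) ?_ hwbar1
    rw [hfw]
    simpa [dist_self] using hε

/-- annotated chains: all points lie in `Λ` -/
def AChain (f : K × ℝ≥0 → K × ℝ≥0) (Λ : Set (K × ℝ≥0)) (ε : ℝ) (p q : K × ℝ≥0) : Prop :=
  ∃ n : ℕ, 1 ≤ n ∧ ∃ z : ℕ → K × ℝ≥0, z 0 = p ∧ z n = q ∧
    (∀ k, k ≤ n → z k ∈ Λ) ∧ ∀ k, k < n → dist (f (z k)) (z (k + 1)) < ε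

lemma AChain.trans {Λ : Set (K × ℝ≥0)} {ε : ℝ} {p q r : K × ℝ≥0}
    (h1 : AChain f Λ ε p q) (h2 : AChain f Λ ε q r) : AChain f Λ ε p r := by
  obtain ⟨n1, hn1, z1, h01, hn1', hm1, hj1⟩ := h1
  obtain ⟨n2, hn2, z2, h02, hn2', hm2, hj2⟩ := h2
  refine ⟨n1 + n2, by omega, fun k => if k ≤ n1 then z1 k else z2 (k - n1), ?_, ?_, ?_, ?_⟩
  · simp [h01]
  · simp only [if_neg (by omega : ¬ (n1 + n2 ≤ n1))]
    rw [show n1 + n2 - n1 = n2 by omega, hn2']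
  · intro k hk
    by_cases h : k ≤ n1
    · simpa [h] using hm1 k h
    · simp only [h, ite_false]
      exact hm2 (k - n1) (by omega)
  · intro k hk
    by_cases h : k < n1
    · have h1' : k ≤ n1 := h.le
      have h2' : k + 1 ≤ n1 := h
      simp only [h1', h2', if_pos]
      exact hj1 k h
    · have hkeq : ¬ (k + 1 ≤ n1) := by omega
      by_cases hk1 : k = n1
      · simp only [hk1, le_rfl, if_pos, if_neg (by omega : ¬ n1 + 1 ≤ n1)]
        have : z1 n1 = z2 0 := by rw [hn1', h02]
        rw [this, show n1 + 1 - n1 = 1 by omega]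
        exact hj2 0 (by omega)
      · have h1' : ¬ (k ≤ n1) := by omega
        simp only [h1', hkeq, ite_false]
        rw [show k + 1 - n1 = (k - n1) + 1 by omega]
        exact hj2 (k - n1) (by omega)

/-- annotate a chain whose endpoints lie in `PE ∩ QE` -/
lemma annotate {ε : ℝ} {p q : K × ℝ≥0} (hc : Chain f b ε p q)
    (hp : p ∈ PE f b ε) (hq : q ∈ QE f b ε) :
    AChain f (PE f b ε ∩ QE f b ε) ε p q := by
  obtain ⟨n, hn, z, h0, hn', hb', hj⟩ := hc
  refine ⟨n, hn, z, h0, hn', ?_, hj⟩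
  intro k hk
  constructor
  · by_cases hk0 : k = 0
    · rw [hk0, h0]; exact hp
    · obtain ⟨y, hcp⟩ := hp
      rw [← h0] at hcp
      exact ⟨y, hcp.trans (Chain.prefix rfl hb' hj (by omega) hk)⟩
  · by_cases hkn : k = n
    · rw [hkn, hn']; exact hq
    · obtain ⟨y, hcq⟩ := hq
      rw [← hn'] at hcq
      exact ⟨y, (Chain.suffix rfl hb' hj (by omega)).trans hcq⟩

/-- joint chains through the zero section, annotated -/
lemma Cstar_aconnect (hzero : ∀ x : K, f (x, 0) = (f1 x, 0))
    (hbase : ∀ x y : K, ChainRel (⇑f1) x y)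
    {p q : K × ℝ≥0} (hp : p ∈ Cstar f b) (hq : q ∈ Cstar f b)
    {ε : ℝ} (hε : 0 < ε) : AChain f (PE f b ε ∩ QE f b ε) ε p q := by
  obtain ⟨y1, hc1⟩ := hp.2 ε hε
  obtain ⟨y2, hc2⟩ := hq.1 ε hε
  have hA : AChain f (PE f b ε ∩ QE f b ε) ε p (y1, 0) :=
    annotate hc1 (hp.1 ε hε) (O_mem_QE hzero hε y1)
  have hB : AChain f (PE f b ε ∩ QE f b ε) ε ((y1, 0) : K × ℝ≥0) ((y2, 0) : K × ℝ≥0) :=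
    annotate (chain_base hzero hbase hε y1 y2) (O_mem_PE hzero hε y1) (O_mem_QE hzero hε y2)
  have hC : AChain f (PE f b ε ∩ QE f b ε) ε ((y2, 0) : K × ℝ≥0) q :=
    annotate hc2 (O_mem_PE hzero hε y2) (hq.2 ε hε)
  exact (hA.trans hB).trans hC

end F

section G
variable [CompactSpace K]
variable {f g : K × ℝ≥0 → K × ℝ≥0} {f1 : K ≃ₜ K} {b : ℝ≥0}

lemma inv_j_le {j k : ℕ} (h : k ≤ j) : (1:ℝ) / (j + 1) ≤ 1 / (k + 1) := by
  apply div_le_div_of_nonneg_left one_pos.le (by positivity)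
  exact_mod_cast (by omega : k + 1 ≤ j + 1)

lemma Capprox (hcont : ContinuousOn f (D1 (K := K))) (hb1 : b ≤ 1) :
    ∀ θ : ℝ, 0 < θ → ∃ j : ℕ, ∀ r ∈ PE f b ((1:ℝ)/(j+1)) ∩ QE f b ((1:ℝ)/(j+1)),
      ∃ r' ∈ Cstar f b, dist r r' ≤ θ := by
  intro θ hθ
  by_contra hcon
  push_neg at hcon
  choose r hr hfar using hcon
  have hrb : ∀ j, r j ∈ {p : K × ℝ≥0 | p.2 ≤ b} := fun j => PE_height (hr j).1
  obtain ⟨rbar, hrbar, φ, hφ, hlim⟩ := Db_compact.tendsto_subseq hrb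
  have hrbarC : rbar ∈ Cstar f b := by
    apply lim_Cstar hcont hb1 (pseq := fun k => r (φ k)) ?_ hlim hrbar
    intro k
    have hmono := inv_j_le (hφ.le_apply : k ≤ φ k)
    exact ⟨PE_mono hmono (hr (φ k)).1, QE_mono hmono (hr (φ k)).2⟩
  rw [Metric.tendsto_atTop] at hlim
  obtain ⟨N, hN⟩ := hlim θ hθ
  exact absurd (hN N le_rfl) (not_lt.2 (hfar (φ N) rbar hrbarC).le)

lemma Cstar_trans (hcont : ContinuousOn f (D1 (K := K)))
    (hzero : ∀ x : K, f (x, 0) = (f1 x, 0))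
    (hbase : ∀ x y : K, ChainRel (⇑f1) x y) (hb1 : b ≤ 1) :
    CMChainTransOn f (Cstar f b) := by
  intro p hp q hq ε hε
  obtain ⟨ω, hω, hucω⟩ := uc_of_contOn hcont (ε/4) (by positivity)
  set θ := min (ε/4) (ω/2) with hθdef
  have hθ : 0 < θ := lt_min (by positivity) (by positivity)
  obtain ⟨j, hjap⟩ := Capprox hcont hb1 θ hθ
  set δ' := min ((1:ℝ)/(j+1)) (ε/4) with hδ'def
  have hδ' : 0 < δ' := lt_min (by positivity) (by positivity)
  obtain ⟨n, hn, z, h0, hn', hmem, hj⟩ := Cstar_aconnect hzero hbase hp hq hδ'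
  have hmem' : ∀ k, k ≤ n → ∃ r', r' ∈ Cstar f b ∧ dist (z k) r' ≤ θ := by
    intro k hk
    have : z k ∈ PE f b ((1:ℝ)/(j+1)) ∩ QE f b ((1:ℝ)/(j+1)) := by
      obtain ⟨h1, h2⟩ := hmem k hk
      exact ⟨PE_mono (min_le_left _ _) h1, QE_mono (min_le_left _ _) h2⟩
    obtain ⟨r', hr', hd⟩ := hjap (z k) this
    exact ⟨r', hr', hd⟩
  have hsel : ∀ k : ℕ, ∃ r', r' ∈ Cstar f b ∧ (k ≤ n → dist (z k) r' ≤ θ) := by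
    intro k
    by_cases hk : k ≤ n
    · obtain ⟨r', h1, h2⟩ := hmem' k hk
      exact ⟨r', h1, fun _ => h2⟩
    · exact ⟨p, hp, fun h => absurd h hk⟩
  choose w hw1 hw2 using hsel
  set z' : ℕ → K × ℝ≥0 := fun k => if k = 0 then p else if k = n then q else w k with hz'def
  have hz'mem : ∀ k, k ≤ n → z' k ∈ Cstar f b := by
    intro k hk
    by_cases hk0 : k = 0
    · simpa [hz'def, hk0] using hp
    · by_cases hkn : k = n
      · have hzq : z' k = q := by
          simp only [hz'def]
          rw [if_neg hk0, if_pos hkn]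
        rw [hzq]; exact hq
      · simpa [hz'def, hk0, hkn] using hw1 k
  have hz'close : ∀ k, k ≤ n → dist (z k) (z' k) ≤ θ := by
    intro k hk
    by_cases hk0 : k = 0
    · have hzp : z' k = p := by simp [hz'def, hk0]
      rw [hzp, hk0, h0, dist_self]
      exact hθ.le
    · by_cases hkn : k = n
      · have hzq : z' k = q := by
          simp only [hz'def]
          rw [if_neg hk0, if_pos hkn]
        rw [hzq, hkn, hn', dist_self]
        exact hθ.le
      · have hzw : z' k = w k := by
          simp only [hz'def]
          rw [if_neg hk0, if_neg hkn]
        rw [hzw]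
        exact hw2 k hk
  refine ⟨n, hn, z', by simp [hz'def], ?_, fun k hk => hz'mem k hk, ?_⟩
  · by_cases hn0 : n = 0
    · omega
    · simp [hz'def, hn0]
  · intro k hk
    have hzkb : (z k).2 ≤ b := PE_height (hmem k hk.le).1
    have hz'kb : (z' k).2 ≤ b := Cstar_height (hz'mem k hk.le)
    have himg : dist (f (z' k)) (f (z k)) < ε/4 := by
      apply hucω (z' k) (z k) (le_trans hz'kb hb1) (le_trans hzkb hb1)
      have h1 : dist (z' k) (z k) ≤ θ := by
        rw [dist_comm]; exact hz'close k hk.le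
      have h2 : θ < ω := lt_of_le_of_lt (min_le_right _ _) (by linarith)
      linarith
    calc dist (f (z' k)) (z' (k+1)) ≤
        dist (f (z' k)) (f (z k)) + dist (f (z k)) (z (k+1)) + dist (z (k+1)) (z' (k+1)) :=
          dist_triangle4 _ _ _ _
      _ < ε/4 + δ' + θ := by
          have hB := hj k hk
          have hC : dist (z (k+1)) (z' (k+1)) ≤ θ := hz'close (k+1) hk
          linarith
      _ ≤ ε := by
          have h1 : δ' ≤ ε/4 := min_le_right _ _
          have h2 : θ ≤ ε/4 := min_le_left _ _
          linarith

lemma Cstar_inv (hcont : ContinuousOn f (D1 (K := K)))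
    (hzero : ∀ x : K, f (x, 0) = (f1 x, 0)) (hb1 : b ≤ 1) :
    f '' Cstar f b = Cstar f b := by
  apply Subset.antisymm
  · rintro _ ⟨w, hw, rfl⟩
    exact Cstar_fwd hcont hzero hb1 hw
  · intro p hp
    obtain ⟨w, hw, hfw⟩ := Cstar_bwd hcont hzero hb1 hp
    exact ⟨w, hw, hfw⟩

/-- a nontrivial point of `Cstar` gives a chain-recurrent central segment -/
lemma CRCS_of_Cstar (hcont : ContinuousOn f (D1 (K := K)))
    (hskew : ∀ p : K × ℝ≥0, (f p).1 = f1 p.1)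
    (hzero : ∀ x : K, f (x, 0) = (f1 x, 0))
    (hgf : ∀ p : K × ℝ≥0, p.2 ≤ 1 → (f p).2 ≤ 1 → g (f p) = p)
    (hbase : ∀ x y : K, ChainRel (⇑f1) x y)
    (hb1 : b ≤ 1)
    (hfb : ∀ p : K × ℝ≥0, p.2 ≤ b → (f p).2 < 1)
    {x : K} {t : ℝ≥0} (h : ((x, t) : K × ℝ≥0) ∈ Cstar f b) (ht : 0 < t) :
    HasCRCS f := by
  refine ⟨x, t, Cstar f b, ht, Cstar_compact hcont hb1, ?_, Cstar_inv hcont hzero hb1,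
    Cstar_trans hcont hzero hbase hb1, ?_⟩
  · intro p hp
    exact le_trans (Cstar_height hp) hb1
  · rintro ⟨x', s⟩ ⟨hx', hs⟩
    simp only [mem_singleton_iff] at hx'
    subst hx'
    exact Cstar_down (g := g) hcont hskew hzero hgf hb1 hfb h hs.2

end G

section H
variable [CompactSpace K]
variable {f g : K × ℝ≥0 → K × ℝ≥0} {f1 : K ≃ₜ K} {b : ℝ≥0}

lemma crux_eps (hcont : ContinuousOn f (D1 (K := K)))
    (hskew : ∀ p : K × ℝ≥0, (f p).1 = f1 p.1)
    (hzero : ∀ x : K, f (x, 0) = (f1 x, 0))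
    (hgf : ∀ p : K × ℝ≥0, p.2 ≤ 1 → (f p).2 ≤ 1 → g (f p) = p)
    (hbase : ∀ x y : K, ChainRel (⇑f1) x y)
    (hb1 : b ≤ 1)
    (hfb : ∀ p : K × ℝ≥0, p.2 ≤ b → (f p).2 < 1)
    {xs ys : K} {c c' : ℝ≥0} (hcb : c ≤ b) (hc'b : c' ≤ b)
    {ε : ℝ} (hε : 0 < ε)
    (hP : ((xs, c) : K × ℝ≥0) ∈ PE f b ε) (hQ : ((ys, c') : K × ℝ≥0) ∈ QE f b ε) :
    ((xs, c) : K × ℝ≥0) ∈ QE f b ε ∨ ((ys, c') : K × ℝ≥0) ∈ PE f b ε ∨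
      ∃ xb : K, ((xb, b) : K × ℝ≥0) ∈ PE f b ε ∩ QE f b ε := by
  have hmono := fiber_mono_f (g := g) hcont hskew hzero hgf hb1 hfb
  obtain ⟨m, hm, zb, hzb0, hzbm, hzbj⟩ := hbase xs ys ε hε
  -- forward transported heights
  set hseq : ℕ → ℝ≥0 := fun k =>
    Nat.rec c (fun k prev => min b ((f (zb k, prev)).2)) k with hhseq
  have hseq0 : hseq 0 = c := rfl
  have hseqS : ∀ k, hseq (k + 1) = min b ((f (zb k, hseq k)).2) := fun k => rfl
  have hfwd : ∀ k, k ≤ m → hseq k ≤ b ∧ ((zb k, hseq k) : K × ℝ≥0) ∈ PE f b ε := by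
    intro k
    induction k with
    | zero =>
      intro _
      rw [hseq0, hzb0]
      exact ⟨hcb, hP⟩
    | succ k ih =>
      intro hk
      obtain ⟨hkb, hmem⟩ := ih (by omega)
      have hjb : dist (f1 (zb k)) (zb (k + 1)) < ε := hzbj k (by omega)
      constructor
      · rw [hseqS k]; exact min_le_left _ _
      · by_cases hF : (f (zb k, hseq k)).2 ≤ b
        · have hmin : hseq (k+1) = (f (zb k, hseq k)).2 := by
            rw [hseqS k]; exact min_eq_right hF
          rw [hmin]
          apply PE_snoc hmem _ (by rw [← hmin, hseqS k]; exact min_le_left _ _)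
          apply dist_lt_of
          · rw [hskew (zb k, hseq k)]
            exact hjb
          · simpa using hε
        · push_neg at hF
          have hmin : hseq (k+1) = b := by
            rw [hseqS k]; exact min_eq_left hF.le
          obtain ⟨u, hu, hu2⟩ := ivt_fiber hcont hzero hb1 (zb k) hkb (c := b) hF.le
          have hmemu : ((zb k, u) : K × ℝ≥0) ∈ PE f b ε :=
            PE_down hcont hskew hzero hb1 hε hmem hu
          rw [hmin]
          apply PE_snoc hmemu _ le_rfl
          apply dist_lt_of
          · rw [hskew (zb k, u)]
            exact hjb
          · rw [hu2]
            simpa using hε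
  -- backward transported heights
  set Fb : ℕ → ℝ≥0 → ℝ≥0 := fun j s =>
    if h : s ≤ (f (zb j, b)).2 then
      (ivt_fiber hcont hzero hb1 (zb j) (le_refl b) h).choose
    else b with hFbdef
  set Tseq : ℕ → ℝ≥0 := fun i =>
    Nat.rec c' (fun i prev => Fb (m - i - 1) prev) i with hTseq
  set tseq : ℕ → ℝ≥0 := fun j => Tseq (m - j) with htseq
  have htm : tseq m = c' := by
    simp only [htseq, Nat.sub_self]
    rfl
  have htstep : ∀ j, j < m → tseq j = Fb j (tseq (j + 1)) := by
    intro j hj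
    have h1 : m - j = (m - (j + 1)) + 1 := by omega
    have h2 : m - (m - (j+1)) - 1 = j := by omega
    simp only [htseq, h1]
    show Fb (m - (m - (j+1)) - 1) (Tseq (m - (j+1))) = Fb j (Tseq (m - (j+1)))
    rw [h2]
  have hFbspec : ∀ j s, (Fb j s ≤ b) ∧
      ((s ≤ (f (zb j, b)).2 → (f (zb j, Fb j s)).2 = s) ∧
       (¬ s ≤ (f (zb j, b)).2 → Fb j s = b)) := by
    intro j s
    by_cases h : s ≤ (f (zb j, b)).2
    · have hspec := (ivt_fiber hcont hzero hb1 (zb j) (le_refl b) h).choose_spec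
      constructor
      · simp only [hFbdef, dif_pos h]
        exact hspec.1
      · constructor
        · intro _
          simp only [hFbdef, dif_pos h]
          exact hspec.2
        · intro hc
          exact absurd h hc
    · constructor
      · simp only [hFbdef, dif_neg h]
        exact le_rfl
      · exact ⟨fun hc => absurd hc h, fun _ => by simp only [hFbdef, dif_neg h]⟩
  have hbwd : ∀ i, i ≤ m → Tseq i ≤ b ∧ ((zb (m - i), Tseq i) : K × ℝ≥0) ∈ QE f b ε := by
    intro i
    induction i with
    | zero =>
      intro _
      have h0 : Tseq 0 = c' := rfl
      rw [h0, Nat.sub_zero, hzbm]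
      exact ⟨hc'b, hQ⟩
    | succ i ih =>
      intro hi
      obtain ⟨hib, hmem⟩ := ih (by omega)
      set j := m - i - 1 with hjdef
      have hTS : Tseq (i + 1) = Fb j (Tseq i) := rfl
      have hjm : j + 1 = m - i := by omega
      have hjlt : j < m := by omega
      have hjb : dist (f1 (zb j)) (zb (j + 1)) < ε := hzbj j hjlt
      have hidx : m - (i + 1) = j := by omega
      rw [hidx, hTS]
      obtain ⟨hFle, hFeq, hFelse⟩ := hFbspec j (Tseq i)
      refine ⟨hFle, ?_⟩
      by_cases hcase : Tseq i ≤ (f (zb j, b)).2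
      · apply QE_cons (q := ((zb (j+1), Tseq i) : K × ℝ≥0))
        · rw [hjm]; exact hmem
        · apply dist_lt_of
          · rw [hskew (zb j, Fb j (Tseq i))]
            exact hjb
          · rw [hFeq hcase]
            simpa using hε
        · exact hFle
      · have hqdown : ((zb (j+1), (f (zb j, b)).2) : K × ℝ≥0) ∈ QE f b ε := by
          have := QE_down (g := g) hcont hskew hzero hb1 hgf hfb hε
            (p := ((zb (j+1), Tseq i) : K × ℝ≥0)) (by rw [hjm]; exact hmem) (not_le.1 hcase).le
          exact this
        apply QE_cons (q := ((zb (j+1), (f (zb j, b)).2) : K × ℝ≥0)) hqdown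
        · apply dist_lt_of
          · rw [hskew (zb j, Fb j (Tseq i))]
            exact hjb
          · rw [hFelse hcase]
            simpa using hε
        · exact hFle
  have htprop : ∀ j, j ≤ m → tseq j ≤ b ∧ ((zb j, tseq j) : K × ℝ≥0) ∈ QE f b ε := by
    intro j hj
    have h1 : m - (m - j) = j := by omega
    have := hbwd (m - j) (by omega)
    rw [h1] at this
    exact this
  -- trichotomy
  by_cases hA : c ≤ tseq 0
  · left
    have := QE_down (g := g) hcont hskew hzero hb1 hgf hfb hε
      (p := ((zb 0, tseq 0) : K × ℝ≥0)) (htprop 0 (by omega)).2 hA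
    rwa [hzb0] at this
  by_cases hB : c' ≤ hseq m
  · right; left
    have := PE_down hcont hskew hzero hb1 hε (hfwd m le_rfl).2 hB
    rwa [hzbm] at this
  right; right
  push_neg at hA hB
  -- find the crossing
  have hGm : hseq m < tseq m := by rw [htm]; exact hB
  have hG0 : ¬ hseq 0 < tseq 0 := by rw [hseq0]; exact not_lt.2 hA.le
  have hex : ∃ k, hseq k < tseq k := ⟨m, hGm⟩
  set k := Nat.find hex with hkdef
  have hGk : hseq k < tseq k := Nat.find_spec hex
  have hk1 : 1 ≤ k := by
    by_contra hk0
    push_neg at hk0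
    interval_cases k
    exact hG0 hGk
  have hkm : k ≤ m := Nat.find_min' hex hGm
  set j := k - 1 with hjdef
  have hjk : j + 1 = k := by omega
  have hnGj : ¬ hseq j < tseq j := Nat.find_min hex (by omega)
  push_neg at hnGj
  have hjm : j < m := by omega
  have hjb : tseq j ≤ b := (htprop j (by omega)).1
  have hhjb : hseq j ≤ b := (hfwd j (by omega)).1
  -- step relation at j
  have hstep := htstep j hjm
  obtain ⟨hFle, hFeq, hFelse⟩ := hFbspec j (tseq (j+1))
  by_cases hcase : tseq (j+1) ≤ (f (zb j, b)).2
  · -- exact case: contradiction with the crossing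
    exfalso
    have heq : (f (zb j, tseq j)).2 = tseq (j+1) := by
      rw [hstep]
      exact hFeq hcase
    have hle1 : (f (zb j, tseq j)).2 ≤ (f (zb j, hseq j)).2 :=
      hmono (zb j) (tseq j) (hseq j) hnGj hhjb
    have hle2 : tseq (j+1) ≤ hseq (j+1) := by
      rw [hseqS j]
      apply le_min (htprop (j+1) (by omega)).1
      rw [← heq]
      exact hle1
    rw [hjk] at hle2
    exact absurd hGk (not_lt.2 hle2)
  · -- saturated case: the point `(zb j, b)` works
    have htj : tseq j = b := by rw [hstep]; exact hFelse hcase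
    have hhj : hseq j = b := le_antisymm hhjb (htj ▸ hnGj)
    refine ⟨zb j, ?_, ?_⟩
    · have := (hfwd j (by omega)).2
      rwa [hhj] at this
    · have := (htprop j (by omega)).2
      rwa [htj] at this

end H

section I
variable [CompactSpace K]
variable {f g : K × ℝ≥0 → K × ℝ≥0} {f1 : K ≃ₜ K} {b : ℝ≥0}

lemma crux (hcont : ContinuousOn f (D1 (K := K)))
    (hskew : ∀ p : K × ℝ≥0, (f p).1 = f1 p.1)
    (hzero : ∀ x : K, f (x, 0) = (f1 x, 0))
    (hgf : ∀ p : K × ℝ≥0, p.2 ≤ 1 → (f p).2 ≤ 1 → g (f p) = p)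
    (hbase : ∀ x y : K, ChainRel (⇑f1) x y)
    (hb0 : 0 < b) (hb1 : b ≤ 1)
    (hfb : ∀ p : K × ℝ≥0, p.2 ≤ b → (f p).2 < 1)
    (hP : ∃ p ∈ Pstar f b, 0 < p.2) (hQ : ∃ q ∈ Qstar f b, 0 < q.2) :
    ∃ r ∈ Cstar f b, 0 < r.2 := by
  obtain ⟨p, hp, hp2⟩ := hP
  obtain ⟨q, hq, hq2⟩ := hQ
  set xs := p.1
  set c := p.2 with hcdef
  set ys := q.1
  set c' := q.2 with hc'def
  have hpeta : ((xs, c) : K × ℝ≥0) = p := rfl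
  have hqeta : ((ys, c') : K × ℝ≥0) = q := rfl
  have hcb : c ≤ b := Pstar_height hp
  have hc'b : c' ≤ b := Qstar_height hq
  by_cases H1 : ∀ ε : ℝ, 0 < ε → ((xs, c) : K × ℝ≥0) ∈ QE f b ε
  · exact ⟨p, ⟨hp, by rw [← hpeta]; exact H1⟩, hp2⟩
  by_cases H2 : ∀ ε : ℝ, 0 < ε → ((ys, c') : K × ℝ≥0) ∈ PE f b ε
  · exact ⟨q, ⟨by rw [← hqeta]; exact H2, hq⟩, hq2⟩
  push_neg at H1 H2
  obtain ⟨ε₁, hε₁, hn1⟩ := H1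
  obtain ⟨ε₂, hε₂, hn2⟩ := H2
  have hsel : ∀ n : ℕ, ∃ xb : K, ((xb, b) : K × ℝ≥0) ∈
      PE f b ((1:ℝ)/(n+1)) ∩ QE f b ((1:ℝ)/(n+1)) := by
    intro n
    set εn := min (min ε₁ ε₂) ((1:ℝ)/(n+1)) with hεndef
    have hεnpos : 0 < εn := lt_min (lt_min hε₁ hε₂) (by positivity)
    have h3 := crux_eps (g := g) hcont hskew hzero hgf hbase hb1 hfb hcb hc'b hεnpos
      (hp εn hεnpos) (hq εn hεnpos)
    rcases h3 with h3 | h3 | h3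
    · exact absurd (QE_mono (le_trans (min_le_left _ _) (min_le_left _ _)) h3) hn1
    · exact absurd (PE_mono (le_trans (min_le_left _ _) (min_le_right _ _)) h3) hn2
    · obtain ⟨xb, hxb⟩ := h3
      refine ⟨xb, PE_mono (min_le_right _ _) hxb.1, QE_mono (min_le_right _ _) hxb.2⟩
  choose xb hxb using hsel
  obtain ⟨xinf, _, φ, hφ, hlim⟩ := isCompact_univ.tendsto_subseq
    (x := xb) (fun n => mem_univ _)
  have hlim2 : Filter.Tendsto (fun k => ((xb (φ k), b) : K × ℝ≥0)) Filter.atTop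
      (nhds ((xinf, b) : K × ℝ≥0)) :=
    hlim.prodMk_nhds tendsto_const_nhds
  refine ⟨(xinf, b), ?_, hb0⟩
  apply lim_Cstar hcont hb1 (pseq := fun k => ((xb (φ k), b) : K × ℝ≥0)) ?_ hlim2 le_rfl
  intro k
  have hmono := inv_j_le (hφ.le_apply : k ≤ φ k)
  exact ⟨PE_mono hmono (hxb (φ k)).1, QE_mono hmono (hxb (φ k)).2⟩

/-- main dichotomy: no chain-recurrent central segment forces `Pstar` or `Qstar` trivial -/
lemma dichotomy (hcont : ContinuousOn f (D1 (K := K)))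
    (hskew : ∀ p : K × ℝ≥0, (f p).1 = f1 p.1)
    (hzero : ∀ x : K, f (x, 0) = (f1 x, 0))
    (hgf : ∀ p : K × ℝ≥0, p.2 ≤ 1 → (f p).2 ≤ 1 → g (f p) = p)
    (hbase : ∀ x y : K, ChainRel (⇑f1) x y)
    (hb0 : 0 < b) (hb1 : b ≤ 1)
    (hfb : ∀ p : K × ℝ≥0, p.2 ≤ b → (f p).2 < 1)
    (hnc : ¬ HasCRCS f) :
    (∀ p ∈ Pstar f b, p.2 = 0) ∨ (∀ q ∈ Qstar f b, q.2 = 0) := by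
  by_contra hcon
  push_neg at hcon
  obtain ⟨⟨p, hp, hp2⟩, ⟨q, hq, hq2⟩⟩ := hcon
  obtain ⟨r, hr, hr2⟩ := crux (g := g) hcont hskew hzero hgf hbase hb0 hb1 hfb
    ⟨p, hp, pos_iff_ne_zero.2 hp2⟩ ⟨q, hq, pos_iff_ne_zero.2 hq2⟩
  apply hnc
  have hreta : ((r.1, r.2) : K × ℝ≥0) = r := rfl
  exact CRCS_of_Cstar (g := g) hcont hskew hzero hgf hbase hb1 hfb
    (by rw [hreta]; exact hr) hr2

/-- if `Pstar` is trivial then small `ε`-chains stay low -/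
lemma Pstar_small (hcont : ContinuousOn f (D1 (K := K))) (hb1 : b ≤ 1)
    (hP : ∀ p ∈ Pstar f b, p.2 = 0) :
    ∀ a₁ : ℝ≥0, 0 < a₁ → ∃ ε : ℝ, 0 < ε ∧ ∀ p ∈ PE f b ε, p.2 < a₁ := by
  intro a₁ ha₁
  by_contra hcon
  push_neg at hcon
  have hsel : ∀ n : ℕ, ∃ p : K × ℝ≥0, p ∈ PE f b ((1:ℝ)/(n+1)) ∧ a₁ ≤ p.2 := by
    intro n
    obtain ⟨p, hp1, hp2⟩ := hcon ((1:ℝ)/(n+1)) (by positivity)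
    exact ⟨p, hp1, hp2⟩
  choose p hp hp2 using hsel
  obtain ⟨pbar, hpbar, φ, hφ, hlim⟩ := Db_compact.tendsto_subseq
    (x := p) (fun n => PE_height (hp n))
  have hmem : pbar ∈ Pstar f b := by
    apply lim_PE (pseq := fun k => p (φ k)) ?_ hlim hpbar
    intro k
    exact PE_mono (inv_j_le (hφ.le_apply : k ≤ φ k)) (hp (φ k))
  have h0 : pbar.2 = 0 := hP pbar hmem
  have hge : a₁ ≤ pbar.2 := by
    have h2 : Filter.Tendsto (fun k => (p (φ k)).2) Filter.atTop (nhds pbar.2) :=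
      (continuous_snd.tendsto pbar).comp hlim
    exact le_of_tendsto_of_tendsto tendsto_const_nhds h2
      (Filter.Eventually.of_forall (fun k => hp2 (φ k)))
  rw [h0] at hge
  exact absurd (le_antisymm hge (zero_le)) (ne_of_gt ha₁)

lemma Qstar_small (hcont : ContinuousOn f (D1 (K := K))) (hb1 : b ≤ 1)
    (hQ : ∀ p ∈ Qstar f b, p.2 = 0) :
    ∀ a₁ : ℝ≥0, 0 < a₁ → ∃ ε : ℝ, 0 < ε ∧ ∀ p ∈ QE f b ε, p.2 < a₁ := by
  intro a₁ ha₁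
  by_contra hcon
  push_neg at hcon
  have hsel : ∀ n : ℕ, ∃ p : K × ℝ≥0, p ∈ QE f b ((1:ℝ)/(n+1)) ∧ a₁ ≤ p.2 := by
    intro n
    obtain ⟨p, hp1, hp2⟩ := hcon ((1:ℝ)/(n+1)) (by positivity)
    exact ⟨p, hp1, hp2⟩
  choose p hp hp2 using hsel
  obtain ⟨pbar, hpbar, φ, hφ, hlim⟩ := Db_compact.tendsto_subseq
    (x := p) (fun n => QE_height (hp n))
  have hmem : pbar ∈ Qstar f b := by
    apply lim_QE hcont hb1 (pseq := fun k => p (φ k)) ?_ hlim hpbar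
    intro k
    exact QE_mono (inv_j_le (hφ.le_apply : k ≤ φ k)) (hp (φ k))
  have h0 : pbar.2 = 0 := hQ pbar hmem
  have hge : a₁ ≤ pbar.2 := by
    have h2 : Filter.Tendsto (fun k => (p (φ k)).2) Filter.atTop (nhds pbar.2) :=
      (continuous_snd.tendsto pbar).comp hlim
    exact le_of_tendsto_of_tendsto tendsto_const_nhds h2
      (Filter.Eventually.of_forall (fun k => hp2 (φ k)))
  rw [h0] at hge
  exact absurd (le_antisymm hge (zero_le)) (ne_of_gt ha₁)

end I

section J
variable [CompactSpace K]
variable {b : ℝ≥0}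

lemma nn_abs_lt {s t : ℝ≥0} {ε : ℝ} (h1 : (t:ℝ) < s) (h2 : (s:ℝ) < t + ε) :
    dist s t < ε := by
  rw [nnds, abs_lt]
  constructor <;> linarith

/-- generic construction of trapping strips -/
lemma trap {h : K × ℝ≥0 → K × ℝ≥0} {M : Set (K × ℝ≥0)} {V : Set (K × ℝ≥0)}
    (hb1 : b ≤ 1)
    (hhc : ContinuousOn h (D1 (K := K)))
    (hsk : ∀ (x : K) (s t : ℝ≥0), s ≤ b → t ≤ b → (h (x,s)).1 = (h (x,t)).1)
    (hmono : ∀ (x : K) (s t : ℝ≥0), s ≤ t → t ≤ b → (h (x,s)).2 ≤ (h (x,t)).2)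
    {a₀ a₁ : ℝ≥0} {δ₁ ρ : ℝ}
    (ha₁0 : 0 < a₁) (ha₁₀ : a₁ ≤ a₀) (ha₀b : 2 * a₀ ≤ b)
    (hδ₁ : 0 < δ₁) (hδ₁a : δ₁ ≤ (a₀ : ℝ))
    (hρ : 0 < ρ) (hρδ : ρ ≤ δ₁ / 4) (hρa : ρ ≤ (a₁ : ℝ))
    (hV : ∀ p : K × ℝ≥0, (p.2 : ℝ) < 2 * (a₀ : ℝ) → p ∈ V)
    (hH2 : ∀ p : K × ℝ≥0, p.2 ≤ 2 * a₁ → (h p).2 < a₀)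
    (hMlow : ∀ p ∈ M, p.2 < a₁)
    (hMD : ∀ p ∈ M, p.2 ≤ b)
    (hMO : ∀ x : K, ((x, 0) : K × ℝ≥0) ∈ M)
    (hMdown : ∀ p ∈ M, ∀ s : ℝ≥0, s ≤ p.2 → ((p.1, s) : K × ℝ≥0) ∈ M)
    (hMinv : ∀ q ∈ M, ∀ r : K × ℝ≥0, dist r (h q) < δ₁ → r.2 ≤ b → r ∈ M)
    (huc : ∀ p q : K × ℝ≥0, p.2 ≤ 1 → q.2 ≤ 1 → dist p q ≤ 2*ρ → dist (h p) (h q) < δ₁/4) :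
    ∃ S : Set (K × ℝ≥0), IsStrip S ∧ S ⊆ V ∧ S ⊆ {p : K × ℝ≥0 | p.2 ≤ 1} ∧
      {p : K × ℝ≥0 | p.2 = 0} ⊆ interior S ∧ h '' closure S ⊆ interior S := by
  have ha₀b' : a₀ ≤ b := by
    have h2 : 2 * (a₀:ℝ) ≤ (b:ℝ) := by exact_mod_cast ha₀b
    have h3 := NNReal.coe_nonneg a₀
    have : (a₀:ℝ) ≤ (b:ℝ) := by linarith
    exact_mod_cast this
  set T : Set (K × ℝ≥0) := {q | q.2 ≤ b ∧ ∃ m ∈ M, dist q m < ρ} with hTdef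
  set S : Set (K × ℝ≥0) := {r | ∃ t' : ℝ≥0, r.2 ≤ t' ∧ ((r.1, t') : K × ℝ≥0) ∈ T} with hSdef
  have hMT : M ⊆ T := by
    intro m hm
    exact ⟨hMD m hm, m, hm, by rw [dist_self]; exact hρ⟩
  have hTS : T ⊆ S := by
    intro q hq
    exact ⟨q.2, le_rfl, hq⟩
  have hTh : ∀ q ∈ T, (q.2 : ℝ) < a₁ + ρ := by
    rintro q ⟨hqb, m, hm, hd⟩
    have h1 : (q.2:ℝ) < (m.2:ℝ) + ρ := nn_lt_add (lt_of_le_of_lt (dists q m) hd)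
    have h2 : (m.2:ℝ) < a₁ := hMlow m hm
    linarith
  have hSh : ∀ r ∈ S, (r.2 : ℝ) < a₁ + ρ := by
    rintro r ⟨t', ht', hT⟩
    have := hTh _ hT
    have h2 : (r.2:ℝ) ≤ t' := ht'
    simp only at this
    linarith
  have hSh2 : ∀ r ∈ S, (r.2 : ℝ) < 2 * (a₀:ℝ) := by
    intro r hr
    have h1 := hSh r hr
    have h2 : (a₁:ℝ) ≤ a₀ := ha₁₀
    have h3 : ρ ≤ (a₁:ℝ) := hρa
    linarith
  have hSV : S ⊆ V := fun r hr => hV r (hSh2 r hr)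
  have hSD : S ⊆ {p : K × ℝ≥0 | p.2 ≤ 1} := by
    intro r hr
    have h1 := hSh2 r hr
    have h2 : (2 * a₀ : ℝ≥0) ≤ b := ha₀b
    have h3 : ((2 * a₀ : ℝ≥0):ℝ) = 2 * (a₀:ℝ) := by push_cast; ring
    have : (r.2:ℝ) ≤ (b:ℝ) := by
      have h4 : ((2*a₀:ℝ≥0):ℝ) ≤ (b:ℝ) := h2
      linarith
    have hb1' : (b:ℝ) ≤ 1 := hb1
    exact_mod_cast le_trans this hb1'
  have hstrip : IsStrip S := by
    intro x
    constructor
    intro t₁ h₁ t₂ h₂ t ht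
    obtain ⟨t', ht', hT⟩ := h₂
    exact ⟨t', le_trans ht.2 ht', hT⟩
  have hOint : {p : K × ℝ≥0 | p.2 = 0} ⊆ interior S := by
    intro p hp
    have hball : ball p ρ ⊆ S := by
      intro q hq
      rw [mem_ball] at hq
      have hq2 : (q.2:ℝ) < ρ := by
        have h1 : dist q.2 p.2 ≤ dist q p := dists q p
        have hp2 : p.2 = 0 := hp
        rw [hp2] at h1
        have : dist q.2 0 = (q.2:ℝ) := by rw [nnds]; simp
        rw [this] at h1
        linarith
      apply hTS
      refine ⟨?_, (q.1, 0), hMO q.1, ?_⟩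
      · have : (q.2:ℝ) ≤ b := by
          have h5 : (a₁:ℝ) ≤ a₀ := ha₁₀
          have h6 : (a₀:ℝ) ≤ b := ha₀b'
          linarith [hρa]
        exact_mod_cast this
      · apply lt_of_le_of_lt (le_of_eq (Prod.dist_eq))
        apply max_lt
        · rw [dist_self]; exact hρ
        · have : dist q.2 (0:ℝ≥0) = (q.2:ℝ) := by rw [nnds]; simp
          simpa [this] using hq2
    have : p ∈ ball p ρ := mem_ball_self hρ
    exact interior_maximal hball isOpen_ball this
  refine ⟨S, hstrip, hSV, hSD, hOint, ?_⟩
  -- the trapping property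
  rintro _ ⟨p, hpcl, rfl⟩
  have hclD : closure S ⊆ {p : K × ℝ≥0 | p.2 ≤ 1} :=
    closure_minimal hSD D1_closed
  have hp1 : p.2 ≤ 1 := hclD hpcl
  obtain ⟨p', hp'S, hpp'⟩ := Metric.mem_closure_iff.1 hpcl ρ hρ
  obtain ⟨t', ht', hT⟩ := hp'S
  obtain ⟨ht'b, mm, hmm, hdmm⟩ := hT
  set x' := p'.1 with hx'def
  have hp'b : p'.2 ≤ b := by
    have h1 : (p'.2 : ℝ) ≤ (t':ℝ) := ht'
    have h2 : (t':ℝ) ≤ b := ht'b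
    exact_mod_cast le_trans h1 h2
  have hmmb : mm.2 ≤ b := hMD mm hmm
  set HH := (h (x', t')).2 with hHHdef
  have u1 : dist (h (x', t')) (h mm) < δ₁/4 := by
    apply huc _ _ (le_trans ht'b hb1) (le_trans hmmb hb1)
    have : dist ((x', t') : K × ℝ≥0) mm < ρ := hdmm
    linarith
  have u2 : dist (h p) (h p') < δ₁/4 := by
    apply huc _ _ hp1 (le_trans hp'b hb1)
    linarith
  have u3 : ((h p').2 : ℝ) ≤ (HH : ℝ) := by
    have : (h p').2 ≤ HH := by
      have hpeta : p' = ((x', p'.2) : K × ℝ≥0) := rfl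
      rw [hpeta]
      exact hmono x' p'.2 t' ht' ht'b
    exact_mod_cast this
  have u4 : ((HH : ℝ)) < (h mm).2 + δ₁/4 := nn_lt_add (lt_of_le_of_lt (dists _ _) u1)
  have hhmm_lt : (h mm).2 < a₀ := by
    apply hH2
    have h1 : (mm.2 : ℝ) < a₁ := hMlow mm hmm
    have : (mm.2:ℝ) ≤ 2 * a₁ := by
      have := NNReal.coe_nonneg a₁
      linarith
    exact_mod_cast (by push_cast; linarith : (mm.2:ℝ) ≤ ((2 * a₁ : ℝ≥0):ℝ))
  have hbase_est : dist (h p).1 (h mm).1 < δ₁/2 := by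
    have e1 : dist (h p).1 (h p').1 < δ₁/4 := lt_of_le_of_lt (distf _ _) u2
    have e3 : dist (h (x', t')).1 (h mm).1 < δ₁/4 := lt_of_le_of_lt (distf _ _) u1
    have e2 : (h p').1 = (h (x', t')).1 := by
      have hpeta : p' = ((x', p'.2) : K × ℝ≥0) := rfl
      rw [hpeta]
      exact hsk x' p'.2 t' (le_trans ht' ht'b) ht'b
    calc dist (h p).1 (h mm).1 ≤ dist (h p).1 (h p').1 + dist (h p').1 (h mm).1 :=
          dist_triangle _ _ _
      _ = dist (h p).1 (h p').1 + dist (h (x', t')).1 (h mm).1 := by rw [e2]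
      _ < δ₁/4 + δ₁/4 := by linarith
      _ = δ₁/2 := by ring
  have hfiber_p : ((h p).2 : ℝ) < (h mm).2 + δ₁/2 := by
    have v1 : ((h p).2:ℝ) < (h p').2 + δ₁/4 := nn_lt_add (lt_of_le_of_lt (dists _ _) u2)
    linarith
  have hball2 : ball (h p) ρ ⊆ M := by
    intro r hr
    rw [mem_ball] at hr
    have hr1 : dist r.1 (h p).1 < ρ := lt_of_le_of_lt (distf _ _) hr
    have hr2 : (r.2:ℝ) < (h p).2 + ρ := nn_lt_add (lt_of_le_of_lt (dists _ _) hr)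
    have hbase_r : dist r.1 (h mm).1 < 3*δ₁/4 := by
      calc dist r.1 (h mm).1 ≤ dist r.1 (h p).1 + dist (h p).1 (h mm).1 := dist_triangle _ _ _
        _ < ρ + δ₁/2 := by linarith
        _ ≤ 3*δ₁/4 := by linarith
    by_cases hc : r.2 ≤ (h mm).2
    · have hwb : (h mm).2 ≤ b := le_trans hhmm_lt.le ha₀b'
      have hw : ((r.1, (h mm).2) : K × ℝ≥0) ∈ M := by
        apply hMinv mm hmm
        · apply dist_lt_of
          · simpa using lt_of_lt_of_le hbase_r (by linarith)
          · simpa [dist_self] using hδ₁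
        · exact hwb
      have := hMdown _ hw r.2 hc
      exact this
    · push_neg at hc
      have hfr : dist r.2 (h mm).2 < δ₁ := by
        apply nn_abs_lt (by exact_mod_cast hc)
        linarith
      have hrb : r.2 ≤ b := by
        have h1 : ((h mm).2 : ℝ) < a₀ := hhmm_lt
        have h2 : ((2*a₀ : ℝ≥0) : ℝ) ≤ b := by exact_mod_cast ha₀b
        have h3 : ((2*a₀ : ℝ≥0) : ℝ) = 2*(a₀:ℝ) := by push_cast; ring
        have : (r.2:ℝ) ≤ (b:ℝ) := by linarith
        exact_mod_cast this
      exact hMinv mm hmm r (dist_lt_of (lt_of_lt_of_le hbase_r (by linarith)) hfr) hrb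
  exact interior_maximal (subset_trans hball2 (subset_trans hMT hTS)) isOpen_ball
    (mem_ball_self hρ)

end J

section Kk
variable [CompactSpace K]
variable {f g : K × ℝ≥0 → K × ℝ≥0} {f1 : K ≃ₜ K} {b : ℝ≥0}

lemma Vrad (V : Set (K × ℝ≥0)) (hVo : IsOpen V) (hOV : {p : K × ℝ≥0 | p.2 = 0} ⊆ V) :
    ∃ c : ℝ, 0 < c ∧ ∀ p : K × ℝ≥0, (p.2 : ℝ) < c → p ∈ V := by
  by_contra hcon
  push_neg at hcon
  have hsel : ∀ n : ℕ, ∃ p : K × ℝ≥0, (p.2:ℝ) < 1/(n+1) ∧ p ∉ V := by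
    intro n
    obtain ⟨p, hp1, hp2⟩ := hcon (1/(n+1)) (by positivity)
    exact ⟨p, hp1, hp2⟩
  choose p hp1 hp2 using hsel
  have hpD : ∀ n, p n ∈ D1 (K := K) := by
    intro n
    have h1 : ((p n).2 : ℝ) < 1 := lt_of_lt_of_le (hp1 n) (by
      rw [div_le_one (by positivity)]
      linarith [Nat.cast_nonneg (α := ℝ) n])
    have : ((p n).2:ℝ) ≤ ((1:ℝ≥0):ℝ) := by norm_num; exact h1.le
    exact_mod_cast this
  obtain ⟨q, hq, φ, hφ, hlim⟩ := D1_compact.tendsto_subseq hpD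
  have hq2 : q.2 = 0 := by
    have h2 : Filter.Tendsto (fun k => ((p (φ k)).2 : ℝ)) Filter.atTop (nhds (q.2:ℝ)) :=
      (NNReal.continuous_coe.tendsto q.2).comp ((continuous_snd.tendsto q).comp hlim)
    have hub : Filter.Tendsto (fun k : ℕ => (1:ℝ)/(φ k + 1)) Filter.atTop (nhds 0) :=
      tendsto_one_div_add_atTop_nhds_zero_nat.comp hφ.tendsto_atTop
    have h0 : Filter.Tendsto (fun k => ((p (φ k)).2 : ℝ)) Filter.atTop (nhds 0) :=
      tendsto_of_tendsto_of_tendsto_of_le_of_le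
        (g := fun _ : ℕ => (0:ℝ)) (h := fun k : ℕ => (1:ℝ)/(φ k + 1))
        tendsto_const_nhds hub (fun k => NNReal.coe_nonneg _) (fun k => (hp1 (φ k)).le)
    have : (q.2 : ℝ) = 0 := tendsto_nhds_unique h2 h0
    exact_mod_cast this
  have hqV : q ∈ V := hOV hq2
  have : ∀ᶠ k in Filter.atTop, p (φ k) ∈ V := hlim.eventually_mem (hVo.mem_nhds hqV)
  obtain ⟨k, hk⟩ := this.exists
  exact hp2 (φ k) hk

/-- trapping strips for `f` when `Pstar` is trivial -/
lemma strips_f (hcont : ContinuousOn f (D1 (K := K)))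
    (hskew : ∀ p : K × ℝ≥0, (f p).1 = f1 p.1)
    (hzero : ∀ x : K, f (x, 0) = (f1 x, 0))
    (hgf : ∀ p : K × ℝ≥0, p.2 ≤ 1 → (f p).2 ≤ 1 → g (f p) = p)
    (hb0 : 0 < b) (hb1 : b ≤ 1)
    (hfb : ∀ p : K × ℝ≥0, p.2 ≤ b → (f p).2 < 1)
    (hP : ∀ p ∈ Pstar f b, p.2 = 0)
    (V : Set (K × ℝ≥0)) (hVo : IsOpen V) (hOV : {p : K × ℝ≥0 | p.2 = 0} ⊆ V) :
    ∃ S : Set (K × ℝ≥0), IsStrip S ∧ S ⊆ V ∧ S ⊆ {p : K × ℝ≥0 | p.2 ≤ 1} ∧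
      {p : K × ℝ≥0 | p.2 = 0} ⊆ interior S ∧ f '' closure S ⊆ interior S := by
  obtain ⟨cV, hcV, hVc⟩ := Vrad V hVo hOV
  set a₀ : ℝ≥0 := min (Real.toNNReal (cV/2)) (b/2) with ha₀def
  have ha₀pos : 0 < a₀ := lt_min (by simp [Real.toNNReal_pos]; positivity) (by positivity)
  have ha₀b : 2 * a₀ ≤ b := by
    have h1 : a₀ ≤ b/2 := min_le_right _ _
    calc 2 * a₀ ≤ 2 * (b/2) := by exact mul_le_mul_right h1 2
      _ = b := by rw [mul_comm]; exact div_mul_cancel₀ b two_ne_zero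
  have hVa₀ : ∀ p : K × ℝ≥0, (p.2 : ℝ) < 2*(a₀:ℝ) → p ∈ V := by
    intro p hp
    apply hVc
    have h1 : (a₀:ℝ) ≤ cV/2 := by
      have := min_le_left (Real.toNNReal (cV/2)) (b/2)
      have h2 : ((Real.toNNReal (cV/2)):ℝ) = cV/2 := Real.coe_toNNReal _ (by positivity)
      calc (a₀:ℝ) ≤ ((Real.toNNReal (cV/2)):ℝ) := by exact_mod_cast this
        _ = cV/2 := h2
    linarith
  obtain ⟨β, hβpos, hβ1, hβ⟩ := img_small hcont (fun x => by rw [hzero x]) a₀ ha₀pos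
  set a₁ : ℝ≥0 := min (β/2) a₀ with ha₁def
  have ha₁pos : 0 < a₁ := lt_min (by positivity) ha₀pos
  have ha₁₀ : a₁ ≤ a₀ := min_le_right _ _
  have hH2 : ∀ p : K × ℝ≥0, p.2 ≤ 2 * a₁ → (f p).2 < a₀ := by
    intro p hp
    apply hβ
    calc p.2 ≤ 2 * a₁ := hp
      _ ≤ 2 * (β/2) := by exact mul_le_mul_right (min_le_left _ _) 2
      _ = β := by rw [mul_comm]; exact div_mul_cancel₀ β two_ne_zero
  obtain ⟨ε₀, hε₀pos, hε₀⟩ := Pstar_small hcont hb1 hP a₁ ha₁pos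
  set δ₁ : ℝ := min ε₀ (a₀:ℝ) with hδ₁def
  have hδ₁pos : 0 < δ₁ := lt_min hε₀pos (by exact_mod_cast ha₀pos)
  obtain ⟨ω, hωpos, hω⟩ := uc_of_contOn hcont (δ₁/4) (by positivity)
  set ρ : ℝ := min (min (δ₁/4) (ω/3)) ((a₁:ℝ)) with hρdef
  have hρpos : 0 < ρ := lt_min (lt_min (by positivity) (by positivity)) (by exact_mod_cast ha₁pos)
  set M : Set (K × ℝ≥0) := PE f b δ₁ with hMdef
  apply trap (h := f) (M := M) hb1 hcont
    (fun x s t _ _ => by rw [hskew (x,s), hskew (x,t)])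
    (fiber_mono_f (g := g) hcont hskew hzero hgf hb1 hfb)
    ha₁pos ha₁₀ ha₀b hδ₁pos (min_le_right _ _) hρpos
    (le_trans (min_le_left _ _) (min_le_left _ _)) (min_le_right _ _)
    hVa₀ hH2
  · intro p hp
    exact hε₀ p (PE_mono (min_le_left _ _) hp)
  · intro p hp
    exact PE_height hp
  · intro x
    exact O_mem_PE hzero hδ₁pos x
  · intro p hp s hs
    exact PE_down hcont hskew hzero hb1 hδ₁pos hp hs
  · intro q hq r hd hrb
    exact PE_snoc hq (by rw [dist_comm]; exact hd) hrb
  · intro p q hp hq hd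
    apply hω p q hp hq
    have h1 : ρ ≤ ω/3 := le_trans (min_le_left _ _) (min_le_right _ _)
    linarith

/-- trapping strips for `g` when `Qstar` is trivial -/
lemma strips_g (hcont : ContinuousOn f (D1 (K := K)))
    (hskew : ∀ p : K × ℝ≥0, (f p).1 = f1 p.1)
    (hzero : ∀ x : K, f (x, 0) = (f1 x, 0))
    (hgcont : ContinuousOn g (D1 (K := K)))
    (hgf : ∀ p : K × ℝ≥0, p.2 ≤ 1 → (f p).2 ≤ 1 → g (f p) = p)
    (hfg : ∀ p : K × ℝ≥0, p.2 ≤ 1 → (g p).2 ≤ 1 → f (g p) = p)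
    (hgzero : ∀ x : K, g (x, 0) = (f1.symm x, 0))
    (hb0 : 0 < b) (hb1 : b ≤ 1)
    (hfb : ∀ p : K × ℝ≥0, p.2 ≤ b → (f p).2 < 1)
    (hgb : ∀ p : K × ℝ≥0, p.2 ≤ b → (g p).2 < 1)
    (hQ : ∀ p ∈ Qstar f b, p.2 = 0)
    (V : Set (K × ℝ≥0)) (hVo : IsOpen V) (hOV : {p : K × ℝ≥0 | p.2 = 0} ⊆ V) :
    ∃ S : Set (K × ℝ≥0), IsStrip S ∧ S ⊆ V ∧ S ⊆ {p : K × ℝ≥0 | p.2 ≤ 1} ∧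
      {p : K × ℝ≥0 | p.2 = 0} ⊆ interior S ∧ g '' closure S ⊆ interior S := by
  have hgskew : ∀ p : K × ℝ≥0, p.2 ≤ b → (g p).1 = f1.symm p.1 := by
    intro p hpb
    have h1 : f (g p) = p := hfg p (le_trans hpb hb1) (hgb p hpb).le
    have h2 : (f (g p)).1 = f1 ((g p).1) := hskew (g p)
    rw [h1] at h2
    have h3 : f1.symm p.1 = (g p).1 := by
      rw [h2, Homeomorph.symm_apply_apply]
    exact h3.symm
  have hgz2 : ∀ x : K, (g (x, 0)).2 = 0 := fun x => by rw [hgzero x]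
  have hginj : ∀ (x : K) (s t : ℝ≥0), s ≤ b → t ≤ b → g (x, s) = g (x, t) → s = t := by
    intro x s t hs ht heq
    have h1 := hfg (x, s) (le_trans hs hb1) (hgb (x,s) hs).le
    have h2 := hfg (x, t) (le_trans ht hb1) (hgb (x,t) ht).le
    rw [heq] at h1
    rw [h1] at h2
    exact congrArg Prod.snd h2
  have hgmono := fiber_mono_of hgcont hgz2 hginj
    (fun x s t hs ht => by rw [hgskew (x,s) hs, hgskew (x,t) ht]) hb1
  obtain ⟨cV, hcV, hVc⟩ := Vrad V hVo hOV
  set a₀ : ℝ≥0 := min (Real.toNNReal (cV/2)) (b/2) with ha₀def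
  have ha₀pos : 0 < a₀ := lt_min (by simp [Real.toNNReal_pos]; positivity) (by positivity)
  have ha₀b : 2 * a₀ ≤ b := by
    have h1 : a₀ ≤ b/2 := min_le_right _ _
    calc 2 * a₀ ≤ 2 * (b/2) := by exact mul_le_mul_right h1 2
      _ = b := by rw [mul_comm]; exact div_mul_cancel₀ b two_ne_zero
  have hVa₀ : ∀ p : K × ℝ≥0, (p.2 : ℝ) < 2*(a₀:ℝ) → p ∈ V := by
    intro p hp
    apply hVc
    have h1 : (a₀:ℝ) ≤ cV/2 := by
      have := min_le_left (Real.toNNReal (cV/2)) (b/2)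
      have h2 : ((Real.toNNReal (cV/2)):ℝ) = cV/2 := Real.coe_toNNReal _ (by positivity)
      calc (a₀:ℝ) ≤ ((Real.toNNReal (cV/2)):ℝ) := by exact_mod_cast this
        _ = cV/2 := h2
    linarith
  obtain ⟨β, hβpos, hβ1, hβ⟩ := img_small hgcont hgz2 a₀ ha₀pos
  set a₁ : ℝ≥0 := min (β/2) a₀ with ha₁def
  have ha₁pos : 0 < a₁ := lt_min (by positivity) ha₀pos
  have ha₁₀ : a₁ ≤ a₀ := min_le_right _ _
  have hH2 : ∀ p : K × ℝ≥0, p.2 ≤ 2 * a₁ → (g p).2 < a₀ := by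
    intro p hp
    apply hβ
    calc p.2 ≤ 2 * a₁ := hp
      _ ≤ 2 * (β/2) := by exact mul_le_mul_right (min_le_left _ _) 2
      _ = β := by rw [mul_comm]; exact div_mul_cancel₀ β two_ne_zero
  obtain ⟨ε₀, hε₀pos, hε₀⟩ := Qstar_small hcont hb1 hQ a₁ ha₁pos
  obtain ⟨ωf, hωfpos, hωf⟩ := uc_of_contOn hcont ε₀ hε₀pos
  set δ₁ : ℝ := min ωf (a₀:ℝ) with hδ₁def
  have hδ₁pos : 0 < δ₁ := lt_min hωfpos (by exact_mod_cast ha₀pos)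
  obtain ⟨ω, hωpos, hω⟩ := uc_of_contOn hgcont (δ₁/4) (by positivity)
  set ρ : ℝ := min (min (δ₁/4) (ω/3)) ((a₁:ℝ)) with hρdef
  have hρpos : 0 < ρ := lt_min (lt_min (by positivity) (by positivity)) (by exact_mod_cast ha₁pos)
  set M : Set (K × ℝ≥0) := QE f b ε₀ with hMdef
  apply trap (h := g) (M := M) hb1 hgcont
    (fun x s t hs ht => by rw [hgskew (x,s) hs, hgskew (x,t) ht])
    hgmono
    ha₁pos ha₁₀ ha₀b hδ₁pos (min_le_right _ _) hρpos
    (le_trans (min_le_left _ _) (min_le_left _ _)) (min_le_right _ _)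
    hVa₀ hH2
  · intro p hp
    exact hε₀ p hp
  · intro p hp
    exact QE_height hp
  · intro x
    exact O_mem_QE hzero hε₀pos x
  · intro p hp s hs
    exact QE_down (g := g) hcont hskew hzero hb1 hgf hfb hε₀pos hp hs
  · intro q hq r hd hrb
    have hqb : q.2 ≤ b := QE_height hq
    have hgq1 : (g q).2 ≤ 1 := (hgb q hqb).le
    have hfr : dist (f r) q < ε₀ := by
      have h1 : dist (f r) (f (g q)) < ε₀ := by
        apply hωf r (g q) (le_trans hrb hb1) hgq1
        exact lt_of_lt_of_le hd (min_le_left _ _)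
      rwa [hfg q (le_trans hqb hb1) hgq1] at h1
    exact QE_cons hq hfr hrb
  · intro p q hp hq hd
    apply hω p q hp hq
    have h1 : ρ ≤ ω/3 := le_trans (min_le_left _ _) (min_le_right _ _)
    linarith

end Kk

section L
variable [CompactSpace K]
variable {f g : K × ℝ≥0 → K × ℝ≥0} {f1 : K ≃ₜ K}

/-- choice of the level `b` -/
lemma b_exists (hcont : ContinuousOn f (D1 (K := K)))
    (hgcont : ContinuousOn g (D1 (K := K)))
    (hzero : ∀ x : K, f (x, 0) = (f1 x, 0))
    (hgzero : ∀ x : K, g (x, 0) = (f1.symm x, 0)) :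
    ∃ b : ℝ≥0, 0 < b ∧ b ≤ 1 ∧ (∀ p : K × ℝ≥0, p.2 ≤ b → (f p).2 < 1) ∧
      (∀ p : K × ℝ≥0, p.2 ≤ b → (g p).2 < 1) := by
  obtain ⟨βf, hβf0, hβf1, hβf⟩ := img_small hcont (fun x => by rw [hzero x]) 1 one_pos
  obtain ⟨βg, hβg0, hβg1, hβg⟩ := img_small hgcont (fun x => by rw [hgzero x]) 1 one_pos
  refine ⟨min βf βg, lt_min hβf0 hβg0, le_trans (min_le_left _ _) hβf1, ?_, ?_⟩
  · intro p hp
    exact hβf p (le_trans hp (min_le_left _ _))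
  · intro p hp
    exact hβg p (le_trans hp (min_le_right _ _))

/-- direction (2) ⟹ (1) -/
lemma no_CRCS_of_strips (hcont : ContinuousOn f (D1 (K := K)))
    (hgcont : ContinuousOn g (D1 (K := K)))
    (hgf : ∀ p : K × ℝ≥0, p.2 ≤ 1 → (f p).2 ≤ 1 → g (f p) = p)
    (hstr : ∀ V : Set (K × ℝ≥0), IsOpen V → {p : K × ℝ≥0 | p.2 = 0} ⊆ V →
      ∃ S : Set (K × ℝ≥0), IsStrip S ∧ S ⊆ V ∧ S ⊆ {p : K × ℝ≥0 | p.2 ≤ 1} ∧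
        {p : K × ℝ≥0 | p.2 = 0} ⊆ interior S ∧
        (f '' closure S ⊆ interior S ∨ g '' closure S ⊆ interior S)) :
    ¬ HasCRCS f := by
  rintro ⟨x, a, Λ, ha, hΛc, hΛD, hΛinv, hΛtrans, hseg⟩
  set V : Set (K × ℝ≥0) := {p | p.2 < a} with hVdef
  have hVo : IsOpen V := by
    have : V = Prod.snd ⁻¹' (Iio a) := rfl
    rw [this]
    exact IsOpen.preimage continuous_snd isOpen_Iio
  have hOV : {p : K × ℝ≥0 | p.2 = 0} ⊆ V := by
    intro p hp
    show p.2 < a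
    rw [hp]
    exact ha
  obtain ⟨S, hstrip, hSV, hSD, hOint, hor⟩ := hstr V hVo hOV
  have hclD : closure S ⊆ D1 (K := K) := closure_minimal hSD D1_closed
  have hclcomp : IsCompact (closure S) :=
    IsCompact.of_isClosed_subset D1_compact isClosed_closure hclD
  have hx0 : ((x, 0) : K × ℝ≥0) ∈ Λ := hseg ⟨rfl, ⟨zero_le, zero_le⟩⟩
  have hxa : ((x, a) : K × ℝ≥0) ∈ Λ := hseg ⟨rfl, ⟨zero_le, le_rfl⟩⟩
  have hΛ1 : ∀ p ∈ Λ, p.2 ≤ 1 := fun p hp => hΛD hp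
  have hxaV : ((x, a) : K × ℝ≥0) ∉ V := by
    show ¬ ((x, a) : K × ℝ≥0).2 < a
    exact lt_irrefl a
  rcases hor with hfS | hgS
  · -- f-trapping
    have hK1 : IsCompact (f '' closure S) :=
      hclcomp.image_of_continuousOn (hcont.mono hclD)
    obtain ⟨κ, hκpos, hκ⟩ := hK1.exists_thickening_subset_open isOpen_interior hfS
    obtain ⟨n, hn, z, h0, hn', hzmem, hj⟩ := hΛtrans _ hx0 _ hxa κ hκpos
    have hall : ∀ k, k ≤ n → z k ∈ interior S := by
      intro k
      induction k with
      | zero =>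
        intro _
        rw [h0]
        exact hOint rfl
      | succ k ih =>
        intro hk
        have hzk : z k ∈ interior S := ih (by omega)
        have hfzk : f (z k) ∈ f '' closure S :=
          mem_image_of_mem f (subset_closure (interior_subset hzk))
        apply hκ
        rw [mem_thickening_iff]
        refine ⟨f (z k), hfzk, ?_⟩
        rw [dist_comm]
        exact hj k (by omega)
    have : z n ∈ V := hSV (interior_subset (hall n le_rfl))
    rw [hn'] at this
    exact hxaV this
  · -- g-trapping
    have hK2 : IsCompact (g '' closure S) :=
      hclcomp.image_of_continuousOn (hgcont.mono hclD)
    obtain ⟨κ, hκpos, hκ⟩ := hK2.exists_thickening_subset_open isOpen_interior hgS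
    obtain ⟨ω, hωpos, hω⟩ := uc_of_contOn hgcont κ hκpos
    obtain ⟨n, hn, z, h0, hn', hzmem, hj⟩ := hΛtrans _ hxa _ hx0 ω hωpos
    have hall : ∀ k, k ≤ n → z (n - k) ∈ interior S := by
      intro k
      induction k with
      | zero =>
        intro _
        rw [Nat.sub_zero, hn']
        exact hOint rfl
      | succ k ih =>
        intro hk
        set j := n - (k + 1) with hjdef
        have hjn : j + 1 = n - k := by omega
        have hnext : z (j + 1) ∈ interior S := by
          rw [hjn]
          exact ih (by omega)
        have hzjΛ : z j ∈ Λ := hzmem j (by omega)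
        have hfzjΛ : f (z j) ∈ Λ := by
          rw [← hΛinv]
          exact mem_image_of_mem f hzjΛ
        have hgf2 : g (f (z j)) = z j := hgf (z j) (hΛ1 _ hzjΛ) (hΛ1 _ hfzjΛ)
        have hd : dist (g (z (j + 1))) (z j) < κ := by
          rw [← hgf2]
          apply hω (z (j+1)) (f (z j)) (hΛ1 _ (hzmem (j+1) (by omega))) (hΛ1 _ hfzjΛ)
          rw [dist_comm]
          exact hj j (by omega)
        apply hκ
        rw [mem_thickening_iff]
        refine ⟨g (z (j + 1)), mem_image_of_mem g (subset_closure (interior_subset hnext)), ?_⟩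
        rw [dist_comm]
        exact hd
    have h00 : z 0 ∈ interior S := by
      have := hall n le_rfl
      rwa [Nat.sub_self] at this
    have : z 0 ∈ V := hSV (interior_subset h00)
    rw [h0] at this
    exact hxaV this

end L
end CM5

open CM5

/-- For a central model `(K̂, f̂)` with chain-transitive base (`f̂` a continuous
skew product over the homeomorphism `f1`, preserving the zero section, with
local inverse `g` near the zero section), the following are equivalent:
(1) there is no chain-recurrent central segment;
(2) there are strips `S` in `K̂ × [0,1]` that are arbitrarily small neighborhoods
of `K̂ × {0}` and satisfy `f̂(Cl S) ⊆ Int S` or `f̂⁻¹(Cl S) ⊆ Int S`. -/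
theorem stmt5 {K : Type*} [MetricSpace K] [CompactSpace K]
    (f g : K × ℝ≥0 → K × ℝ≥0) (f1 : K ≃ₜ K)
    (hcont : ContinuousOn f {p : K × ℝ≥0 | p.2 ≤ 1})
    (hskew : ∀ p : K × ℝ≥0, (f p).1 = f1 p.1)
    (hzero : ∀ x : K, f (x, 0) = (f1 x, 0))
    (hgcont : ContinuousOn g {p : K × ℝ≥0 | p.2 ≤ 1})
    (hgf : ∀ p : K × ℝ≥0, p.2 ≤ 1 → (f p).2 ≤ 1 → g (f p) = p)
    (hfg : ∀ p : K × ℝ≥0, p.2 ≤ 1 → (g p).2 ≤ 1 → f (g p) = p)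
    (hgzero : ∀ x : K, g (x, 0) = (f1.symm x, 0))
    (hbase : ∀ x y : K, ChainRel (⇑f1) x y) :
    (¬ HasCRCS f) ↔
      ∀ V : Set (K × ℝ≥0), IsOpen V → {p : K × ℝ≥0 | p.2 = 0} ⊆ V →
        ∃ S : Set (K × ℝ≥0), IsStrip S ∧ S ⊆ V ∧ S ⊆ {p : K × ℝ≥0 | p.2 ≤ 1} ∧
          {p : K × ℝ≥0 | p.2 = 0} ⊆ interior S ∧
          (f '' closure S ⊆ interior S ∨ g '' closure S ⊆ interior S) := by
  constructor
  · intro hnc V hVo hOV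
    obtain ⟨b, hb0, hb1, hfb, hgb⟩ := b_exists hcont hgcont hzero hgzero
    rcases dichotomy (g := g) hcont hskew hzero hgf hbase hb0 hb1 hfb hnc with hP | hQ
    · obtain ⟨S, h1, h2, h3, h4, h5⟩ :=
        strips_f (g := g) hcont hskew hzero hgf hb0 hb1 hfb hP V hVo hOV
      exact ⟨S, h1, h2, h3, h4, Or.inl h5⟩
    · obtain ⟨S, h1, h2, h3, h4, h5⟩ :=
        strips_g hcont hskew hzero hgcont hgf hfg hgzero hb0 hb1 hfb hgb hQ V hVo hOV
      exact ⟨S, h1, h2, h3, h4, Or.inr h5⟩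
  · intro hstr
    exact no_CRCS_of_strips hcont hgcont hgf hstr
end

section
/- If a central model (K̂, f̂) has a chain-recurrent central segment I, then any open strip S ⊆ K̂ × [0,1) containing K̂ × {0} which is a trapping region for f̂ (i.e. f̂(closure(S)) ⊆ S) or for f̂⁻¹ must contain I; in particular such strips cannot be contained in arbitrarily small neighborhoods of K̂ × {0}. -/
open Set NNReal

/-- If a central model has a chain-recurrent central segment
`I = {x} × [0,a]` (contained in a chain-transitive compact invariant set `Λ`),
then any open strip `S ⊆ K̂ × [0,1)` containing the zero section and trapping for
`f̂` (i.e. `f̂(Cl S) ⊆ S`) or for `f̂⁻¹` must contain `I`. -/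
theorem stmt6 {K : Type*} [MetricSpace K] [CompactSpace K]
    (f g : K × ℝ≥0 → K × ℝ≥0) (f1 : K ≃ₜ K)
    (hcont : ContinuousOn f {p : K × ℝ≥0 | p.2 ≤ 1})
    (hskew : ∀ p : K × ℝ≥0, (f p).1 = f1 p.1)
    (hzero : ∀ x : K, f (x, 0) = (f1 x, 0))
    (hgcont : ContinuousOn g {p : K × ℝ≥0 | p.2 ≤ 1})
    (hgf : ∀ p : K × ℝ≥0, p.2 ≤ 1 → (f p).2 ≤ 1 → g (f p) = p)
    (hfg : ∀ p : K × ℝ≥0, p.2 ≤ 1 → (g p).2 ≤ 1 → f (g p) = p)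
    (hgzero : ∀ x : K, g (x, 0) = (f1.symm x, 0))
    -- the chain-recurrent central segment {x} × [0,a] inside Λ
    (x : K) (a : ℝ≥0) (ha : 0 < a) (Λ : Set (K × ℝ≥0)) (hΛc : IsCompact Λ)
    (hΛsub : Λ ⊆ {p : K × ℝ≥0 | p.2 ≤ 1}) (hΛinv : f '' Λ = Λ)
    (hΛct : CMChainTransOn f Λ) (hseg : ({x} ×ˢ Icc 0 a : Set (K × ℝ≥0)) ⊆ Λ)
    -- the trapping strip
    (S : Set (K × ℝ≥0)) (hSopen : IsOpen S) (hSstrip : IsStrip S)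
    (hSsub : S ⊆ {p : K × ℝ≥0 | p.2 < 1})
    (hSzero : {p : K × ℝ≥0 | p.2 = 0} ⊆ S)
    (htrap : f '' closure S ⊆ S ∨ g '' closure S ⊆ S) :
    ({x} ×ˢ Icc 0 a : Set (K × ℝ≥0)) ⊆ S := by

  have hC : IsCompact {p : K × ℝ≥0 | p.2 ≤ 1} := by
    have he : {p : K × ℝ≥0 | p.2 ≤ 1} = (univ : Set K) ×ˢ Icc 0 1 := by
      ext p; simp [Set.mem_prod]
    rw [he]; exact isCompact_univ.prod isCompact_Icc
  have hclS : closure S ⊆ {p : K × ℝ≥0 | p.2 ≤ 1} := by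
    exact closure_minimal (fun p hp => le_of_lt (show p.2 < 1 from hSsub hp))
      (IsClosed.preimage continuous_snd isClosed_Iic)
  have hSc : IsCompact (closure S) := hC.of_isClosed_subset isClosed_closure hclS
  have hx0 : ((x, 0) : K × ℝ≥0) ∈ Λ := hseg ⟨rfl, le_refl _, (zero_le : (0 : ℝ≥0) ≤ a)⟩
  rintro ⟨y, t⟩ ⟨hy, ht⟩
  rcases hy with rfl
  have hpt : ((y, t) : K × ℝ≥0) ∈ Λ := hseg ⟨rfl, ht⟩
  rcases htrap with htrap | htrap
  · -- forward trapping : pseudo-orbit from (y,0) to (y,t) stays in S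
    have hA : IsCompact (f '' closure S) := hSc.image_of_continuousOn (hcont.mono hclS)
    obtain ⟨δ, hδ, hδsub⟩ := hA.exists_thickening_subset_open hSopen htrap
    obtain ⟨n, hn1, z, hz0, hzn, hzΛ, hzd⟩ := hΛct (y, 0) hx0 (y, t) hpt δ hδ
    have key : ∀ k ≤ n, z k ∈ S := by
      intro k
      induction k with
      | zero => intro _; rw [hz0]; exact hSzero rfl
      | succ k ih =>
        intro hk
        have hkS : z k ∈ S := ih (le_of_lt (Nat.lt_of_succ_le hk))
        have hfz : f (z k) ∈ f '' closure S := ⟨z k, subset_closure hkS, rfl⟩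
        apply hδsub
        rw [Metric.mem_thickening_iff]
        exact ⟨f (z k), hfz, by rw [dist_comm]; exact hzd k (Nat.lt_of_succ_le hk)⟩
    have := key n le_rfl
    rwa [hzn] at this
  · -- backward trapping : pseudo-orbit from (y,t) to (y,0); if (y,t) ∉ S all stay out
    by_contra hout
    have hB : IsCompact (g '' closure S) := hSc.image_of_continuousOn (hgcont.mono hclS)
    obtain ⟨δ, hδ, hδsub⟩ := hB.exists_thickening_subset_open hSopen htrap
    have hUC : UniformContinuousOn g {p : K × ℝ≥0 | p.2 ≤ 1} :=
      hC.uniformContinuousOn_of_continuous hgcont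
    obtain ⟨ε, hε, hεu⟩ := (Metric.uniformContinuousOn_iff).mp hUC δ hδ
    obtain ⟨n, hn1, z, hz0, hzn, hzΛ, hzd⟩ := hΛct (y, t) hpt (y, 0) hx0 ε hε
    have key : ∀ k ≤ n, z k ∉ S := by
      intro k
      induction k with
      | zero => intro _; rw [hz0]; exact hout
      | succ k ih =>
        intro hk hmem
        have hkn : k < n := Nat.lt_of_succ_le hk
        apply ih (le_of_lt hkn)
        have hzk : z k ∈ Λ := hzΛ k (le_of_lt hkn)
        have hfzk : f (z k) ∈ Λ := by rw [← hΛinv]; exact ⟨z k, hzk, rfl⟩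
        have h1 : f (z k) ∈ {p : K × ℝ≥0 | p.2 ≤ 1} := hΛsub hfzk
        have h2 : z (k + 1) ∈ {p : K × ℝ≥0 | p.2 ≤ 1} := hΛsub (hzΛ (k + 1) hk)
        have hd : dist (g (f (z k))) (g (z (k + 1))) < δ :=
          hεu _ h1 _ h2 (hzd k hkn)
        rw [hgf (z k) (hΛsub hzk) h1] at hd
        apply hδsub
        rw [Metric.mem_thickening_iff]
        exact ⟨g (z (k + 1)), ⟨z (k + 1), subset_closure hmem, rfl⟩, hd⟩
    exact key n le_rfl (by rw [hzn]; exact hSzero rfl)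
end

section
/- Let K be a compact invariant set of a homeomorphism f of a compact metric space, and let π : K̂ → K be a two-fold covering with deck transformation σ (a fixed-point-free involution with π ∘ σ = π), and f̂ : K̂ → K̂ a lift of f (π ∘ f̂ = f ∘ π) commuting with σ. Assume K̂ is not the disjoint union of two nonempty f̂-invariant compact sets A and σ(A). If (K, f) is chain-transitive then (K̂, f̂) is chain-transitive. -/
open Set

open Function

/-!
Lifting `δ`-pseudo-orbits of `f` step by step through the double cover gives, for every `ε`,
an `ε`-chain of `f̂` from `a` to `b` or to `σ b`; hence `a ⊣ b` or `a ⊣ σ b` for all `a, b`.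
If some `a ⊣ σ a`, this dichotomy together with `σ`-equivariance of `⊣` gives `a ⊣ c` for every
`c`. Otherwise the closed set `A = {y | a ⊣ y}` is forward invariant, meets every fibre, and
contains no pair `y, σ y`; the last two properties make it backward invariant as well, so `A`
and `σ A` split `K̂` into `f̂`-invariant halves.
-/

section PseudoOrbit

variable {X : Type*} [MetricSpace X]

def IsPseudoOrbit (h : X → X) (ε : ℝ) (z : ℕ → X) (n : ℕ) : Prop :=
  ∀ k < n, dist (h (z k)) (z (k + 1)) < ε

def EpsChain (h : X → X) (ε : ℝ) (x y : X) : Prop :=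
  ∃ n, 1 ≤ n ∧ ∃ z : ℕ → X, z 0 = x ∧ z n = y ∧ IsPseudoOrbit h ε z n

variable {h : X → X} {ε ε' : ℝ} {z w : ℕ → X} {n m : ℕ} {a b c y : X}

theorem chainRel_iff : ChainRel h a b ↔ ∀ ε > 0, EpsChain h ε a b := Iff.rfl

theorem IsPseudoOrbit.mono (hz : IsPseudoOrbit h ε z n) (hε : ε ≤ ε') :
    IsPseudoOrbit h ε' z n :=
  fun k hk => (hz k hk).trans_le hε

theorem IsPseudoOrbit.of_succ (hz : IsPseudoOrbit h ε z (n + 1)) : IsPseudoOrbit h ε z n :=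
  fun k hk => hz k (Nat.lt_succ_of_lt hk)

theorem IsPseudoOrbit.append (hz : IsPseudoOrbit h ε z n) (hw : IsPseudoOrbit h ε w m)
    (hzw : z n = w 0) :
    IsPseudoOrbit h ε (fun k => if k < n then z k else w (k - n)) (n + m) := by
  intro k hk
  rcases lt_or_ge k n with hkn | hkn
  · by_cases hk1 : k + 1 < n
    · simpa only [if_pos hkn, if_pos hk1] using hz k hkn
    · obtain rfl : k + 1 = n := by omega
      simpa only [if_pos hkn, if_neg hk1, Nat.sub_self, ← hzw] using hz k hkn
  · have hk1 : k + 1 - n = k - n + 1 := by omega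
    simpa only [if_neg hkn.not_gt, if_neg (by omega : ¬k + 1 < n), hk1] using hw (k - n) (by omega)

theorem IsPseudoOrbit.update_last (hz : IsPseudoOrbit h ε z n) (hy : dist (z n) y < ε') :
    IsPseudoOrbit h (ε + ε') (update z n y) n := by
  intro k hk
  rw [update_of_ne hk.ne]
  rcases eq_or_ne (k + 1) n with rfl | hk1
  · rw [update_self]
    exact (dist_triangle _ _ _).trans_lt (add_lt_add (hz k hk) hy)
  · rw [update_of_ne hk1]
    exact (hz k hk).trans_le (le_add_of_nonneg_right (dist_nonneg.trans hy.le))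

theorem EpsChain.mono (hab : EpsChain h ε a b) (hε : ε ≤ ε') : EpsChain h ε' a b :=
  let ⟨n, hn, z, hz0, hzn, hz⟩ := hab
  ⟨n, hn, z, hz0, hzn, hz.mono hε⟩

theorem EpsChain.trans (hab : EpsChain h ε a b) (hbc : EpsChain h ε b c) : EpsChain h ε a c := by
  obtain ⟨n, hn, z, rfl, hzn, hz⟩ := hab
  obtain ⟨m, hm, w, rfl, rfl, hw⟩ := hbc
  refine ⟨n + m, by omega, _, ?_, ?_, hz.append hw hzn⟩
  · simp only [if_pos (by omega : 0 < n)]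
  · simp only [if_neg (by omega : ¬n + m < n), Nat.add_sub_cancel_left]

theorem EpsChain.of_dist_lt (hay : EpsChain h ε a y) (hyb : dist y b < ε') :
    EpsChain h (ε + ε') a b := by
  obtain ⟨n, hn, z, hz0, rfl, hz⟩ := hay
  exact ⟨n, hn, update z n b, by rwa [update_of_ne (by omega)], update_self .., hz.update_last hyb⟩

theorem ChainRel.trans (hab : ChainRel h a b) (hbc : ChainRel h b c) : ChainRel h a c :=
  fun ε hε => EpsChain.trans (hab ε hε) (hbc ε hε)

theorem chainRel_apply (h : X → X) (a : X) : ChainRel h a (h a) :=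
  fun ε hε => ⟨1, le_rfl, fun k => h^[k] a, rfl, rfl, fun k hk => by
    obtain rfl : k = 0 := by omega
    simpa using hε⟩

theorem isClosed_setOf_chainRel (h : X → X) (a : X) : IsClosed {y | ChainRel h a y} := by
  refine isClosed_of_closure_subset fun b hb ε hε => ?_
  obtain ⟨y, hy, hby⟩ := Metric.mem_closure_iff.1 hb (ε / 2) (half_pos hε)
  have hab := EpsChain.of_dist_lt (hy (ε / 2) (half_pos hε)) (dist_comm b y ▸ hby)
  rwa [add_halves] at hab

theorem ChainRel.map {g : X → X} (hg : UniformContinuous g) (hgh : ∀ x, h (g x) = g (h x))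
    (hab : ChainRel h a b) : ChainRel h (g a) (g b) := by
  intro ε hε
  obtain ⟨δ, hδ, hgδ⟩ := Metric.uniformContinuous_iff.1 hg ε hε
  obtain ⟨n, hn, z, rfl, rfl, hz⟩ := hab δ hδ
  exact ⟨n, hn, g ∘ z, rfl, rfl, fun k hk => (hgh (z k)).symm ▸ hgδ (hz k hk)⟩

theorem chainRel_or_chainRel_of_forall_epsChain {b' : X}
    (H : ∀ ε > 0, EpsChain h ε a b ∨ EpsChain h ε a b') : ChainRel h a b ∨ ChainRel h a b' := by
  by_contra! hne
  obtain ⟨ε₁, hε₁, h₁⟩ : ∃ ε > 0, ¬EpsChain h ε a b := by simpa [chainRel_iff] using hne.1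
  obtain ⟨ε₂, hε₂, h₂⟩ : ∃ ε > 0, ¬EpsChain h ε a b' := by simpa [chainRel_iff] using hne.2
  rcases H (min ε₁ ε₂) (lt_min hε₁ hε₂) with hb | hb'
  · exact h₁ (hb.mono (min_le_left _ _))
  · exact h₂ (hb'.mono (min_le_right _ _))

theorem IsPseudoOrbit.exists_lift {Y : Type*} [MetricSpace Y] {π : Y → X} {g : Y → Y}
    {δ : ℝ} (hstep : ∀ u x, dist (h (π u)) x < δ → ∃ v, π v = x ∧ dist (g u) v < ε)
    (hw : IsPseudoOrbit h δ w n) {a : Y} (ha : π a = w 0) :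
    ∃ z : ℕ → Y, z 0 = a ∧ (∀ k ≤ n, π (z k) = w k) ∧ IsPseudoOrbit g ε z n := by
  induction n with
  | zero => exact ⟨fun _ => a, rfl, fun k hk => by rwa [Nat.le_zero.1 hk], fun k hk => by omega⟩
  | succ n ih =>
    obtain ⟨z, hz0, hzw, hz⟩ := ih hw.of_succ
    obtain ⟨v, hv, hzv⟩ := hstep (z n) (w (n + 1)) ((hzw n le_rfl).symm ▸ hw n n.lt_succ_self)
    have hz' : ∀ k ≤ n, update z (n + 1) v k = z k := fun k hk => update_of_ne (by omega) _ _
    refine ⟨update z (n + 1) v, (hz' 0 n.zero_le).trans hz0, fun k hk => ?_, fun k hk => ?_⟩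
    · rcases (Nat.le_succ_iff.1 hk) with hk | rfl
      · rw [hz' k hk, hzw k hk]
      · rwa [update_self]
    · rw [hz' k (by omega)]
      rcases (Nat.lt_succ_iff_lt_or_eq.1 hk) with hk | rfl
      · rw [hz' (k + 1) hk]
        exact hz k hk
      · rwa [update_self]

theorem EpsChain.exists_lift {Y : Type*} [MetricSpace Y] {π : Y → X} {g : Y → Y} {δ : ℝ}
    (hstep : ∀ u x, dist (h (π u)) x < δ → ∃ v, π v = x ∧ dist (g u) v < ε) {a : Y}
    (hab : EpsChain h δ (π a) b) : ∃ y, π y = b ∧ EpsChain g ε a y := by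
  obtain ⟨n, hn, w, hw0, rfl, hw⟩ := hab
  obtain ⟨z, hz0, hzw, hz⟩ := hw.exists_lift hstep hw0.symm
  exact ⟨z n, hzw n le_rfl, n, hn, z, hz0, rfl, hz⟩

end PseudoOrbit

theorem exists_pos_forall_lt_imp_lt {Y : Type*} [TopologicalSpace Y] [CompactSpace Y]
    {F G : Y → ℝ} (hF : Continuous F) (hG : Continuous G) {ε : ℝ}
    (hpos : ∀ p, ε ≤ G p → 0 < F p) : ∃ δ > 0, ∀ p, F p < δ → G p < ε := by
  obtain ⟨δ, hδ, hδF⟩ :=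
    (isClosed_le continuous_const hG).isCompact.exists_forall_le' hF.continuousOn hpos
  exact ⟨δ, hδ, fun p hp => not_le.1 fun hGp => (hδF p hGp).not_gt hp⟩

section DoubleCover

variable {K Khat : Type*} [MetricSpace K] [MetricSpace Khat] [CompactSpace Khat]
  {π : Khat → K} {σ : Khat → Khat}

theorem exists_pos_dist_lt_or_dist_lt_of_dist_proj_lt (hπ : Continuous π) (hσ : Continuous σ)
    (hσinv : Involutive σ) (hfib : ∀ a b, π a = π b → b = a ∨ b = σ a) {ε : ℝ} (hε : 0 < ε) :
    ∃ δ > 0, ∀ a c, dist (π a) (π c) < δ → dist a c < ε ∨ dist a (σ c) < ε := by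
  obtain ⟨δ, hδ, hδε⟩ := exists_pos_forall_lt_imp_lt (G := fun p : Khat × Khat =>
      min (dist p.1 p.2) (dist p.1 (σ p.2)))
    ((hπ.comp continuous_fst).dist (hπ.comp continuous_snd))
    ((continuous_fst.dist continuous_snd).min (continuous_fst.dist (hσ.comp continuous_snd)))
    (ε := ε) fun ⟨a, c⟩ hac => by
      refine dist_pos.2 fun hπac => hac.not_gt ?_
      rcases hfib a c hπac with rfl | rfl
      · simpa using hε
      · simpa [hσinv a] using hε
  exact ⟨δ, hδ, fun a c hac => min_lt_iff.1 (hδε (a, c) hac)⟩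

theorem chainRel_or_chainRel_of_chainRel_proj {f : K → K} {fhat : Khat → Khat}
    (hπ : Continuous π) (hπsurj : Surjective π) (hσ : Continuous σ) (hσinv : Involutive σ)
    (hπσ : ∀ a, π (σ a) = π a) (hfib : ∀ a b, π a = π b → b = a ∨ b = σ a)
    (hlift : ∀ a, π (fhat a) = f (π a)) {a b : Khat} (hab : ChainRel f (π a) (π b)) :
    ChainRel fhat a b ∨ ChainRel fhat a (σ b) := by
  refine chainRel_or_chainRel_of_forall_epsChain fun ε hε => ?_
  obtain ⟨δ, hδ, hδε⟩ := exists_pos_dist_lt_or_dist_lt_of_dist_proj_lt hπ hσ hσinv hfib hε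
  have hstep : ∀ u x, dist (f (π u)) x < δ → ∃ v, π v = x ∧ dist (fhat u) v < ε := by
    intro u x hux
    obtain ⟨c, rfl⟩ := hπsurj x
    rcases hδε (fhat u) c (hlift u ▸ hux) with hc | hc
    exacts [⟨c, rfl, hc⟩, ⟨σ c, hπσ c, hc⟩]
  obtain ⟨y, hy, hay⟩ := EpsChain.exists_lift hstep (hab δ hδ)
  rcases hfib b y hy.symm with rfl | rfl
  exacts [Or.inl hay, Or.inr hay]

end DoubleCover

section Dichotomy

variable {X : Type*} [MetricSpace X] {h σ : X → X}

theorem ChainRel.of_sigma_self (hσ : Involutive σ)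
    (hequiv : ∀ a b, ChainRel h a b → ChainRel h (σ a) (σ b))
    (hdich : ∀ a b, ChainRel h a b ∨ ChainRel h a (σ b)) {a : X} (haσa : ChainRel h a (σ a))
    (c : X) : ChainRel h a c := by
  rcases hdich a c with hac | haσc
  · exact hac
  · exact haσa.trans (hσ c ▸ hequiv a (σ c) haσc)

theorem chainRel_self_of_dichotomy (hσ : Involutive σ)
    (hequiv : ∀ a b, ChainRel h a b → ChainRel h (σ a) (σ b))
    (hdich : ∀ a b, ChainRel h a b ∨ ChainRel h a (σ b)) (a : X) : ChainRel h a a :=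
  (hdich a a).elim id fun haσa => haσa.of_sigma_self hσ hequiv hdich a

theorem chainRel_sigma_self_of_chainRel_sigma
    (hequiv : ∀ a b, ChainRel h a b → ChainRel h (σ a) (σ b))
    (hdich : ∀ a b, ChainRel h a b ∨ ChainRel h a (σ b)) {a y : X} (hay : ChainRel h a y)
    (haσy : ChainRel h a (σ y)) : ChainRel h a (σ a) :=
  (hdich y a).elim (fun hya => haσy.trans (hequiv y a hya)) hay.trans

end Dichotomy

theorem stmt7_general {K Khat : Type*} [MetricSpace K] [CompactSpace K]
    [MetricSpace Khat] [CompactSpace Khat]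
    (f : K ≃ₜ K) (fhat : Khat ≃ₜ Khat) (σ : Khat ≃ₜ Khat) (π : Khat → K)
    (hπcont : Continuous π) (hπsurj : Function.Surjective π)
    (hπσ : ∀ a, π (σ a) = π a) (hσinv : ∀ a, σ (σ a) = a)
    (hfib : ∀ a b, π a = π b → b = a ∨ b = σ a)
    (hlift : ∀ a, π (fhat a) = f (π a))
    (hcomm : ∀ a, fhat (σ a) = σ (fhat a))
    (hnosplit : ¬ ∃ A : Set Khat, A.Nonempty ∧ IsClosed A ∧ ⇑fhat '' A = A ∧
        (⇑σ '' A) ∩ A = ∅ ∧ A ∪ ⇑σ '' A = univ)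
    (hct : ∀ x y : K, ChainRel (⇑f) x y) :
    ∀ a b : Khat, ChainRel (⇑fhat) a b := by
  have hequiv : ∀ a b, ChainRel fhat a b → ChainRel fhat (σ a) (σ b) := fun _ _ =>
    ChainRel.map (CompactSpace.uniformContinuous_of_continuous σ.continuous) hcomm
  have hdich : ∀ a b, ChainRel fhat a b ∨ ChainRel fhat a (σ b) := fun _ _ =>
    chainRel_or_chainRel_of_chainRel_proj hπcont hπsurj σ.continuous hσinv hπσ hfib hlift
      (hct _ _)
  intro a b
  by_contra hab
  have hdisj : ∀ y, ChainRel fhat a y → ¬ChainRel fhat a (σ y) := fun y hay haσy =>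
    hab ((chainRel_sigma_self_of_chainRel_sigma hequiv hdich hay haσy).of_sigma_self
      hσinv hequiv hdich b)
  refine hnosplit ⟨{y | ChainRel fhat a y}, ⟨a, chainRel_self_of_dichotomy hσinv hequiv hdich a⟩,
    isClosed_setOf_chainRel _ a, ?_, ?_, ?_⟩
  · refine (image_subset_iff.2 fun x hx => hx.trans (chainRel_apply _ x)).antisymm
      fun y hy => ⟨fhat.symm y, (hdich a _).resolve_right fun haσ => hdisj y hy ?_,
        fhat.apply_symm_apply y⟩
    simpa only [hcomm, Homeomorph.apply_symm_apply] using haσ.trans (chainRel_apply _ _)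
  · exact eq_empty_iff_forall_notMem.2 fun _ ⟨⟨y, hay, hσy⟩, haσy⟩ => hdisj y hay (hσy ▸ haσy)
  · exact eq_univ_iff_forall.2 fun y => (hdich a y).imp id fun haσy => ⟨σ y, haσy, hσinv y⟩

/-- Let `π : K̂ → K` be a two-fold covering of compact invariant dynamics, with
deck involution `σ` (fixed-point free, exchanging the two preimages of each
point), and `f̂` a lift of `f` commuting with `σ`. If `K̂ is not the disjoint
union of two nonempty invariant compact sets `A` and `σ(A)`, and `(K, f)` is
chain-transitive, then `(K̂, f̂)` is chain-transitive. -/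
theorem stmt7 {K Khat : Type*} [MetricSpace K] [CompactSpace K]
    [MetricSpace Khat] [CompactSpace Khat]
    (f : K ≃ₜ K) (fhat : Khat ≃ₜ Khat) (σ : Khat ≃ₜ Khat) (π : Khat → K)
    (hπcont : Continuous π) (hπsurj : Function.Surjective π)
    (hπσ : ∀ a, π (σ a) = π a) (hσinv : ∀ a, σ (σ a) = a)
    (hσfree : ∀ a, σ a ≠ a)
    (hfib : ∀ a b, π a = π b → b = a ∨ b = σ a)
    (hlift : ∀ a, π (fhat a) = f (π a))
    (hcomm : ∀ a, fhat (σ a) = σ (fhat a))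
    (hnosplit : ¬ ∃ A : Set Khat, A.Nonempty ∧ IsClosed A ∧ ⇑fhat '' A = A ∧
        (⇑σ '' A) ∩ A = ∅ ∧ A ∪ ⇑σ '' A = univ)
    (hct : ∀ x y : K, ChainRel (⇑f) x y) :
    ∀ a b : Khat, ChainRel (⇑fhat) a b :=
  stmt7_general f fhat σ π hπcont hπsurj hπσ hσinv hfib hlift hcomm hnosplit hct
end

section
/- In the setting of the previous double-cover lemma: if (K, f) is minimal (every orbit is dense in K) and K̂ is not the disjoint union of two nonempty f̂-invariant compact sets A and σ(A), then (K̂, f̂) is minimal. -/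
open Set Function

/-!
A nonempty closed `f̂`-invariant set `A` projects onto a closed invariant set, so `π(A) = K` by
minimality of `f`, and since fibres are `{a, σ a}` this means `A ∪ σ(A) = K̂`. The same applies to
`A ∩ σ(A)`: if it is nonempty it covers `K̂` together with its `σ`-image, which is itself, so
`A = K̂`; if it is empty, `A` and `σ(A)` split `K̂`, which is excluded.
-/

section

variable {X Y : Type*} [TopologicalSpace X] [CompactSpace X] [TopologicalSpace Y] [T2Space Y]

theorem image_eq_univ_of_semiconj {g : X → X} {f : Y → Y} {π : X → Y} (hπ : Continuous π)
    (hsemi : Semiconj π g f)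
    (hmin : ∀ A : Set Y, IsClosed A → A.Nonempty → f '' A = A → A = univ)
    {B : Set X} (hB : IsClosed B) (hne : B.Nonempty) (hinv : g '' B = B) : π '' B = univ :=
  hmin _ (hB.isCompact.image hπ).isClosed (hne.image π) (by rw [← hsemi.set_image B, hinv])

end

theorem union_image_eq_univ_of_image_eq_univ {X Y : Type*} {π : X → Y} {σ : X → X}
    (hfib : ∀ a b, π a = π b → b = a ∨ b = σ a) {B : Set X} (hB : π '' B = univ) :
    B ∪ σ '' B = univ := by
  refine eq_univ_of_forall fun x => ?_
  obtain ⟨b, hb, hbx⟩ : π x ∈ π '' B := hB ▸ mem_univ _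
  rcases hfib b x hbx with rfl | rfl
  exacts [Or.inl hb, Or.inr (mem_image_of_mem σ hb)]

theorem stmt8_general {K Khat : Type*} [MetricSpace K] [CompactSpace K]
    [MetricSpace Khat] [CompactSpace Khat]
    (f : K ≃ₜ K) (fhat : Khat ≃ₜ Khat) (σ : Khat ≃ₜ Khat) (π : Khat → K)
    (hπcont : Continuous π)
    (hσinv : ∀ a, σ (σ a) = a)
    (hfib : ∀ a b, π a = π b → b = a ∨ b = σ a)
    (hlift : ∀ a, π (fhat a) = f (π a))
    (hcomm : ∀ a, fhat (σ a) = σ (fhat a))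
    (hnosplit : ¬ ∃ A : Set Khat, A.Nonempty ∧ IsClosed A ∧ ⇑fhat '' A = A ∧
        (⇑σ '' A) ∩ A = ∅ ∧ A ∪ ⇑σ '' A = univ)
    (hmin : ∀ A : Set K, IsClosed A → A.Nonempty → ⇑f '' A = A → A = univ) :
    ∀ A : Set Khat, IsClosed A → A.Nonempty → ⇑fhat '' A = A → A = univ := by
  have covers : ∀ B : Set Khat, IsClosed B → B.Nonempty → ⇑fhat '' B = B → B ∪ σ '' B = univ :=
    fun B hB hne hinv => union_image_eq_univ_of_image_eq_univ hfib
      (image_eq_univ_of_semiconj hπcont hlift hmin hB hne hinv)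
  intro A hA hne hinv
  have hσA : ⇑fhat '' (σ '' A) = σ '' A := by
    rw [(Commute.set_image hcomm) A, hinv]
  by_cases hmeet : (A ∩ σ '' A).Nonempty
  · have hcov := covers _ (hA.inter (σ.isClosed_image.2 hA)) hmeet
      (by rw [image_inter fhat.injective, hinv, hσA])
    have hσ_self : σ '' (A ∩ σ '' A) ⊆ A := by
      rintro _ ⟨_, ⟨-, a, ha, rfl⟩, rfl⟩
      rwa [hσinv]
    refine eq_univ_of_univ_subset ?_
    calc univ = (A ∩ σ '' A) ∪ σ '' (A ∩ σ '' A) := hcov.symm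
      _ ⊆ A := union_subset inter_subset_left hσ_self
  · exact (hnosplit ⟨A, hne, hA, hinv, by rwa [inter_comm, ← not_nonempty_iff_eq_empty],
      covers A hA hne hinv⟩).elim

/-- Double cover setting: `π : K̂ → K` a two-fold covering with deck involution
`σ`, `f̂` a lift of `f` commuting with `σ`. If `(K, f)` is minimal (every
nonempty closed invariant set is everything) and `K̂` is not the disjoint union
of two nonempty invariant compact sets `A` and `σ(A)`, then `(K̂, f̂)` is
minimal. -/
theorem stmt8 {K Khat : Type*} [MetricSpace K] [CompactSpace K]
    [MetricSpace Khat] [CompactSpace Khat]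
    (f : K ≃ₜ K) (fhat : Khat ≃ₜ Khat) (σ : Khat ≃ₜ Khat) (π : Khat → K)
    (hπcont : Continuous π) (hπsurj : Function.Surjective π)
    (hπσ : ∀ a, π (σ a) = π a) (hσinv : ∀ a, σ (σ a) = a)
    (hσfree : ∀ a, σ a ≠ a)
    (hfib : ∀ a b, π a = π b → b = a ∨ b = σ a)
    (hlift : ∀ a, π (fhat a) = f (π a))
    (hcomm : ∀ a, fhat (σ a) = σ (fhat a))
    (hnosplit : ¬ ∃ A : Set Khat, A.Nonempty ∧ IsClosed A ∧ ⇑fhat '' A = A ∧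
        (⇑σ '' A) ∩ A = ∅ ∧ A ∪ ⇑σ '' A = univ)
    (hmin : ∀ A : Set K, IsClosed A → A.Nonempty → ⇑f '' A = A → A = univ) :
    ∀ A : Set Khat, IsClosed A → A.Nonempty → ⇑fhat '' A = A → A = univ :=
  stmt8_general f fhat σ π hπcont hσinv hfib hlift hcomm hnosplit hmin
end
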